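/- arXiv:0812.0496 — 12 statements merged into one kernel-verified Lean document; each statement's English description precedes it below -/
import Mathlib

section
/- Let m ≥ 2, let p ∈ ℝ^m with p ≠ 0, and let S be a real symmetric m×m matrix. Then the upper Isaacs value Λ⁺(p,S) := sup over (b,d) ∈ H of the infimum over (a,c) ∈ H of φ(a,b,c,d;p,S) equals −2 |p|^{−2} pᵀSp. (This is the Bellman–Isaacs identity underlying the equation −2Δ_∞u = h.) -/
open scoped RealInnerProductSpace

noncomputable section

/-- The matrix `S` applied to a vector of Euclidean space. -/
def mv {m : ℕ} (S : Matrix (Fin m) (Fin m) ℝ) (v : EuclideanSpace ℝ (Fin m)) :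
    EuclideanSpace ℝ (Fin m) := Matrix.toEuclideanLin S v

/-- φ(a,b,c,d;p,S) = −(1/2)(a−b)ᵀS(a−b) − (c+d)((a+b)·p). -/
def phi {m : ℕ} (a b : EuclideanSpace ℝ (Fin m)) (c d : ℝ)
    (p : EuclideanSpace ℝ (Fin m)) (S : Matrix (Fin m) (Fin m) ℝ) : ℝ :=
  -(1 / 2) * ⟪a - b, mv S (a - b)⟫ - (c + d) * ⟪a + b, p⟫

/-- H = S^{m−1} × [0,∞). -/
def Hset (m : ℕ) : Set (EuclideanSpace ℝ (Fin m) × ℝ) :=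
  {y | ‖y.1‖ = 1 ∧ 0 ≤ y.2}

set_option maxHeartbeats 1000000

lemma lower_key {m : ℕ} (S : Matrix (Fin m) (Fin m) ℝ) (p : EuclideanSpace ℝ (Fin m))
    (hp : p ≠ 0) {a : EuclideanSpace ℝ (Fin m)} (ha : ‖a‖ = 1) {c d ε : ℝ}
    (hc : 0 ≤ c) (hε : 0 < ε)
    (hd : max 1 (2 * ‖LinearMap.toContinuousLinearMap (Matrix.toEuclideanLin S)‖ ^ 2 / (ε * ‖p‖)) ≤ d) :
    -2 * (‖p‖ ^ 2)⁻¹ * ⟪p, mv S p⟫ - ε ≤ phi a (-(‖p‖⁻¹ • p)) c d p S := by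
  set T := LinearMap.toContinuousLinearMap (Matrix.toEuclideanLin S) with hT
  set C := ‖T‖ with hCdef
  have hmv : ∀ v, mv S v = T v := fun v => by
    simp [mv, hT, LinearMap.coe_toContinuousLinearMap']
  have hnp : (0:ℝ) < ‖p‖ := norm_pos_iff.mpr hp
  set q : EuclideanSpace ℝ (Fin m) := ‖p‖⁻¹ • p with hqdef
  have hq : ‖q‖ = 1 := by
    rw [hqdef, norm_smul, Real.norm_eq_abs, abs_inv, abs_of_pos hnp, inv_mul_cancel₀ hnp.ne']
  have hqp : ⟪q, p⟫ = ‖p‖ := by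
    rw [hqdef, real_inner_smul_left, real_inner_self_eq_norm_sq]
    field_simp
  set s := ‖a - q‖ with hsdef
  have hs : 0 ≤ s := norm_nonneg _
  have haq : ⟪a, q⟫ = ‖p‖⁻¹ * ⟪a, p⟫ := by rw [hqdef, real_inner_smul_right]
  have hs2 : s ^ 2 = 2 - 2 * (‖p‖⁻¹ * ⟪a, p⟫) := by
    rw [hsdef, norm_sub_sq_real, ha, hq, haq]; ring
  have h1 : ⟪a - q, p⟫ = -(‖p‖ / 2) * s ^ 2 := by
    rw [inner_sub_left, hqp, hs2]
    field_simp; ring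
  have hC : 0 ≤ C := norm_nonneg _
  set X := ⟪a + q, T (a + q)⟫ with hXdef
  set V := ⟪q + q, T (q + q)⟫ with hVdef
  have hsplit : a + q = (a - q) + (q + q) := by abel
  have e1 : X = ⟪a-q, T (a-q)⟫ + ⟪a-q, T (q+q)⟫ + ⟪q+q, T (a-q)⟫ + V := by
    rw [hXdef, hsplit, map_add, inner_add_left, inner_add_right, inner_add_right, hVdef]
    ring
  have e2 : ⟪a-q, T (a+q)⟫ = ⟪a-q, T (a-q)⟫ + ⟪a-q, T (q+q)⟫ := by
    rw [hsplit, map_add, inner_add_right]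
  have hid : X - V = ⟪a - q, T (a + q)⟫ + ⟪q + q, T (a - q)⟫ := by
    rw [e2]; linarith [e1]
  have hupb : ‖a + q‖ ≤ 2 := by
    calc ‖a + q‖ ≤ ‖a‖ + ‖q‖ := norm_add_le _ _
    _ = 2 := by rw [ha, hq]; norm_num
  have hqq : ‖q + q‖ ≤ 2 := by
    calc ‖q + q‖ ≤ ‖q‖ + ‖q‖ := norm_add_le _ _
    _ = 2 := by rw [hq]; norm_num
  have b1 : |⟪a-q, T (a+q)⟫| ≤ s * (C * 2) := by
    refine (abs_real_inner_le_norm _ _).trans ?_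
    refine mul_le_mul (le_of_eq hsdef.symm) ?_ (norm_nonneg _) hs
    calc ‖T (a+q)‖ ≤ C * ‖a + q‖ := T.le_opNorm _
    _ ≤ C * 2 := by nlinarith
  have b2 : |⟪q+q, T (a-q)⟫| ≤ 2 * (C * s) := by
    refine (abs_real_inner_le_norm _ _).trans ?_
    refine mul_le_mul hqq ?_ (norm_nonneg _) (by norm_num)
    calc ‖T (a-q)‖ ≤ C * ‖a - q‖ := T.le_opNorm _
    _ = C * s := by rw [hsdef]
  have habs : |X - V| ≤ 4 * C * s := by
    rw [hid]
    calc |⟪a - q, T (a + q)⟫ + ⟪q + q, T (a - q)⟫|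
        ≤ |⟪a - q, T (a + q)⟫| + |⟪q + q, T (a - q)⟫| := abs_add_le _ _
      _ ≤ s * (C * 2) + 2 * (C * s) := add_le_add b1 b2
      _ = 4 * C * s := by ring
  have habs2 : X - V ≤ 4 * C * s := (abs_le.mp habs).2
  have hRV : -2 * (‖p‖ ^ 2)⁻¹ * ⟪p, mv S p⟫ = -(1/2) * V := by
    rw [hVdef, hqdef, hmv p]
    simp only [map_add, map_smul, inner_add_left, inner_add_right, real_inner_smul_left,
      real_inner_smul_right]
    field_simp
    ring
  have hphi : phi a (-q) c d p S = -(1/2) * X - (c+d) * (-(‖p‖/2) * s^2) := by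
    rw [phi, sub_neg_eq_add, ← sub_eq_add_neg, h1, hmv, hXdef]
  clear_value T C q s X V
  have hdpos : (0:ℝ) < d := lt_of_lt_of_le one_pos (le_trans (le_max_left _ _) hd)
  have hd2 : 2 * C ^ 2 ≤ d * (ε * ‖p‖) := by
    have h := le_trans (le_max_right _ _) hd
    rw [div_le_iff₀ (by positivity)] at h
    linarith
  have key : 2 * C * s ≤ d * (‖p‖/2) * s^2 + ε := by
    have hD : (0:ℝ) < d * ‖p‖ := mul_pos hdpos hnp
    have hε2 : 2 * C^2 / (d * ‖p‖) ≤ ε := by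
      rw [div_le_iff₀ hD]; nlinarith [hd2]
    have h5 : 0 ≤ d * (‖p‖/2) * s^2 + 2 * C^2 / (d * ‖p‖) - 2 * C * s := by
      have h0 := div_nonneg (sq_nonneg (d * ‖p‖ * s - 2 * C)) (by linarith : (0:ℝ) ≤ 2 * (d * ‖p‖))
      rw [show (d * ‖p‖ * s - 2 * C)^2 / (2 * (d * ‖p‖))
          = d * (‖p‖/2) * s^2 + 2 * C^2 / (d * ‖p‖) - 2 * C * s from by field_simp; ring] at h0
      exact h0
    linarith
  have hcs : 0 ≤ c * ((‖p‖/2) * s^2) := by positivity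
  rw [hphi, hRV]
  nlinarith [habs2, key, hcs]

lemma phi_center {m : ℕ} (S : Matrix (Fin m) (Fin m) ℝ) (p : EuclideanSpace ℝ (Fin m))
    (hp : p ≠ 0) (c d : ℝ) :
    phi (‖p‖⁻¹ • p) (-(‖p‖⁻¹ • p)) c d p S = -2 * (‖p‖ ^ 2)⁻¹ * ⟪p, mv S p⟫ := by
  have hn : ‖p‖ ≠ 0 := norm_ne_zero_iff.mpr hp
  simp only [phi, mv, sub_neg_eq_add, add_neg_cancel, inner_zero_left, mul_zero, sub_zero,
    map_add, map_smul, inner_add_left, inner_add_right, real_inner_smul_left,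
    real_inner_smul_right]
  field_simp
  ring

/-- The Bellman–Isaacs identity: the upper Isaacs value
`Λ⁺(p,S) = sup_{(b,d)∈H} inf_{(a,c)∈H} φ(a,b,c,d;p,S)` equals `−2 |p|⁻² pᵀSp`. -/
theorem stmt0 {m : ℕ} (hm : 2 ≤ m) (p : EuclideanSpace ℝ (Fin m)) (hp : p ≠ 0)
    (S : Matrix (Fin m) (Fin m) ℝ) (hS : S.IsSymm) :
    (⨆ z ∈ Hset m, ⨅ y ∈ Hset m, ((phi y.1 z.1 y.2 z.2 p S : ℝ) : EReal))
      = ((-2 * (‖p‖ ^ 2)⁻¹ * ⟪p, mv S p⟫ : ℝ) : EReal) := by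
  have hnp : (0:ℝ) < ‖p‖ := norm_pos_iff.mpr hp
  set q : EuclideanSpace ℝ (Fin m) := ‖p‖⁻¹ • p with hqdef
  have hq : ‖q‖ = 1 := by
    rw [hqdef, norm_smul, Real.norm_eq_abs, abs_inv, abs_of_pos hnp, inv_mul_cancel₀ hnp.ne']
  have hqp : ⟪q, p⟫ = ‖p‖ := by
    rw [hqdef, real_inner_smul_left, real_inner_self_eq_norm_sq]
    field_simp
  set R : ℝ := -2 * (‖p‖ ^ 2)⁻¹ * ⟪p, mv S p⟫ with hRdef
  refine le_antisymm (iSup₂_le fun z hz => ?_) ?_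
  · -- upper bound
    obtain ⟨hb, hd⟩ := hz
    set b := z.1
    set d := z.2
    have hbp : -‖p‖ ≤ ⟪b, p⟫ := by
      have h := abs_real_inner_le_norm b p
      rw [hb, one_mul] at h
      linarith [(abs_le.mp h).1]
    have hqb : ⟪q + b, p⟫ = ‖p‖ + ⟪b, p⟫ := by rw [inner_add_left, hqp]
    rcases lt_or_eq_of_le (by linarith : (0:ℝ) ≤ ⟪q + b, p⟫) with ht | ht
    · -- t > 0 : inf is -∞ ≤ R via large c
      set t := ⟪q + b, p⟫
      set K : ℝ := -(1/2) * ⟪q - b, mv S (q - b)⟫ with hKdef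
      set c : ℝ := max 0 ((K - R) / t) with hcdef
      refine iInf₂_le_of_le (q, c) ⟨hq, le_max_left _ _⟩ ?_
      rw [EReal.coe_le_coe_iff]
      have h1 : K - R ≤ c * t := by
        have h2 : (K - R) / t ≤ c := le_max_right _ _
        rw [div_le_iff₀ ht] at h2
        linarith
      have h3 : 0 ≤ d * t := mul_nonneg hd ht.le
      show -(1/2) * ⟪q - b, mv S (q - b)⟫ - (c + d) * ⟪q + b, p⟫ ≤ R
      rw [← hKdef]
      have : (c + d) * t = c * t + d * t := by ring
      linarith [this]
    · -- t = 0 : b = -q, value is exactly R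
      have hbp' : ⟪b, p⟫ = -‖p‖ := by linarith [hqb, ht]
      have hbq : ⟪b, q⟫ = -1 := by
        rw [hqdef, real_inner_smul_right, hbp']
        field_simp
      have hbeq : b = -q := by
        have h0 : ‖b + q‖ ^ 2 = 0 := by
          rw [norm_add_sq_real, hb, hq, hbq]; ring
        have h1 : b + q = 0 := by
          have hn0 : ‖b + q‖ = 0 := by nlinarith [norm_nonneg (b + q)]
          exact norm_eq_zero.mp hn0
        exact eq_neg_of_add_eq_zero_left h1
      refine iInf₂_le_of_le (q, 0) ⟨hq, le_refl 0⟩ ?_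
      rw [EReal.coe_le_coe_iff]
      have : phi q b 0 d p S = R := by rw [hbeq, hRdef]; exact phi_center S p hp 0 d
      exact le_of_eq this
  · -- lower bound
    refine le_of_forall_lt fun x hx => ?_
    obtain ⟨r, hxr, hrR⟩ := EReal.lt_iff_exists_real_btwn.mp hx
    have hrR' : r < R := by exact_mod_cast hrR
    set ε := R - r with hεdef
    have hε : 0 < ε := by rw [hεdef]; linarith
    set d := max 1 (2 * ‖LinearMap.toContinuousLinearMap (Matrix.toEuclideanLin S)‖ ^ 2 / (ε * ‖p‖)) with hddef
    have hzH : ((-q, d) : EuclideanSpace ℝ (Fin m) × ℝ) ∈ Hset m :=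
      ⟨by rw [norm_neg]; exact hq, le_trans zero_le_one (le_max_left _ _)⟩
    have hle : ((r : ℝ) : EReal)
        ≤ ⨆ z ∈ Hset m, ⨅ y ∈ Hset m, ((phi y.1 z.1 y.2 z.2 p S : ℝ) : EReal) := by
      refine le_iSup₂_of_le (-q, d) hzH (le_iInf₂ fun y hy => ?_)
      rw [EReal.coe_le_coe_iff]
      have hk := lower_key S p hp hy.1 hy.2 hε (le_of_eq hddef.symm)
      have : r ≤ phi y.1 (-(‖p‖⁻¹ • p)) y.2 d p S := by
        rw [← hRdef] at hk
        linarith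
      exact this
    exact lt_of_lt_of_le hxr hle

end
end

section
/- Let m ≥ 2, let p ∈ ℝ^m with p ≠ 0, and let S be a real symmetric m×m matrix. For every d ∈ [0,∞), the infimum over (a,c) ∈ H of φ(a,−p̄,c,d;p,S) is attained at some point of the form (a,0), and it equals the minimum over a ∈ S^{m−1} of φ(a,−p̄,0,d;p,S); in particular this minimum over the unit sphere is attained and the infimum over H is finite. -/
open scoped RealInnerProductSpace

noncomputable section

/-- For `b = −p̄`, the infimum of `φ` over `H` is attained at a point of the form `(a₀,0)`
and equals the (attained) minimum over the unit sphere of `a ↦ φ(a,−p̄,0,d;p,S)`;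
in particular the infimum over `H` is finite. -/
theorem stmt2 {m : ℕ} (hm : 2 ≤ m) (p : EuclideanSpace ℝ (Fin m)) (hp : p ≠ 0)
    (S : Matrix (Fin m) (Fin m) ℝ) (hS : S.IsSymm) (d : ℝ) (hd : 0 ≤ d) :
    ∃ a₀ : EuclideanSpace ℝ (Fin m), ‖a₀‖ = 1 ∧
      (∀ a : EuclideanSpace ℝ (Fin m), ‖a‖ = 1 →
        phi a₀ (-(‖p‖⁻¹ • p)) 0 d p S ≤ phi a (-(‖p‖⁻¹ • p)) 0 d p S) ∧
      (⨅ y ∈ Hset m, ((phi y.1 (-(‖p‖⁻¹ • p)) y.2 d p S : ℝ) : EReal))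
        = ((phi a₀ (-(‖p‖⁻¹ • p)) 0 d p S : ℝ) : EReal) := by
  set b : EuclideanSpace ℝ (Fin m) := -(‖p‖⁻¹ • p) with hb
  have hpnorm : ‖p‖ ≠ 0 := norm_ne_zero_iff.2 hp
  -- continuity
  have hT : Continuous fun v : EuclideanSpace ℝ (Fin m) => mv S v := by
    unfold mv
    exact (Matrix.toEuclideanLin S).continuous_of_finiteDimensional
  have hcont : Continuous fun a : EuclideanSpace ℝ (Fin m) => phi a b 0 d p S := by
    unfold phi
    apply Continuous.sub
    · exact continuous_const.mul
        (Continuous.inner (continuous_id.sub continuous_const)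
          (hT.comp (continuous_id.sub continuous_const)))
    · exact continuous_const.mul
        (Continuous.inner (continuous_id.add continuous_const) continuous_const)
  -- compactness
  have hne : (Metric.sphere (0 : EuclideanSpace ℝ (Fin m)) 1).Nonempty := by
    refine ⟨‖p‖⁻¹ • p, ?_⟩
    rw [mem_sphere_zero_iff_norm, norm_smul, norm_inv, norm_norm,
      inv_mul_cancel₀ hpnorm]
  obtain ⟨a₀, ha₀mem, ha₀min⟩ :=
    (isCompact_sphere (0 : EuclideanSpace ℝ (Fin m)) 1).exists_isMinOn hne
      hcont.continuousOn
  have ha₀norm : ‖a₀‖ = 1 := mem_sphere_zero_iff_norm.1 ha₀mem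
  -- key: ⟪a+b,p⟫ ≤ 0 for ‖a‖ = 1
  have hbp : ⟪b, p⟫ = -‖p‖ := by
    rw [hb, inner_neg_left, real_inner_smul_left, real_inner_self_eq_norm_sq]
    field_simp
  have hkey : ∀ a : EuclideanSpace ℝ (Fin m), ‖a‖ = 1 → ∀ c : ℝ, 0 ≤ c →
      phi a b 0 d p S ≤ phi a b c d p S := by
    intro a ha c hc
    have h1 : ⟪a + b, p⟫ ≤ 0 := by
      rw [inner_add_left, hbp]
      have := real_inner_le_norm a p
      rw [ha, one_mul] at this
      linarith
    unfold phi
    nlinarith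
  refine ⟨a₀, ha₀norm, ?_, ?_⟩
  · intro a ha
    exact ha₀min (mem_sphere_zero_iff_norm.2 ha)
  · apply le_antisymm
    · exact iInf₂_le (a₀, 0) ⟨ha₀norm, le_refl 0⟩
    · refine le_iInf₂ fun y hy => ?_
      obtain ⟨hy1, hy2⟩ := hy
      have h1 : phi a₀ b 0 d p S ≤ phi y.1 b 0 d p S :=
        ha₀min (mem_sphere_zero_iff_norm.2 hy1)
      have h2 := hkey y.1 hy1 y.2 hy2
      exact_mod_cast h1.trans h2

end
end

section
/- Let m ≥ 2, let p ∈ ℝ^m with p ≠ 0, and let S be a real symmetric m×m matrix. Define m(d) = min over a ∈ S^{m−1} of φ(a,−p̄,0,d;p,S) for d ∈ [0,∞). Then: (i) m is nondecreasing in d; (ii) m(d) ≤ −2|p|^{−2}pᵀSp for every d ≥ 0; and (iii) m(d) → −2|p|^{−2}pᵀSp as d → ∞. -/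
open scoped RealInnerProductSpace

noncomputable section

/-- m(d) = min over the unit sphere of `a ↦ φ(a,−p̄,0,d;p,S)`. -/
def mmin {m : ℕ} (p : EuclideanSpace ℝ (Fin m)) (S : Matrix (Fin m) (Fin m) ℝ)
    (d : ℝ) : ℝ :=
  sInf ((fun a => phi a (-(‖p‖⁻¹ • p)) 0 d p S) '' {a : EuclideanSpace ℝ (Fin m) | ‖a‖ = 1})

lemma mv_symm {m : ℕ} (S : Matrix (Fin m) (Fin m) ℝ) (hS : S.IsSymm)
    (x y : EuclideanSpace ℝ (Fin m)) : ⟪x, mv S y⟫ = ⟪y, mv S x⟫ := by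
  have hherm : S.IsHermitian := by
    rwa [Matrix.IsHermitian, Matrix.conjTranspose_eq_transpose_of_trivial]
  have := (Matrix.isHermitian_iff_isSymmetric.1 hherm) y x
  rw [mv, mv, ← this, real_inner_comm]

lemma phi_expand {m : ℕ} (S : Matrix (Fin m) (Fin m) ℝ) (hS : S.IsSymm)
    (p : EuclideanSpace ℝ (Fin m)) (hp : p ≠ 0)
    (a : EuclideanSpace ℝ (Fin m)) (ha : ‖a‖ = 1) (d : ℝ) :
    phi a (-(‖p‖⁻¹ • p)) 0 d p S =
      -2 * (‖p‖ ^ 2)⁻¹ * ⟪p, mv S p⟫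
      - 2 * ⟪a - ‖p‖⁻¹ • p, mv S (‖p‖⁻¹ • p)⟫
      - (1/2) * ⟪a - ‖p‖⁻¹ • p, mv S (a - ‖p‖⁻¹ • p)⟫
      + d * (‖p‖/2) * ‖a - ‖p‖⁻¹ • p‖^2 := by
  have hpn : ‖p‖ ≠ 0 := norm_ne_zero_iff.2 hp
  set q : EuclideanSpace ℝ (Fin m) := ‖p‖⁻¹ • p with hqdef
  set w : EuclideanSpace ℝ (Fin m) := a - q with hwdef
  have hq : ‖q‖ = 1 := by
    rw [hqdef, norm_smul]; simp [abs_of_nonneg (inv_nonneg.2 (norm_nonneg p)), inv_mul_cancel₀ hpn]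
  have h1 : a - -q = w + (2:ℝ) • q := by rw [hwdef]; module
  have h2 : a + -q = w := by rw [hwdef]; module
  have hqp : ⟪q, p⟫ = ‖p‖ := by
    rw [hqdef, real_inner_smul_left, real_inner_self_eq_norm_sq]
    field_simp
  have hwp : ⟪w, p⟫ = -(‖p‖/2) * ‖w‖^2 := by
    have hnw : ‖w‖^2 = 2 - 2 * ⟪a, q⟫ := by
      rw [hwdef, @norm_sub_sq_real, ha, hq]; ring
    have haq : ⟪a, p⟫ = ‖p‖ * ⟪a, q⟫ := by
      rw [hqdef, real_inner_smul_right]; field_simp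
    rw [hwdef, inner_sub_left, hqp, haq, hnw]; ring
  have hexp : ⟪w + (2:ℝ) • q, mv S (w + (2:ℝ) • q)⟫
      = ⟪w, mv S w⟫ + 4 * ⟪w, mv S q⟫ + 4 * ⟪q, mv S q⟫ := by
    have hsym := mv_symm S hS q w
    simp only [mv, map_add, map_smul, inner_add_left, inner_add_right,
      real_inner_smul_left, real_inner_smul_right] at *
    linarith [hsym]
  have hqq : ⟪q, mv S q⟫ = (‖p‖^2)⁻¹ * ⟪p, mv S p⟫ := by
    rw [hqdef, mv, map_smul, real_inner_smul_left, real_inner_smul_right, ← mv, pow_two, mul_inv]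
    ring
  rw [phi, h1, h2, hexp, hqq, hwp]
  ring

/-- (i) `m(d)` is nondecreasing in `d ≥ 0`; (ii) `m(d) ≤ −2|p|⁻²pᵀSp` for every `d ≥ 0`;
(iii) `m(d) → −2|p|⁻²pᵀSp` as `d → ∞`. -/
theorem stmt3 {m : ℕ} (hm : 2 ≤ m) (p : EuclideanSpace ℝ (Fin m)) (hp : p ≠ 0)
    (S : Matrix (Fin m) (Fin m) ℝ) (hS : S.IsSymm) :
    (∀ d₁ d₂ : ℝ, 0 ≤ d₁ → d₁ ≤ d₂ → mmin p S d₁ ≤ mmin p S d₂) ∧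
    (∀ d : ℝ, 0 ≤ d → mmin p S d ≤ -2 * (‖p‖ ^ 2)⁻¹ * ⟪p, mv S p⟫) ∧
    Filter.Tendsto (fun d : ℝ => mmin p S d) Filter.atTop
      (nhds (-2 * (‖p‖ ^ 2)⁻¹ * ⟪p, mv S p⟫)) := by
  have hpn : ‖p‖ ≠ 0 := norm_ne_zero_iff.2 hp
  have hpnpos : 0 < ‖p‖ := norm_pos_iff.2 hp
  set L : ℝ := -2 * (‖p‖ ^ 2)⁻¹ * ⟪p, mv S p⟫ with hLdef
  set q : EuclideanSpace ℝ (Fin m) := ‖p‖⁻¹ • p with hqdef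
  have hq : ‖q‖ = 1 := by
    rw [hqdef, norm_smul]; simp [abs_of_nonneg (inv_nonneg.2 (norm_nonneg p)), inv_mul_cancel₀ hpn]
  set T : EuclideanSpace ℝ (Fin m) →L[ℝ] EuclideanSpace ℝ (Fin m) :=
    LinearMap.toContinuousLinearMap (Matrix.toEuclideanLin S) with hTdef
  have hTeq : ∀ x, mv S x = T x := fun x => rfl
  set K : ℝ := ‖T‖ with hKdef
  have hK0 : 0 ≤ K := norm_nonneg T
  have hmvK : ∀ x : EuclideanSpace ℝ (Fin m), ‖mv S x‖ ≤ K * ‖x‖ := by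
    intro x; rw [hTeq]; exact T.le_opNorm x
  -- pointwise lower bound
  have hptwise : ∀ a : EuclideanSpace ℝ (Fin m), ‖a‖ = 1 → ∀ d : ℝ, 0 ≤ d →
      L - 3 * K * ‖a - q‖ + d * (‖p‖/2) * ‖a - q‖^2 ≤ phi a (-q) 0 d p S := by
    intro a ha d hd
    rw [hqdef, phi_expand S hS p hp a ha d, ← hqdef, ← hLdef]
    have hw2 : ‖a - q‖ ≤ 2 := by
      calc ‖a - q‖ ≤ ‖a‖ + ‖q‖ := norm_sub_le a q
      _ = 2 := by rw [ha, hq]; norm_num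
    have hb1 : |⟪a - q, mv S q⟫| ≤ K * ‖a - q‖ := by
      calc |⟪a - q, mv S q⟫| ≤ ‖a - q‖ * ‖mv S q‖ := abs_real_inner_le_norm _ _
      _ ≤ ‖a - q‖ * (K * ‖q‖) := by
          exact mul_le_mul_of_nonneg_left (hmvK q) (norm_nonneg _)
      _ = K * ‖a - q‖ := by rw [hq]; ring
    have hb2 : |⟪a - q, mv S (a - q)⟫| ≤ K * ‖a - q‖^2 := by
      calc |⟪a - q, mv S (a - q)⟫| ≤ ‖a - q‖ * ‖mv S (a - q)‖ := abs_real_inner_le_norm _ _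
      _ ≤ ‖a - q‖ * (K * ‖a - q‖) := mul_le_mul_of_nonneg_left (hmvK _) (norm_nonneg _)
      _ = K * ‖a - q‖^2 := by ring
    have h1 := abs_le.1 hb1
    have h2 := abs_le.1 hb2
    nlinarith [norm_nonneg (a - q), sq_nonneg (‖a - q‖)]
  -- the image set, nonempty and bounded below
  have himg : ∀ d : ℝ, mmin p S d =
      sInf ((fun a => phi a (-q) 0 d p S) '' {a : EuclideanSpace ℝ (Fin m) | ‖a‖ = 1}) := by
    intro d; rw [mmin, hqdef]
  have hnonempty : ∀ d : ℝ,
      ((fun a => phi a (-q) 0 d p S) '' {a : EuclideanSpace ℝ (Fin m) | ‖a‖ = 1}).Nonempty :=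
    fun d => ⟨_, ⟨q, hq, rfl⟩⟩
  have hbdd : ∀ d : ℝ, 0 ≤ d → BddBelow
      ((fun a => phi a (-q) 0 d p S) '' {a : EuclideanSpace ℝ (Fin m) | ‖a‖ = 1}) := by
    intro d hd
    refine ⟨L - 6 * K, ?_⟩
    rintro x ⟨a, ha, rfl⟩
    have := hptwise a ha d hd
    have hw2 : ‖a - q‖ ≤ 2 := by
      calc ‖a - q‖ ≤ ‖a‖ + ‖q‖ := norm_sub_le a q
      _ = 2 := by rw [ha, hq]; norm_num
    have hsq : 0 ≤ d * (‖p‖/2) * ‖a - q‖^2 := by positivity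
    have : L - 3 * K * ‖a - q‖ ≤ phi a (-q) 0 d p S := by linarith
    nlinarith [norm_nonneg (a - q)]
  -- value at a = q equals L
  have hval : ∀ d : ℝ, phi q (-q) 0 d p S = L := by
    intro d
    have := phi_expand S hS p hp q hq d
    rw [← hqdef] at this
    simp only [sub_self, inner_zero_left, norm_zero] at this
    rw [this, ← hLdef]; ring
  have hle : ∀ d : ℝ, 0 ≤ d → mmin p S d ≤ L := by
    intro d hd
    rw [himg d]
    calc sInf _ ≤ phi q (-q) 0 d p S := csInf_le (hbdd d hd) ⟨q, hq, rfl⟩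
    _ = L := hval d
  -- monotone
  have hmono : ∀ d₁ d₂ : ℝ, 0 ≤ d₁ → d₁ ≤ d₂ → mmin p S d₁ ≤ mmin p S d₂ := by
    intro d₁ d₂ hd₁ hd12
    rw [himg d₁, himg d₂]
    refine le_csInf (hnonempty d₂) ?_
    rintro x ⟨a, ha, rfl⟩
    have hmle : phi a (-q) 0 d₁ p S ≤ phi a (-q) 0 d₂ p S := by
      rw [hqdef, phi_expand S hS p hp a ha d₁, phi_expand S hS p hp a ha d₂, ← hqdef]
      have : 0 ≤ (‖p‖/2) * ‖a - q‖^2 := by positivity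
      nlinarith
    exact le_trans (csInf_le (hbdd d₁ hd₁) ⟨a, ha, rfl⟩) hmle
  refine ⟨hmono, hle, ?_⟩
  -- lower bound for mmin
  set C : ℝ := 9 * K^2 / (2 * ‖p‖) with hCdef
  have hC0 : 0 ≤ C := by positivity
  have hge : ∀ d : ℝ, 0 < d → L - C / d ≤ mmin p S d := by
    intro d hd
    rw [himg d]
    refine le_csInf (hnonempty d) ?_
    rintro x ⟨a, ha, rfl⟩
    refine le_trans ?_ (hptwise a ha d hd.le)
    have hCd : C / d * (2 * ‖p‖ * d) = 9 * K^2 := by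
      rw [hCdef]; field_simp
    nlinarith [sq_nonneg (d * ‖p‖ * ‖a - q‖ - 3 * K), norm_nonneg (a - q),
      mul_pos hd hpnpos]
  -- squeeze
  have htend : Filter.Tendsto (fun d : ℝ => L - C / d) Filter.atTop (nhds L) := by
    have : Filter.Tendsto (fun d : ℝ => C / d) Filter.atTop (nhds 0) :=
      Filter.Tendsto.div_atTop tendsto_const_nhds Filter.tendsto_id
    have := Filter.Tendsto.sub (tendsto_const_nhds (x := L)) this
    simpa using this
  refine tendsto_of_tendsto_of_tendsto_of_le_of_le' htend tendsto_const_nhds ?_ ?_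
  · filter_upwards [Filter.eventually_gt_atTop 0] with d hd using hge d hd
  · filter_upwards [Filter.eventually_ge_atTop 0] with d hd using hle d hd

end
end

section
/- Under the stated assumptions on u (in particular −2Δ_∞u = h with nonvanishing gradient), for every x ∈ Ḡ one has sup over z ∈ H of the infimum over y ∈ H of ψ(x,y,z) equal to 0 (suprema and infima taken in the extended reals). -/
open scoped RealInnerProductSpace

noncomputable section

/-- The infinity-Laplacian quadratic form `Δ_∞ = |p|⁻² pᵀSp` (with `p = Du(x)`,
`S = D²u(x)`). -/
def Dinf {m : ℕ} (p : EuclideanSpace ℝ (Fin m)) (S : Matrix (Fin m) (Fin m) ℝ) : ℝ :=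
  (‖p‖ ^ 2)⁻¹ * ⟪p, mv S p⟫

/-- `h = −2Δ_∞u`. -/
def hfun {m : ℕ} (p : EuclideanSpace ℝ (Fin m)) (S : Matrix (Fin m) (Fin m) ℝ) : ℝ :=
  -2 * Dinf p S

/-- `ψ(x,y,z) = −h(x) + φ(a,b,c,d;p(x),S(x))` for `y = (a,c)`, `z = (b,d)`. -/
def psi {m : ℕ} (p : EuclideanSpace ℝ (Fin m)) (S : Matrix (Fin m) (Fin m) ℝ)
    (y z : EuclideanSpace ℝ (Fin m) × ℝ) : ℝ :=
  -(hfun p S) + phi y.1 z.1 y.2 z.2 p S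

set_option maxHeartbeats 1000000

/-- Under the standing assumptions on `u` (C² near `Ḡ`, `Du ≠ 0` and `h = −2Δ_∞u ≠ 0`
on `Ḡ`, where `−2Δ_∞u = h` holds by definition of `h`), for every `x ∈ Ḡ`:
`sup_{z∈H} inf_{y∈H} ψ(x,y,z) = 0` in the extended reals. -/
theorem stmt4 {m : ℕ} (hm : 2 ≤ m)
    (G U : Set (EuclideanSpace ℝ (Fin m))) (hGopen : IsOpen G)
    (hGbdd : Bornology.IsBounded G) (hUopen : IsOpen U) (hGU : closure G ⊆ U)
    (u : EuclideanSpace ℝ (Fin m) → ℝ) (hu : ContDiffOn ℝ 2 u U)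
    (Du : EuclideanSpace ℝ (Fin m) → EuclideanSpace ℝ (Fin m))
    (hDu : ∀ x ∈ U, HasGradientAt u (Du x) x)
    (S : EuclideanSpace ℝ (Fin m) → Matrix (Fin m) (Fin m) ℝ)
    (hSsymm : ∀ x ∈ U, (S x).IsSymm)
    (hS : ∀ x ∈ U, HasFDerivAt Du
      (LinearMap.toContinuousLinearMap (Matrix.toEuclideanLin (S x))) x)
    (hp : ∀ x ∈ closure G, Du x ≠ 0)
    (hh : ∀ x ∈ closure G, hfun (Du x) (S x) ≠ 0)
    (x : EuclideanSpace ℝ (Fin m)) (hx : x ∈ closure G) :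
    (⨆ z ∈ Hset m, ⨅ y ∈ Hset m, ((psi (Du x) (S x) y z : ℝ) : EReal)) = 0 := by

  classical
  set p := Du x with hpdef
  set A := S x with hAdef
  have hp0 : p ≠ 0 := hp x hx
  have np : (0:ℝ) < ‖p‖ := norm_pos_iff.mpr hp0
  set q : EuclideanSpace ℝ (Fin m) := ‖p‖⁻¹ • p with hqdef
  have hq1 : ‖q‖ = 1 := by
    rw [hqdef, norm_smul, norm_inv, norm_norm]
    field_simp
  have hqp : ⟪q, p⟫ = ‖p‖ := by
    rw [hqdef, real_inner_smul_left, real_inner_self_eq_norm_sq]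
    field_simp
  have hpq : p = ‖p‖ • q := by
    rw [hqdef, smul_smul]
    rw [mul_inv_cancel₀ (ne_of_gt np), one_smul]
  have hmv_add : ∀ v w : EuclideanSpace ℝ (Fin m), mv A (v + w) = mv A v + mv A w := by
    intro v w; simp [mv, map_add]
  have hmv_smul : ∀ (r : ℝ) (v : EuclideanSpace ℝ (Fin m)), mv A (r • v) = r • mv A v := by
    intro r v; simp [mv, map_smul]
  set C : ℝ := ‖LinearMap.toContinuousLinearMap (Matrix.toEuclideanLin A)‖ with hCdef
  have hC0 : 0 ≤ C := norm_nonneg _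
  have hCb : ∀ v w : EuclideanSpace ℝ (Fin m), |⟪v, mv A w⟫| ≤ C * ‖v‖ * ‖w‖ := by
    intro v w
    have h1 : |⟪v, mv A w⟫| ≤ ‖v‖ * ‖mv A w‖ := abs_real_inner_le_norm _ _
    have h2 : ‖mv A w‖ ≤ C * ‖w‖ := by
      have := (LinearMap.toContinuousLinearMap (Matrix.toEuclideanLin A)).le_opNorm w
      rw [hCdef]
      simpa only [mv, LinearMap.coe_toContinuousLinearMap'] using this
    calc |⟪v, mv A w⟫| ≤ ‖v‖ * ‖mv A w‖ := h1
      _ ≤ ‖v‖ * (C * ‖w‖) := by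
          exact mul_le_mul_of_nonneg_left h2 (norm_nonneg _)
      _ = C * ‖v‖ * ‖w‖ := by ring
  have hmvq : mv A q = ‖p‖⁻¹ • mv A p := by rw [hqdef, hmv_smul]
  have hAq : ⟪q, mv A q⟫ = (‖p‖ ^ 2)⁻¹ * ⟪p, mv A p⟫ := by
    rw [hmvq, hqdef, real_inner_smul_left, real_inner_smul_right]
    have hsq : (‖p‖ ^ 2)⁻¹ = ‖p‖⁻¹ * ‖p‖⁻¹ := by rw [sq, mul_inv]
    rw [hsq]; ring
  have hzero : -(hfun p A) = 2 * ⟪q, mv A q⟫ := by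
    simp only [hfun, Dinf]; rw [hAq]; ring
  have hpsi : ∀ (a b : EuclideanSpace ℝ (Fin m)) (c d : ℝ),
      psi p A (a, c) (b, d)
        = -(hfun p A) - (1/2) * ⟪a - b, mv A (a - b)⟫ - (c + d) * ⟪a + b, p⟫ := by
    intro a b c d
    simp only [psi, phi]
    ring
  -- Upper bound: for each z ∈ H, inf over y is ≤ 0
  have upper : ∀ z ∈ Hset m,
      (⨅ y ∈ Hset m, ((psi p A y z : ℝ) : EReal)) ≤ (0 : EReal) := by
    rintro ⟨b, d⟩ ⟨hb, hd⟩
    simp only [Hset, Set.mem_setOf_eq] at hb hd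
    have hbp : -‖p‖ ≤ ⟪b, p⟫ := by
      have h := abs_real_inner_le_norm b p
      rw [hb, one_mul] at h
      linarith [neg_abs_le (⟪b, p⟫ : ℝ)]
    have hTnn : 0 ≤ ⟪q + b, p⟫ := by
      rw [inner_add_left, hqp]; linarith
    rcases eq_or_lt_of_le hTnn with hT0 | hTpos
    · -- boundary case: b = -q
      have hbp' : ⟪b, p⟫ = -‖p‖ := by
        rw [inner_add_left, hqp] at hT0; linarith
      have hbq : ⟪b, q⟫ = -1 := by
        rw [hqdef, real_inner_smul_right, hbp']
        field_simp
      have hbq2 : ‖b + q‖ ^ 2 = 0 := by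
        rw [norm_add_sq_real, hb, hq1, hbq]; ring
      have hbeq : b = -q := by
        have h0 : ‖b + q‖ = 0 := by
          have := sq_eq_zero_iff.mp hbq2
          exact this
        have : b + q = 0 := norm_eq_zero.mp h0
        linear_combination (norm := module) this
      refine le_trans (iInf₂_le ((q, 0) : EuclideanSpace ℝ (Fin m) × ℝ) ⟨hq1, le_refl 0⟩) ?_
      have hval : psi p A (q, 0) (b, d) = 0 := by
        rw [hpsi, hbeq]
        have e2 : ⟪q + -q, p⟫ = (0:ℝ) := by simp
        have e4 : ⟪q - -q, mv A (q - -q)⟫ = 4 * ⟪q, mv A q⟫ := by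
          have e1 : q - -q = q + q := by module
          rw [e1, hmv_add, inner_add_left, inner_add_right]; ring
        rw [e4, e2, hzero]
        ring
      rw [hval]
      exact le_refl _
    · -- interior case: choose c large
      set T := ⟪q + b, p⟫ with hTdef
      set K := -(hfun p A) - (1/2) * ⟪q - b, mv A (q - b)⟫ with hKdef
      set c := max 0 (K / T) with hcdef
      refine le_trans (iInf₂_le ((q, c) : EuclideanSpace ℝ (Fin m) × ℝ) ⟨hq1, le_max_left _ _⟩) ?_
      have hψ : psi p A (q, c) (b, d) ≤ 0 := by
        rw [hpsi]
        have hcT : K ≤ c * T := by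
          have hc' : K / T ≤ c := le_max_right _ _
          have := mul_le_mul_of_nonneg_right hc' hTpos.le
          rwa [div_mul_cancel₀ _ (ne_of_gt hTpos)] at this
        have hdT : 0 ≤ d * T := mul_nonneg hd hTpos.le
        have : (c + d) * T ≥ K := by nlinarith
        rw [hKdef] at this
        linarith
      exact_mod_cast hψ
  -- Lower bound: for each ε > 0 there is z ∈ H with inf over y ≥ -ε
  have lower : ∀ ε : ℝ, 0 < ε →
      ((-ε : ℝ) : EReal) ≤ ⨆ z ∈ Hset m, ⨅ y ∈ Hset m, ((psi p A y z : ℝ) : EReal) := by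
    intro ε hε
    set L : ℝ := 3 * C + 1 with hLdef
    have hL0 : 0 < L := by positivity
    set d : ℝ := L ^ 2 / (2 * ε * ‖p‖) with hddef
    have hd0 : 0 ≤ d := by positivity
    have hz : ((-q, d) : EuclideanSpace ℝ (Fin m) × ℝ) ∈ Hset m := by
      refine ⟨?_, hd0⟩
      simp [hq1]
    refine le_iSup₂_of_le ((-q, d) : EuclideanSpace ℝ (Fin m) × ℝ) hz ?_
    refine le_iInf₂ ?_
    rintro ⟨a, c⟩ ⟨ha, hc⟩
    simp only [Hset, Set.mem_setOf_eq] at ha hc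
    rw [EReal.coe_le_coe_iff]
    -- main estimate
    set w : EuclideanSpace ℝ (Fin m) := a - q with hwdef
    set t : ℝ := ‖w‖ with htdef
    have ht0 : 0 ≤ t := norm_nonneg _
    have ht2 : t ≤ 2 := by
      have h := norm_sub_le a q
      rw [ha, hq1] at h
      calc t = ‖a - q‖ := rfl
        _ ≤ 1 + 1 := h
        _ = 2 := by norm_num
    have hap : ⟪a, p⟫ ≤ ‖p‖ := by
      have h := abs_real_inner_le_norm a p
      rw [ha, one_mul] at h
      linarith [le_abs_self (⟪a, p⟫ : ℝ)]
    have haq : ⟪a, q⟫ = ‖p‖⁻¹ * ⟪a, p⟫ := by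
      rw [hqdef, real_inner_smul_right]
    have htsq : t ^ 2 = 2 - 2 * ⟪a, q⟫ := by
      rw [htdef, hwdef, norm_sub_sq_real, ha, hq1]; ring
    have hpen : ‖p‖ - ⟪a, p⟫ = ‖p‖ * t ^ 2 / 2 := by
      rw [htsq, haq]
      have hmi : ‖p‖ * ‖p‖⁻¹ = 1 := mul_inv_cancel₀ (ne_of_gt np)
      linear_combination (⟪a, p⟫ : ℝ) * hmi
    -- quadratic expansion
    have hquad : -(hfun p A) - (1/2) * ⟪a - -q, mv A (a - -q)⟫
        = -(1/2) * (2 * ⟪q, mv A w⟫ + 2 * ⟪w, mv A q⟫ + ⟪w, mv A w⟫) := by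
      have e : a - -q = w + (q + q) := by rw [hwdef]; module
      rw [e, hzero]
      simp only [hmv_add, inner_add_left, inner_add_right]
      ring
    have hb1 : |⟪q, mv A w⟫| ≤ C * t := by
      have h := hCb q w
      rw [hq1] at h
      calc |⟪q, mv A w⟫| ≤ C * 1 * t := h
        _ = C * t := by ring
    have hb2 : |⟪w, mv A q⟫| ≤ C * t := by
      have h := hCb w q
      rw [hq1] at h
      calc |⟪w, mv A q⟫| ≤ C * t * 1 := h
        _ = C * t := by ring
    have hb3 : |⟪w, mv A w⟫| ≤ 2 * C * t := by
      have h := hCb w w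
      have h2 : C * t * t ≤ C * t * 2 := mul_le_mul_of_nonneg_left ht2 (mul_nonneg hC0 ht0)
      calc |⟪w, mv A w⟫| ≤ C * t * t := h
        _ ≤ C * t * 2 := h2
        _ = 2 * C * t := by ring
    have hquadlb : -(hfun p A) - (1/2) * ⟪a - -q, mv A (a - -q)⟫ ≥ -(L * t) := by
      rw [hquad]
      have h1 := le_abs_self (⟪q, mv A w⟫ : ℝ)
      have h2 := le_abs_self (⟪w, mv A q⟫ : ℝ)
      have h3 := le_abs_self (⟪w, mv A w⟫ : ℝ)
      have hLt : 2 * L * t = 6 * C * t + 2 * t := by rw [hLdef]; ring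
      linarith
    -- penalty term
    have hip : ⟪a + -q, p⟫ = ⟪a, p⟫ - ‖p‖ := by
      rw [inner_add_left, inner_neg_left, hqp]
      ring
    have hpennn : ⟪a + -q, p⟫ ≤ 0 := by rw [hip]; linarith
    have hpenlb : -((c + d) * ⟪a + -q, p⟫) ≥ d * (‖p‖ * t ^ 2 / 2) := by
      have h1 : -((c + d) * ⟪a + -q, p⟫) ≥ -(d * ⟪a + -q, p⟫) := by
        nlinarith [mul_nonneg hc (neg_nonneg.mpr hpennn)]
      have h2 : -(d * ⟪a + -q, p⟫) = d * (‖p‖ - ⟪a, p⟫) := by rw [hip]; ring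
      rw [h2, hpen] at h1
      exact h1
    have hdval : d * ‖p‖ = L ^ 2 / (2 * ε) := by
      rw [hddef]
      field_simp
    have key : -(L * t) + d * (‖p‖ * t ^ 2 / 2) ≥ -ε := by
      have : d * (‖p‖ * t ^ 2 / 2) = (L ^ 2 / (2 * ε)) * t ^ 2 / 2 := by
        rw [← hdval]; ring
      rw [this]
      have h4 : (0:ℝ) ≤ (L * t - 2 * ε) ^ 2 := sq_nonneg _
      have hε' : (0:ℝ) < 4 * ε := by linarith
      rw [ge_iff_le, ← sub_nonneg]
      have : (L ^ 2 / (2 * ε)) * t ^ 2 / 2 = L ^ 2 * t ^ 2 / (4 * ε) := by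
        rw [div_mul_eq_mul_div, div_div]
        congr 1
        ring
      rw [this]
      have expand : L ^ 2 * t ^ 2 / (4 * ε) - L * t + ε = (L * t - 2 * ε) ^ 2 / (4 * ε) := by
        field_simp
        ring
      have : -ε ≤ L ^ 2 * t ^ 2 / (4 * ε) - L * t := by
        have := div_nonneg h4 hε'.le
        linarith [expand ▸ this]
      linarith
    have := hpsi a (-q) c d
    rw [this]
    linarith
  -- combine
  refine le_antisymm (iSup₂_le upper) ?_
  by_contra hcon
  push_neg at hcon
  obtain ⟨r, hr1, hr2⟩ := EReal.lt_iff_exists_real_btwn.mp hcon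
  have hrneg : r < 0 := by exact_mod_cast hr2
  have hl := lower (-r) (by linarith)
  rw [neg_neg] at hl
  exact absurd (lt_of_le_of_lt hl hr1) (lt_irrefl _)

end
end

section
/- Under the stated assumptions on u, define for d ≥ 0 and x ∈ Ḡ the quantity γ_d(x) = min over a ∈ S^{m−1} of ψ(x,(a,0),(−p̄(x),d)). Then sup over x ∈ Ḡ of |γ_d(x)| tends to 0 as d → ∞; i.e., γ_d converges to 0 uniformly on Ḡ. -/
open scoped RealInnerProductSpace

noncomputable section

/-- `γ_d(x)`: the minimum over `a ∈ S^{m−1}` of `ψ(x,(a,0),(−p̄(x),d))`. -/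
def gam {m : ℕ} (Du : EuclideanSpace ℝ (Fin m) → EuclideanSpace ℝ (Fin m))
    (S : EuclideanSpace ℝ (Fin m) → Matrix (Fin m) (Fin m) ℝ) (d : ℝ)
    (x : EuclideanSpace ℝ (Fin m)) : ℝ :=
  sInf ((fun a => psi (Du x) (S x) (a, 0) (-(‖Du x‖⁻¹ • Du x), d))
    '' {a : EuclideanSpace ℝ (Fin m) | ‖a‖ = 1})

variable {m : ℕ}

lemma mv_add (S : Matrix (Fin m) (Fin m) ℝ) (v w : EuclideanSpace ℝ (Fin m)) :
    mv S (v + w) = mv S v + mv S w := by simp [mv]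

lemma mv_sub (S : Matrix (Fin m) (Fin m) ℝ) (v w : EuclideanSpace ℝ (Fin m)) :
    mv S (v - w) = mv S v - mv S w := by simp [mv]

lemma mv_smul (S : Matrix (Fin m) (Fin m) ℝ) (c : ℝ) (v : EuclideanSpace ℝ (Fin m)) :
    mv S (c • v) = c • mv S v := by simp [mv]

lemma mv_neg (S : Matrix (Fin m) (Fin m) ℝ) (v : EuclideanSpace ℝ (Fin m)) :
    mv S (-v) = -mv S v := by simp [mv]

example (f : EuclideanSpace ℝ (Fin m) → ℝ) (x : EuclideanSpace ℝ (Fin m))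
    (g : EuclideanSpace ℝ (Fin m)) (h : HasGradientAt f g x) :
    fderiv ℝ f x = (InnerProductSpace.toDual ℝ _) g := by
  exact h.hasFDerivAt.fderiv
lemma Dinf_eq (p : EuclideanSpace ℝ (Fin m)) (T : Matrix (Fin m) (Fin m) ℝ)
    (hp : p ≠ 0) : Dinf p T = ⟪‖p‖⁻¹ • p, mv T (‖p‖⁻¹ • p)⟫ := by
  have hn : ‖p‖ ≠ 0 := norm_ne_zero_iff.mpr hp
  rw [mv_smul, real_inner_smul_left, real_inner_smul_right, Dinf]
  have : (‖p‖^2)⁻¹ = ‖p‖⁻¹ * ‖p‖⁻¹ := by rw [sq, mul_inv]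
  rw [this]; ring

lemma psi_at_pbar (p : EuclideanSpace ℝ (Fin m)) (T : Matrix (Fin m) (Fin m) ℝ)
    (hp : p ≠ 0) (d : ℝ) :
    psi p T (‖p‖⁻¹ • p, 0) (-(‖p‖⁻¹ • p), d) = 0 := by
  set q := ‖p‖⁻¹ • p with hq
  have h1 : Dinf p T = ⟪q, mv T q⟫ := Dinf_eq p T hp
  simp only [psi, phi, hfun, h1, sub_neg_eq_add, add_neg_cancel, inner_zero_left]
  have h2 : ⟪q + q, mv T (q + q)⟫ = 4 * ⟪q, mv T q⟫ := by
    rw [mv_add, inner_add_left, inner_add_right]; ring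
  rw [h2]; ring

lemma psi_lower (p : EuclideanSpace ℝ (Fin m)) (T : Matrix (Fin m) (Fin m) ℝ)
    (hp : p ≠ 0) (M c d : ℝ) (hM0 : 0 ≤ M)
    (hM : ∀ v, ‖mv T v‖ ≤ M * ‖v‖) (hc : 0 < c) (hcp : c ≤ ‖p‖) (hd : 0 < d)
    (a : EuclideanSpace ℝ (Fin m)) (ha : ‖a‖ = 1) :
    -(2 * M ^ 2 / (c * d)) ≤ psi p T (a, 0) (-(‖p‖⁻¹ • p), d) := by
  have hn : (0:ℝ) < ‖p‖ := lt_of_lt_of_le hc hcp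
  set q := ‖p‖⁻¹ • p with hq
  have hnq : ‖q‖ = 1 := by
    rw [hq, norm_smul, norm_inv, norm_norm, inv_mul_cancel₀ hn.ne']
  set t := ‖a - q‖ with ht
  have ht0 : 0 ≤ t := norm_nonneg _
  have haq : ⟪a, p⟫ = ‖p‖ * ⟪a, q⟫ := by
    rw [hq, real_inner_smul_right]; field_simp
  have hqp : ⟪q, p⟫ = ‖p‖ := by
    rw [hq, real_inner_smul_left, real_inner_self_eq_norm_sq]; field_simp
  have htsq : t ^ 2 = 2 - 2 * ⟪a, q⟫ := by
    rw [ht, norm_sub_sq_real, ha, hnq]; ring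
  -- the quadratic bound
  have hQ : ∀ v w : EuclideanSpace ℝ (Fin m), |⟪v, mv T w⟫| ≤ M * ‖v‖ * ‖w‖ := by
    intro v w
    calc |⟪v, mv T w⟫| ≤ ‖v‖ * ‖mv T w‖ := abs_real_inner_le_norm _ _
      _ ≤ ‖v‖ * (M * ‖w‖) := by
          exact mul_le_mul_of_nonneg_left (hM w) (norm_nonneg _)
      _ = M * ‖v‖ * ‖w‖ := by ring
  -- identity: 2⟪q,Tq⟫ - (1/2)⟪a+q,T(a+q)⟫ = (1/4)(⟪q-a, T(a+3q)⟫ + ⟪a+3q, T(q-a)⟫)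
  have hid : 2 * ⟪q, mv T q⟫ - (1/2) * ⟪a + q, mv T (a + q)⟫
      = (1/4) * (⟪q - a, mv T (a + (3:ℝ) • q)⟫ + ⟪a + (3:ℝ) • q, mv T (q - a)⟫) := by
    simp only [mv_add, mv_sub, mv_smul, inner_add_left, inner_add_right,
      inner_sub_left, inner_sub_right, real_inner_smul_left, real_inner_smul_right]
    ring
  have hn3 : ‖a + (3:ℝ) • q‖ ≤ 4 := by
    calc ‖a + (3:ℝ) • q‖ ≤ ‖a‖ + ‖(3:ℝ) • q‖ := norm_add_le _ _
      _ = 4 := by rw [ha, norm_smul, hnq]; norm_num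
  have hqa : ‖q - a‖ = t := by rw [ht, norm_sub_rev]
  have hb1 : -(4 * M * t) ≤ ⟪q - a, mv T (a + (3:ℝ) • q)⟫ := by
    have := (abs_le.mp (hQ (q - a) (a + (3:ℝ) • q))).1
    have h2 : M * ‖q - a‖ * ‖a + (3:ℝ) • q‖ ≤ 4 * M * t := by
      rw [hqa]
      calc M * t * ‖a + (3:ℝ) • q‖ ≤ M * t * 4 := by
            apply mul_le_mul_of_nonneg_left hn3 (by positivity)
        _ = 4 * M * t := by ring
    linarith
  have hb2 : -(4 * M * t) ≤ ⟪a + (3:ℝ) • q, mv T (q - a)⟫ := by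
    have := (abs_le.mp (hQ (a + (3:ℝ) • q) (q - a))).1
    have h2 : M * ‖a + (3:ℝ) • q‖ * ‖q - a‖ ≤ 4 * M * t := by
      rw [hqa]
      calc M * ‖a + (3:ℝ) • q‖ * t ≤ M * 4 * t := by
            apply mul_le_mul_of_nonneg_right
              (mul_le_mul_of_nonneg_left hn3 hM0) ht0
        _ = 4 * M * t := by ring
    linarith
  -- expand psi
  have hpsi : psi p T (a, 0) (-q, d)
      = (2 * ⟪q, mv T q⟫ - (1/2) * ⟪a + q, mv T (a + q)⟫) + d * ‖p‖ * (t^2/2) := by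
    simp only [psi, phi, hfun, Dinf_eq p T hp, sub_neg_eq_add]
    have : ⟪a + -q, p⟫ = ⟪a, p⟫ - ⟪q, p⟫ := by
      rw [← sub_eq_add_neg, inner_sub_left]
    rw [this, haq, hqp]
    have h2 : d * ‖p‖ * (t^2/2) = -d * (‖p‖ * ⟪a, q⟫ - ‖p‖) := by
      rw [htsq]; ring
    rw [h2]; ring
  rw [hpsi, hid]
  have hkey : -(2 * M ^ 2 / (c * d)) ≤ -(2 * M * t) + d * c * (t^2/2) := by
    have hcd : (0:ℝ) < c * d := mul_pos hc hd
    rw [neg_le, le_div_iff₀ hcd]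
    nlinarith [sq_nonneg (c * d * t - 2 * M)]
  have hlast : d * c * (t^2/2) ≤ d * ‖p‖ * (t^2/2) := by
    apply mul_le_mul_of_nonneg_right _ (by positivity)
    exact mul_le_mul_of_nonneg_left hcp hd.le
  linarith

lemma gam_bounds (p : EuclideanSpace ℝ (Fin m)) (T : Matrix (Fin m) (Fin m) ℝ)
    (hp : p ≠ 0) (M c d : ℝ) (hM0 : 0 ≤ M)
    (hM : ∀ v, ‖mv T v‖ ≤ M * ‖v‖) (hc : 0 < c) (hcp : c ≤ ‖p‖) (hd : 0 < d) :
    -(2 * M ^ 2 / (c * d)) ≤ sInf ((fun a => psi p T (a, 0) (-(‖p‖⁻¹ • p), d))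
      '' {a : EuclideanSpace ℝ (Fin m) | ‖a‖ = 1}) ∧
    sInf ((fun a => psi p T (a, 0) (-(‖p‖⁻¹ • p), d))
      '' {a : EuclideanSpace ℝ (Fin m) | ‖a‖ = 1}) ≤ 0 := by
  have hn : (0:ℝ) < ‖p‖ := lt_of_lt_of_le hc hcp
  set f := fun a => psi p T (a, 0) (-(‖p‖⁻¹ • p), d) with hf
  have hmem : ‖p‖⁻¹ • p ∈ {a : EuclideanSpace ℝ (Fin m) | ‖a‖ = 1} := by
    simp only [Set.mem_setOf_eq, norm_smul, norm_inv, norm_norm]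
    exact inv_mul_cancel₀ hn.ne'
  have hne : (f '' {a : EuclideanSpace ℝ (Fin m) | ‖a‖ = 1}).Nonempty :=
    ⟨f (‖p‖⁻¹ • p), Set.mem_image_of_mem f hmem⟩
  have hlb : ∀ y ∈ f '' {a : EuclideanSpace ℝ (Fin m) | ‖a‖ = 1},
      -(2 * M ^ 2 / (c * d)) ≤ y := by
    rintro y ⟨a, ha, rfl⟩
    exact psi_lower p T hp M c d hM0 hM hc hcp hd a ha
  refine ⟨le_csInf hne hlb, ?_⟩
  have h1 : sInf (f '' {a : EuclideanSpace ℝ (Fin m) | ‖a‖ = 1}) ≤ f (‖p‖⁻¹ • p) :=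
    csInf_le ⟨_, hlb⟩ (Set.mem_image_of_mem f hmem)
  have h2 : f (‖p‖⁻¹ • p) = 0 := psi_at_pbar p T hp d
  linarith


/-- `γ_d → 0` uniformly on `Ḡ` as `d → ∞`. -/
theorem stmt6 {m : ℕ} (hm : 2 ≤ m)
    (G U : Set (EuclideanSpace ℝ (Fin m))) (hGopen : IsOpen G)
    (hGbdd : Bornology.IsBounded G) (hUopen : IsOpen U) (hGU : closure G ⊆ U)
    (u : EuclideanSpace ℝ (Fin m) → ℝ) (hu : ContDiffOn ℝ 2 u U)
    (Du : EuclideanSpace ℝ (Fin m) → EuclideanSpace ℝ (Fin m))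
    (hDu : ∀ x ∈ U, HasGradientAt u (Du x) x)
    (S : EuclideanSpace ℝ (Fin m) → Matrix (Fin m) (Fin m) ℝ)
    (hSsymm : ∀ x ∈ U, (S x).IsSymm)
    (hS : ∀ x ∈ U, HasFDerivAt Du
      (LinearMap.toContinuousLinearMap (Matrix.toEuclideanLin (S x))) x)
    (hp : ∀ x ∈ closure G, Du x ≠ 0)
    (hh : ∀ x ∈ closure G, hfun (Du x) (S x) ≠ 0)
    :
    TendstoUniformlyOn (fun (d : ℝ) (x : EuclideanSpace ℝ (Fin m)) => gam Du S d x)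
      (fun _ => 0) Filter.atTop (closure G) := by
  rcases (closure G).eq_empty_or_nonempty with hE | hNE
  · rw [hE]; exact tendstoUniformlyOn_empty
  -- compactness
  have hKc : IsCompact (closure G) :=
    Metric.isCompact_of_isClosed_isBounded isClosed_closure hGbdd.closure
  -- Du is C¹ on U
  have hDuC1 : ContDiffOn ℝ 1 Du U := by
    have h1 : ContDiffOn ℝ 1 (fderiv ℝ u) U :=
      hu.fderiv_of_isOpen hUopen (by norm_num)
    have h2 : ContDiffOn ℝ 1
        (fun x => (InnerProductSpace.toDual ℝ (EuclideanSpace ℝ (Fin m))).symm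
          (fderiv ℝ u x)) U :=
      ((InnerProductSpace.toDual ℝ (EuclideanSpace ℝ (Fin m))).symm.contDiff).comp_contDiffOn h1
    refine h2.congr fun x hx => ?_
    rw [(hDu x hx).hasFDerivAt.fderiv]
    simp
  have hfC : ContinuousOn (fderiv ℝ Du) U :=
    hDuC1.continuousOn_fderiv_of_isOpen hUopen le_rfl
  have hfd : ∀ x ∈ U, fderiv ℝ Du x
      = LinearMap.toContinuousLinearMap (Matrix.toEuclideanLin (S x)) :=
    fun x hx => (hS x hx).fderiv
  -- minimum of ‖Du‖
  have hDuCont : ContinuousOn Du (closure G) := fun x hx =>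
    ((hS x (hGU hx)).differentiableAt.continuousAt).continuousWithinAt
  obtain ⟨x₀, hx₀, hmin'⟩ := hKc.exists_isMinOn hNE
    (continuous_norm.comp_continuousOn hDuCont)
  have hmin : ∀ x ∈ closure G, ‖Du x₀‖ ≤ ‖Du x‖ := fun x hx => hmin' hx
  set c := ‖Du x₀‖ with hcdef
  have hc : 0 < c := norm_pos_iff.mpr (hp x₀ hx₀)
  -- maximum of operator norm
  obtain ⟨x₁, hx₁, hmax'⟩ := hKc.exists_isMaxOn hNE
    (continuous_norm.comp_continuousOn (hfC.mono hGU))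
  have hmax : ∀ x ∈ closure G, ‖fderiv ℝ Du x‖ ≤ ‖fderiv ℝ Du x₁‖ :=
    fun x hx => hmax' hx
  set M := ‖fderiv ℝ Du x₁‖ with hMdef
  have hM0 : 0 ≤ M := norm_nonneg _
  have hMb : ∀ x ∈ closure G, ∀ v, ‖mv (S x) v‖ ≤ M * ‖v‖ := by
    intro x hx v
    have h1 := (fderiv ℝ Du x).le_opNorm v
    have h2 : fderiv ℝ Du x v = mv (S x) v := by rw [hfd x (hGU hx)]; rfl
    calc ‖mv (S x) v‖ = ‖fderiv ℝ Du x v‖ := by rw [h2]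
      _ ≤ ‖fderiv ℝ Du x‖ * ‖v‖ := h1
      _ ≤ M * ‖v‖ := mul_le_mul_of_nonneg_right (hmax x hx) (norm_nonneg _)
  -- epsilon argument
  rw [Metric.tendstoUniformlyOn_iff]
  intro ε hε
  set K := 2 * M ^ 2 / c with hKdef
  have hK0 : 0 ≤ K := by positivity
  filter_upwards [Filter.eventually_ge_atTop (K / ε + 1)] with d hd
  intro x hx
  have hd1 : (0:ℝ) < d := lt_of_lt_of_le (by positivity) hd
  have hb := gam_bounds (Du x) (S x) (hp x hx) M c d hM0 (hMb x hx) hc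
    (hmin x hx) hd1
  have hKd : 2 * M ^ 2 / (c * d) = K / d := by
    rw [hKdef, div_div]
  have h3 : K / d < ε := by
    rw [div_lt_iff₀ hd1]
    have h4 : ε * (K / ε + 1) = K + ε := by field_simp
    nlinarith [mul_le_mul_of_nonneg_left hd hε.le]
  rw [hKd] at hb
  rw [Real.dist_eq, abs_lt]
  have hg : gam Du S d x = sInf ((fun a => psi (Du x) (S x) (a, 0)
      (-(‖Du x‖⁻¹ • Du x), d)) '' {a : EuclideanSpace ℝ (Fin m) | ‖a‖ = 1}) := rfl
  rw [hg] at *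
  constructor <;> [linarith [hb.1, hb.2]; linarith [hb.1, hb.2]]
end
end

section
/- (Proposition 2.1(ii).) Under the stated assumptions on u, for every δ > 0 there exist d^δ ∈ (0,∞) with d^δ → ∞ as δ → 0, and a Lipschitz map a^δ : Ḡ → S^{m−1}, such that: (i) for every x ∈ Ḡ, ψ(x,(a^δ(x),0),(−p̄(x),d^δ)) ∈ [−δ, δ]; (ii) sup over x ∈ Ḡ of |a^δ(x) − p̄(x)| → 0 as δ → 0; and (iii) sup over x ∈ Ḡ of |d^δ(a^δ(x) − p̄(x)) − 2q(x)| → 0 as δ → 0, where q(x) = |p(x)|^{−2}(S(x)p(x) − Δ_∞u(x) p(x)). -/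
open scoped RealInnerProductSpace

noncomputable section

/-- `q(x) = |p(x)|⁻²(S(x)p(x) − Δ_∞u(x) p(x))`. -/
def qfun {m : ℕ} (Du : EuclideanSpace ℝ (Fin m) → EuclideanSpace ℝ (Fin m))
    (S : EuclideanSpace ℝ (Fin m) → Matrix (Fin m) (Fin m) ℝ)
    (x : EuclideanSpace ℝ (Fin m)) : EuclideanSpace ℝ (Fin m) :=
  (‖Du x‖ ^ 2)⁻¹ • (mv (S x) (Du x) - Dinf (Du x) (S x) • Du x)

/-!
Write `p̄ = p/|p|`; the vector `q` is orthogonal to `p`. For a unit vector `a`,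
`ψ(x,(a,0),(-p̄,d)) = d|p||a - p̄|²/2 - ⟨p̄,S w⟩ - ⟨w,S p̄⟩ - ⟨w,S w⟩/2` with `w = a - p̄`, because
`(a - p̄)·p = -|p||a - p̄|²/2` for unit `a`, `p̄`. So it suffices to take `d = 2/t` and a unit field
with `a = p̄ + t q + O(t²)` uniformly on `Ḡ`: then `|a - p̄| = O(t)`, `ψ = O(t)` and
`d(a - p̄) - 2q = O(t)`. Since `|p̄ + t q|² = 1 + t²|q|²`, such a field is obtained by approximating
the continuous field `p̄ + t q` within `t²` by a Lipschitz map (coordinatewise inf-convolution on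
the compact set `Ḡ`) and renormalizing. With `t = min(δ,1)/B`, for `B` built from bounds of `|p|`,
`|S|` and `|q|` on `Ḡ`, all errors are at most `δ`.
-/

open scoped NNReal
open Set Filter Topology

section Normalize

variable {V : Type*} [NormedAddCommGroup V] [NormedSpace ℝ V]

theorem norm_normalize_sub_normalize_le {x : V} (hx : x ≠ 0) (y : V) :
    ‖NormedSpace.normalize x - NormedSpace.normalize y‖ ≤ 2 * ‖x - y‖ / ‖x‖ := by
  have hx' : ‖x‖ ≠ 0 := norm_ne_zero_iff.mpr hx
  have hsplit : NormedSpace.normalize x - NormedSpace.normalize y =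
      ‖x‖⁻¹ • ((x - y) + (1 - ‖x‖ * ‖y‖⁻¹) • y) := by
    simp only [NormedSpace.normalize]
    match_scalars
    · field_simp
    · field_simp; ring
  have hy : ‖(1 - ‖x‖ * ‖y‖⁻¹) • y‖ ≤ ‖x - y‖ := by
    rcases eq_or_ne y 0 with rfl | hy
    · simp
    have hy' : ‖y‖ ≠ 0 := norm_ne_zero_iff.mpr hy
    calc ‖(1 - ‖x‖ * ‖y‖⁻¹) • y‖ = |(1 - ‖x‖ * ‖y‖⁻¹) * ‖y‖| := by
          rw [norm_smul, Real.norm_eq_abs, abs_mul, abs_norm]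
      _ = |‖y‖ - ‖x‖| := by congr 1; field_simp
      _ ≤ ‖x - y‖ := norm_sub_rev y x ▸ abs_norm_sub_norm_le y x
  calc ‖NormedSpace.normalize x - NormedSpace.normalize y‖
        = ‖x‖⁻¹ * ‖(x - y) + (1 - ‖x‖ * ‖y‖⁻¹) • y‖ := by
        rw [hsplit, norm_smul, norm_inv, norm_norm]
    _ ≤ ‖x‖⁻¹ * (‖x - y‖ + ‖x - y‖) := by gcongr; exact (norm_add_le _ _).trans (by linarith)
    _ = 2 * ‖x - y‖ / ‖x‖ := by ring

theorem lipschitzOnWith_normalize {r : ℝ≥0} (hr : 0 < r) :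
    LipschitzOnWith (2 / r) (NormedSpace.normalize : V → V) {x | r ≤ ‖x‖} :=
  LipschitzOnWith.of_dist_le_mul fun x hx y _ => by
    have hx0 : x ≠ 0 := norm_pos_iff.mp (lt_of_lt_of_le hr hx)
    rw [dist_eq_norm, dist_eq_norm]
    calc ‖NormedSpace.normalize x - NormedSpace.normalize y‖ ≤ 2 * ‖x - y‖ / ‖x‖ :=
          norm_normalize_sub_normalize_le hx0 y
      _ ≤ 2 * ‖x - y‖ / r := by gcongr; exact hx
      _ = ↑(2 / r) * ‖x - y‖ := by push_cast; ring

theorem norm_normalize_sub_self {x : V} (hx : x ≠ 0) :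
    ‖NormedSpace.normalize x - x‖ = |1 - ‖x‖| := by
  have hx' : ‖x‖ ≠ 0 := norm_ne_zero_iff.mpr hx
  calc ‖NormedSpace.normalize x - x‖ = |(‖x‖⁻¹ - 1) * ‖x‖| := by
        rw [NormedSpace.normalize, show ‖x‖⁻¹ • x - x = (‖x‖⁻¹ - 1) • x by module, norm_smul,
          Real.norm_eq_abs, abs_mul, abs_norm]
    _ = |1 - ‖x‖| := by rw [sub_one_mul, inv_mul_cancel₀ hx', abs_sub_comm]

end Normalize

theorem norm_add_mem_Icc_of_inner_eq_zero {E : Type*} [NormedAddCommGroup E]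
    [InnerProductSpace ℝ E] {e v : E} (he : ‖e‖ = 1) (hev : ⟪e, v⟫ = 0) :
    ‖e + v‖ ∈ Icc 1 (1 + ‖v‖ ^ 2 / 2) := by
  have hpyth := norm_add_sq_eq_norm_sq_add_norm_sq_real hev
  rw [he] at hpyth
  have h1 : 1 ≤ ‖e + v‖ := by nlinarith [norm_nonneg (e + v), norm_nonneg v]
  exact ⟨h1, by nlinarith⟩

section LipschitzApprox

variable {α : Type*} [PseudoMetricSpace α] {K : Set α}

theorem IsCompact.exists_nonneg_bound_of_continuousOn {E : Type*} [SeminormedAddCommGroup E]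
    (hK : IsCompact K) {f : α → E} (hf : ContinuousOn f K) :
    ∃ C, 0 ≤ C ∧ ∀ x ∈ K, ‖f x‖ ≤ C :=
  let ⟨C, hC⟩ := hK.exists_bound_of_continuousOn hf
  ⟨max C 0, le_max_right _ _, fun x hx => (hC x hx).trans (le_max_left _ _)⟩

theorem IsCompact.exists_lipschitzWith_dist_le_real (hK : IsCompact K) {f : α → ℝ}
    (hf : ContinuousOn f K) {ε : ℝ} (hε : 0 < ε) :
    ∃ L, ∃ g : α → ℝ, LipschitzWith L g ∧ ∀ x ∈ K, dist (g x) (f x) ≤ ε := by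
  rcases K.eq_empty_or_nonempty with rfl | hne
  · exact ⟨0, 0, LipschitzWith.const 0, by simp⟩
  have : Nonempty K := hne.to_subtype
  obtain ⟨M, hM0, hM⟩ := hK.exists_nonneg_bound_of_continuousOn hf
  obtain ⟨η, hη, hfη⟩ :=
    Metric.uniformContinuousOn_iff.mp (hK.uniformContinuousOn_of_continuous hf) ε hε
  set L := 2 * M / η
  have hL : 0 ≤ L := by positivity
  -- the inf-convolution of `f` with `L • dist`, squeezed between `f - ε` and `f` on `K`
  set g : α → ℝ := fun y => ⨅ z : K, f z + L * dist y (z : α)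
  have hbdd : ∀ y : α, BddBelow (range fun z : K => f z + L * dist y (z : α)) := fun y =>
    ⟨-M, by
      rintro _ ⟨z, rfl⟩
      have := neg_le_of_abs_le (hM z z.2)
      dsimp; nlinarith [dist_nonneg (x := y) (y := (z : α))]⟩
  have hg_le : ∀ x ∈ K, g x ≤ f x := fun x hx => by
    simpa using ciInf_le (hbdd x) ⟨x, hx⟩
  have hle_g : ∀ x ∈ K, f x - ε ≤ g x := fun x hx => le_ciInf fun ⟨z, hz⟩ => by
    dsimp
    rcases lt_or_ge (dist x z) η with hd | hd
    · have := (abs_lt.mp (hfη x hx z hz hd)).2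
      nlinarith [dist_nonneg (x := x) (y := z)]
    · have h2M : 2 * M ≤ L * dist x z := by
        rw [div_mul_eq_mul_div, le_div_iff₀ hη]; gcongr
      linarith [abs_le.mp (hM x hx), abs_le.mp (hM z hz)]
  refine ⟨_, g, LipschitzWith.of_le_add_mul' L fun x y => ?_, fun x hx => ?_⟩
  · rw [← sub_le_iff_le_add]
    refine le_ciInf fun z => ?_
    rw [sub_le_iff_le_add]
    calc g x ≤ f z + L * dist x z := ciInf_le (hbdd x) z
      _ ≤ f z + L * dist y z + L * dist x y := by
        rw [add_assoc, ← mul_add, add_comm (dist y z)]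
        gcongr
        exact dist_triangle _ _ _
  · rw [Real.dist_eq, abs_le]
    constructor <;> linarith [hg_le x hx, hle_g x hx]

theorem IsCompact.exists_lipschitzWith_dist_le_pi {ι : Type*} [Fintype ι] (hK : IsCompact K)
    {f : α → ι → ℝ} (hf : ContinuousOn f K) {ε : ℝ} (hε : 0 < ε) :
    ∃ L, ∃ g : α → ι → ℝ, LipschitzWith L g ∧ ∀ x ∈ K, dist (g x) (f x) ≤ ε := by
  choose L g hg hgf using fun i =>
    hK.exists_lipschitzWith_dist_le_real ((continuous_apply i).comp_continuousOn hf) hε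
  refine ⟨Finset.univ.sup L, fun x i => g i x, LipschitzWith.of_dist_le_mul fun x y => ?_,
    fun x hx => (dist_pi_le_iff hε.le).2 fun i => hgf i x hx⟩
  refine (dist_pi_le_iff (by positivity)).2 fun i => ((hg i).dist_le_mul x y).trans ?_
  gcongr
  exact Finset.le_sup (Finset.mem_univ i)

theorem IsCompact.exists_lipschitzWith_dist_le {F : Type*} [NormedAddCommGroup F]
    [NormedSpace ℝ F] [FiniteDimensional ℝ F] (hK : IsCompact K) {f : α → F}
    (hf : ContinuousOn f K) {ε : ℝ} (hε : 0 < ε) :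
    ∃ L, ∃ g : α → F, LipschitzWith L g ∧ ∀ x ∈ K, dist (g x) (f x) ≤ ε := by
  set e := (Module.finBasis ℝ F).equivFunL
  set c := ‖e.symm.toContinuousLinearMap‖₊
  obtain ⟨L, g, hg, hgf⟩ := hK.exists_lipschitzWith_dist_le_pi
    (e.continuous.comp_continuousOn hf) (ε := ε / (c + 1)) (by positivity)
  refine ⟨c * L, e.symm ∘ g, e.symm.lipschitz.comp hg, fun x hx => ?_⟩
  calc dist (e.symm (g x)) (f x) = dist (e.symm (g x)) (e.symm (e (f x))) := by simp
    _ ≤ c * dist (g x) (e (f x)) := e.symm.lipschitz.dist_le_mul _ _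
    _ ≤ c * (ε / (c + 1)) := by gcongr; exact hgf x hx
    _ ≤ ε := by
      rw [mul_div_assoc', div_le_iff₀ (by positivity)]
      nlinarith [c.2]

theorem IsCompact.exists_lipschitzOnWith_norm_eq_one {F : Type*} [NormedAddCommGroup F]
    [NormedSpace ℝ F] [FiniteDimensional ℝ F] (hK : IsCompact K) {f : α → F}
    (hf : ContinuousOn f K) (hf1 : ∀ x ∈ K, 1 ≤ ‖f x‖) {ε : ℝ} (hε : 0 < ε) :
    ∃ a : α → F, (∃ L, LipschitzOnWith L a K) ∧ (∀ x ∈ K, ‖a x‖ = 1) ∧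
      ∀ x ∈ K, ‖a x - f x‖ ≤ ‖f x‖ - 1 + 2 * ε := by
  obtain ⟨L, g, hg, hgf⟩ := hK.exists_lipschitzWith_dist_le hf (lt_min hε one_half_pos)
  have hgf' : ∀ x ∈ K, ‖g x - f x‖ ≤ min ε (1 / 2) := fun x hx =>
    dist_eq_norm (g x) (f x) ▸ hgf x hx
  have hnorm : ∀ x ∈ K, |‖g x‖ - ‖f x‖| ≤ min ε (1 / 2) := fun x hx =>
    (abs_norm_sub_norm_le _ _).trans (hgf' x hx)
  have hg_half : ∀ x ∈ K, ((1 / 2 : ℝ≥0) : ℝ) ≤ ‖g x‖ := fun x hx => by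
    have := abs_le.mp (hnorm x hx)
    push_cast
    linarith [hf1 x hx, min_le_right ε (1 / 2)]
  have hg0 : ∀ x ∈ K, g x ≠ 0 := fun x hx =>
    norm_pos_iff.mp (lt_of_lt_of_le (by norm_num) (hg_half x hx))
  refine ⟨NormedSpace.normalize ∘ g,
    ⟨_, (lipschitzOnWith_normalize (by norm_num)).comp hg.lipschitzOnWith hg_half⟩,
    fun x hx => NormedSpace.norm_normalize_eq_one_iff.mpr (hg0 x hx), fun x hx => ?_⟩
  have := abs_le.mp (hnorm x hx)
  calc ‖NormedSpace.normalize (g x) - f x‖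
      ≤ ‖NormedSpace.normalize (g x) - g x‖ + ‖g x - f x‖ :=
        norm_sub_le_norm_sub_add_norm_sub _ _ _
    _ = |1 - ‖g x‖| + ‖g x - f x‖ := by rw [norm_normalize_sub_self (hg0 x hx)]
    _ ≤ ‖f x‖ - 1 + 2 * ε := by
      have h1 : |1 - ‖g x‖| ≤ ‖f x‖ - 1 + min ε (1 / 2) :=
        abs_le.mpr ⟨by linarith [hf1 x hx], by linarith [hf1 x hx]⟩
      linarith [hgf' x hx, min_le_left ε (1 / 2)]

end LipschitzApprox

section InnerProduct

variable {α : Type*} [PseudoMetricSpace α] {K : Set α}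
  {E : Type*} [NormedAddCommGroup E] [InnerProductSpace ℝ E]

theorem IsCompact.exists_lipschitzOnWith_norm_eq_one_near_add_smul [FiniteDimensional ℝ E]
    (hK : IsCompact K) {b q : α → E} (hb : ContinuousOn b K) (hq : ContinuousOn q K)
    (hb1 : ∀ x ∈ K, ‖b x‖ = 1) (hbq : ∀ x ∈ K, ⟪b x, q x⟫ = 0) {Q : ℝ}
    (hQ : ∀ x ∈ K, ‖q x‖ ≤ Q) {t : ℝ} (ht : 0 < t) :
    ∃ a : α → E, (∃ L, LipschitzOnWith L a K) ∧ (∀ x ∈ K, ‖a x‖ = 1) ∧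
      ∀ x ∈ K, ‖a x - (b x + t • q x)‖ ≤ (Q ^ 2 / 2 + 2) * t ^ 2 := by
  have hmem : ∀ x ∈ K, ‖b x + t • q x‖ ∈ Icc 1 (1 + ‖t • q x‖ ^ 2 / 2) := fun x hx =>
    norm_add_mem_Icc_of_inner_eq_zero (hb1 x hx) (by rw [inner_smul_right, hbq x hx, mul_zero])
  obtain ⟨a, ha_lip, ha1, ha⟩ := hK.exists_lipschitzOnWith_norm_eq_one
    (hb.add (hq.const_smul t)) (fun x hx => (hmem x hx).1) (pow_pos ht 2)
  refine ⟨a, ha_lip, ha1, fun x hx => (ha x hx).trans ?_⟩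
  have hqQ : ‖q x‖ ^ 2 ≤ Q ^ 2 := pow_le_pow_left₀ (norm_nonneg _) (hQ x hx) 2
  have := (hmem x hx).2
  simp only [Pi.add_apply, Pi.smul_apply]
  rw [norm_smul, Real.norm_of_nonneg ht.le, mul_pow] at this
  nlinarith [pow_pos ht 2]

end InnerProduct

section Rates

variable {V : Type*} [NormedAddCommGroup V] [NormedSpace ℝ V] {a b q : V} {t C Q : ℝ}

theorem norm_sub_le_of_norm_sub_add_smul_le (ht : 0 < t) (ht1 : t ≤ 1) (hq : ‖q‖ ≤ Q)
    (h : ‖a - (b + t • q)‖ ≤ C * t ^ 2) : ‖a - b‖ ≤ (Q + C) * t := by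
  have htq : ‖t • q‖ ≤ Q * t := by
    rw [norm_smul, Real.norm_of_nonneg ht.le, mul_comm]; gcongr
  have hC : C * t ^ 2 ≤ C * t := by
    have hC0 : 0 ≤ C := nonneg_of_mul_nonneg_left ((norm_nonneg _).trans h) (by positivity)
    gcongr; nlinarith
  calc ‖a - b‖ = ‖(a - (b + t • q)) + t • q‖ := by congr 1; abel
    _ ≤ ‖a - (b + t • q)‖ + ‖t • q‖ := norm_add_le _ _
    _ ≤ (Q + C) * t := by linarith

theorem norm_div_smul_sub_sub_smul_le_of_norm_sub_add_smul_le (ht : 0 < t)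
    (h : ‖a - (b + t • q)‖ ≤ C * t ^ 2) : ‖(2 / t) • (a - b) - (2 : ℝ) • q‖ ≤ 2 * C * t := by
  calc ‖(2 / t) • (a - b) - (2 : ℝ) • q‖ = 2 / t * ‖a - (b + t • q)‖ := by
        rw [← norm_smul_of_nonneg (by positivity)]
        congr 1
        match_scalars <;> field_simp
    _ ≤ 2 / t * (C * t ^ 2) := by gcongr
    _ = 2 * C * t := by field_simp

end Rates

section Psi

variable {m : ℕ} {p a : EuclideanSpace ℝ (Fin m)} {S : Matrix (Fin m) (Fin m) ℝ}

theorem psi_normalize_eq (hp : p ≠ 0) (ha : ‖a‖ = 1) (d : ℝ) :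
    psi p S (a, 0) (-NormedSpace.normalize p, d) =
      d / 2 * ‖p‖ * ‖a - NormedSpace.normalize p‖ ^ 2 -
        (⟪NormedSpace.normalize p, mv S (a - NormedSpace.normalize p)⟫ +
          ⟪a - NormedSpace.normalize p, mv S (NormedSpace.normalize p)⟫ +
          ⟪a - NormedSpace.normalize p, mv S (a - NormedSpace.normalize p)⟫ / 2) := by
  set n := NormedSpace.normalize p
  have hn : ‖n‖ = 1 := NormedSpace.norm_normalize_eq_one_iff.mpr hp
  have hwn : ⟪a - n, n⟫ = -‖a - n‖ ^ 2 / 2 := by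
    rw [norm_sub_sq_real, ha, hn, inner_sub_left, real_inner_self_eq_norm_sq, hn]; ring
  have hwp : ⟪a - n, p⟫ = -‖p‖ * ‖a - n‖ ^ 2 / 2 := by
    conv_lhs => rw [← NormedSpace.norm_smul_normalize p]
    rw [real_inner_smul_right, hwn]; ring
  have hDinf : Dinf p S = ⟪n, mv S n⟫ := by
    have hp' : ‖p‖ ≠ 0 := norm_ne_zero_iff.mpr hp
    simp only [Dinf, n, NormedSpace.normalize, mv, map_smul, real_inner_smul_left,
      real_inner_smul_right]
    field_simp
  have hsum : a - -n = (a - n) + (2 : ℝ) • n := by module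
  simp only [psi, phi, hfun, hDinf, ← sub_eq_add_neg, hwp, hsum, zero_add]
  simp only [mv, map_add, map_smul, inner_add_left, inner_add_right, real_inner_smul_left,
    real_inner_smul_right]
  ring

theorem abs_psi_normalize_le (hp : p ≠ 0) (ha : ‖a‖ = 1) {d : ℝ} (hd : 0 ≤ d) :
    |psi p S (a, 0) (-NormedSpace.normalize p, d)| ≤
      d / 2 * ‖p‖ * ‖a - NormedSpace.normalize p‖ ^ 2 +
        ‖LinearMap.toContinuousLinearMap (Matrix.toEuclideanLin S)‖ *
          (2 * ‖a - NormedSpace.normalize p‖ + ‖a - NormedSpace.normalize p‖ ^ 2 / 2) := by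
  set T := LinearMap.toContinuousLinearMap (Matrix.toEuclideanLin S)
  have hT : ∀ u v, |⟪u, mv S v⟫| ≤ ‖T‖ * ‖u‖ * ‖v‖ := fun u v =>
    calc |⟪u, mv S v⟫| ≤ ‖u‖ * ‖T v‖ := abs_real_inner_le_norm u (T v)
      _ ≤ ‖u‖ * (‖T‖ * ‖v‖) := by gcongr; exact T.le_opNorm v
      _ = ‖T‖ * ‖u‖ * ‖v‖ := by ring
  have hn : ‖NormedSpace.normalize p‖ = 1 := NormedSpace.norm_normalize_eq_one_iff.mpr hp
  rw [psi_normalize_eq hp ha]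
  have h1 := abs_le.mp (hT (NormedSpace.normalize p) (a - NormedSpace.normalize p))
  have h2 := abs_le.mp (hT (a - NormedSpace.normalize p) (NormedSpace.normalize p))
  have h3 := abs_le.mp (hT (a - NormedSpace.normalize p) (a - NormedSpace.normalize p))
  have hA : 0 ≤ d / 2 * ‖p‖ * ‖a - NormedSpace.normalize p‖ ^ 2 := by positivity
  rw [hn] at h1 h2
  rw [abs_le]
  constructor <;> linarith [h1.1, h1.2, h2.1, h2.2, h3.1, h3.2]

theorem abs_psi_normalize_le_of_norm_sub_le (hp : p ≠ 0) (ha : ‖a‖ = 1) {t R M P : ℝ}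
    (ht : 0 < t) (ht1 : t ≤ 1) (hP : ‖p‖ ≤ P)
    (hM : ‖LinearMap.toContinuousLinearMap (Matrix.toEuclideanLin S)‖ ≤ M)
    (hw : ‖a - NormedSpace.normalize p‖ ≤ R * t) :
    |psi p S (a, 0) (-NormedSpace.normalize p, 2 / t)| ≤
      (P * R ^ 2 + M * (2 * R + R ^ 2 / 2)) * t := by
  have hP0 : 0 ≤ P := (norm_nonneg _).trans hP
  have hw2 : ‖a - NormedSpace.normalize p‖ ^ 2 ≤ R ^ 2 * t ^ 2 := by
    rw [← mul_pow]; exact pow_le_pow_left₀ (norm_nonneg _) hw 2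
  have hw2' : ‖a - NormedSpace.normalize p‖ ^ 2 ≤ R ^ 2 * t :=
    hw2.trans (by gcongr; nlinarith)
  calc |psi p S (a, 0) (-NormedSpace.normalize p, 2 / t)|
      ≤ 2 / t / 2 * ‖p‖ * ‖a - NormedSpace.normalize p‖ ^ 2 +
          ‖LinearMap.toContinuousLinearMap (Matrix.toEuclideanLin S)‖ *
            (2 * ‖a - NormedSpace.normalize p‖ + ‖a - NormedSpace.normalize p‖ ^ 2 / 2) :=
        abs_psi_normalize_le hp ha (by positivity)
    _ ≤ 2 / t / 2 * P * (R ^ 2 * t ^ 2) + M * (2 * (R * t) + R ^ 2 * t / 2) := by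
        have hM0 : 0 ≤ M := (norm_nonneg _).trans hM
        gcongr
    _ = (P * R ^ 2 + M * (2 * R + R ^ 2 / 2)) * t := by field_simp

end Psi

theorem ContDiffOn.continuousOn_hessian_of_hasGradientAt {E : Type*} [NormedAddCommGroup E]
    [InnerProductSpace ℝ E] [CompleteSpace E] {U : Set E} {u : E → ℝ} {Du : E → E}
    {T : E → E →L[ℝ] E} (hu : ContDiffOn ℝ 2 u U) (hU : IsOpen U)
    (hDu : ∀ x ∈ U, HasGradientAt u (Du x) x) (hT : ∀ x ∈ U, HasFDerivAt Du (T x) x) :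
    ContinuousOn T U := by
  have hDu1 : ContDiffOn ℝ 1 Du U :=
    ((InnerProductSpace.toDual ℝ E).symm.contDiff.comp_contDiffOn
      (hu.fderiv_of_isOpen hU (by norm_num))).congr fun x hx => by
        simp [(hDu x hx).hasFDerivAt.fderiv]
  exact (hDu1.continuousOn_fderiv_of_isOpen hU le_rfl).congr fun x hx => ((hT x hx).fderiv).symm

section Qfun

variable {m : ℕ} {Du : EuclideanSpace ℝ (Fin m) → EuclideanSpace ℝ (Fin m)}
  {S : EuclideanSpace ℝ (Fin m) → Matrix (Fin m) (Fin m) ℝ}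

theorem inner_qfun_eq_zero {x : EuclideanSpace ℝ (Fin m)} (hp : Du x ≠ 0) :
    ⟪Du x, qfun Du S x⟫ = 0 := by
  have : ‖Du x‖ ≠ 0 := norm_ne_zero_iff.mpr hp
  simp only [qfun, Dinf, inner_smul_right, inner_sub_right, real_inner_self_eq_norm_sq]
  field_simp
  ring

theorem continuousOn_qfun {K : Set (EuclideanSpace ℝ (Fin m))} (hDu : ContinuousOn Du K)
    (hS : ContinuousOn (fun x => LinearMap.toContinuousLinearMap (Matrix.toEuclideanLin (S x))) K)
    (hp : ∀ x ∈ K, Du x ≠ 0) : ContinuousOn (qfun Du S) K := by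
  have hn : ContinuousOn (fun x => (‖Du x‖ ^ 2)⁻¹) K :=
    (hDu.norm.pow 2).inv₀ fun x hx => pow_ne_zero 2 (norm_ne_zero_iff.mpr (hp x hx))
  have hSDu : ContinuousOn (fun x => mv (S x) (Du x)) K := hS.clm_apply hDu
  exact hn.smul (hSDu.sub ((hn.mul (hDu.inner hSDu)).smul hDu))

end Qfun

theorem tendstoUniformlyOn_nhdsGT_zero_of_dist_le {β γ : Type*} [PseudoMetricSpace γ]
    {F : ℝ → β → γ} {f : β → γ} {s : Set β} (h : ∀ δ > 0, ∀ x ∈ s, dist (f x) (F δ x) ≤ δ) :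
    TendstoUniformlyOn F f (𝓝[>] 0) s :=
  Metric.tendstoUniformlyOn_iff.mpr fun _ hε =>
    eventually_of_mem (Ioo_mem_nhdsGT hε) fun δ hδ x hx => (h δ hδ.1 x hx).trans_lt hδ.2

theorem exists_tendsto_nhdsGT_zero_mul_le_min {B : ℝ} (hB : 0 < B) :
    ∃ t : ℝ → ℝ, Tendsto t (𝓝[>] 0) (𝓝[>] 0) ∧ ∀ δ > 0, 0 < t δ ∧ B * t δ ≤ min δ 1 := by
  refine ⟨fun δ => min δ 1 / B, tendsto_nhdsWithin_iff.mpr ⟨?_, ?_⟩, fun δ hδ =>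
    ⟨div_pos (lt_min hδ one_pos) hB, (mul_div_cancel₀ _ hB.ne').le⟩⟩
  · exact (((continuous_id.min continuous_const).div_const B).tendsto' 0 0 (by simp)).mono_left
      nhdsWithin_le_nhds
  · exact eventually_mem_nhdsWithin.mono fun δ hδ => div_pos (lt_min hδ one_pos) hB

theorem IsCompact.exists_lipschitz_psi_approximants {m : ℕ} {K : Set (EuclideanSpace ℝ (Fin m))}
    (hK : IsCompact K) {Du : EuclideanSpace ℝ (Fin m) → EuclideanSpace ℝ (Fin m)}
    {S : EuclideanSpace ℝ (Fin m) → Matrix (Fin m) (Fin m) ℝ} (hDu : ContinuousOn Du K)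
    (hS : ContinuousOn (fun x => LinearMap.toContinuousLinearMap (Matrix.toEuclideanLin (S x))) K)
    (hp : ∀ x ∈ K, Du x ≠ 0) :
    ∃ dd : ℝ → ℝ, ∃ aa : ℝ → EuclideanSpace ℝ (Fin m) → EuclideanSpace ℝ (Fin m),
      (∀ δ : ℝ, 0 < δ → 0 < dd δ) ∧
      Tendsto dd (𝓝[>] 0) atTop ∧
      (∀ δ : ℝ, 0 < δ → ∃ L : ℝ≥0, LipschitzOnWith L (aa δ) K) ∧
      (∀ δ : ℝ, 0 < δ → ∀ x ∈ K, ‖aa δ x‖ = 1) ∧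
      (∀ δ : ℝ, 0 < δ → ∀ x ∈ K,
        psi (Du x) (S x) (aa δ x, 0) (-NormedSpace.normalize (Du x), dd δ) ∈ Icc (-δ) δ) ∧
      TendstoUniformlyOn aa (fun x => NormedSpace.normalize (Du x)) (𝓝[>] 0) K ∧
      TendstoUniformlyOn (fun δ x => dd δ • (aa δ x - NormedSpace.normalize (Du x)))
        (fun x => (2 : ℝ) • qfun Du S x) (𝓝[>] 0) K := by
  have hb : ContinuousOn (fun x => NormedSpace.normalize (Du x)) K :=
    (hDu.norm.inv₀ fun x hx => norm_ne_zero_iff.mpr (hp x hx)).smul hDu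
  have hq := continuousOn_qfun hDu hS hp
  obtain ⟨P, hP0, hP⟩ := hK.exists_nonneg_bound_of_continuousOn hDu
  obtain ⟨M, hM0, hM⟩ := hK.exists_nonneg_bound_of_continuousOn hS
  obtain ⟨Q, hQ0, hQ⟩ := hK.exists_nonneg_bound_of_continuousOn hq
  choose! a ha_lip ha1 ha using fun t (ht : 0 < t) =>
    hK.exists_lipschitzOnWith_norm_eq_one_near_add_smul hb hq
      (fun x hx => NormedSpace.norm_normalize_eq_one_iff.mpr (hp x hx))
      (fun x hx => by
        rw [NormedSpace.normalize, real_inner_smul_left, inner_qfun_eq_zero (hp x hx), mul_zero])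
      hQ ht
  set C := Q ^ 2 / 2 + 2 with hC
  have hC0 : 0 ≤ C := by rw [hC]; positivity
  obtain ⟨B, hB1, hRB, hCB, hPB⟩ : ∃ B : ℝ, 1 ≤ B ∧ Q + C ≤ B ∧ 2 * C ≤ B ∧
      P * (Q + C) ^ 2 + M * (2 * (Q + C) + (Q + C) ^ 2 / 2) ≤ B := by
    have : 0 ≤ P * (Q + C) ^ 2 + M * (2 * (Q + C) + (Q + C) ^ 2 / 2) := by positivity
    exact ⟨Q + C + 2 * C + (P * (Q + C) ^ 2 + M * (2 * (Q + C) + (Q + C) ^ 2 / 2)) + 1,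
      by linarith, by linarith, by linarith, by linarith⟩
  obtain ⟨t, htend, ht'⟩ := exists_tendsto_nhdsGT_zero_mul_le_min (B := B) (by positivity)
  have ht : ∀ δ > 0, 0 < t δ ∧ t δ ≤ 1 ∧ ∀ X ≤ B, X * t δ ≤ δ := fun δ hδ => by
    obtain ⟨ht0, htB⟩ := ht' δ hδ
    refine ⟨ht0, by nlinarith [min_le_right δ 1], fun X hX => ?_⟩
    nlinarith [mul_le_mul_of_nonneg_right hX ht0.le, min_le_left δ 1]
  have hrates : ∀ δ > 0, ∀ x ∈ K,
      dist (NormedSpace.normalize (Du x)) (a (t δ) x) ≤ δ ∧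
      dist ((2 : ℝ) • qfun Du S x) ((2 / t δ) • (a (t δ) x - NormedSpace.normalize (Du x))) ≤ δ ∧
      |psi (Du x) (S x) (a (t δ) x, 0) (-NormedSpace.normalize (Du x), 2 / t δ)| ≤ δ := by
    intro δ hδ x hx
    obtain ⟨ht0, ht1, htB⟩ := ht δ hδ
    have hnear := ha (t δ) ht0 x hx
    have hR := norm_sub_le_of_norm_sub_add_smul_le ht0 ht1 (hQ x hx) hnear
    rw [dist_eq_norm', dist_eq_norm']
    refine ⟨hR.trans (htB _ hRB),
      (norm_div_smul_sub_sub_smul_le_of_norm_sub_add_smul_le ht0 hnear).trans (htB _ hCB),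
      (abs_psi_normalize_le_of_norm_sub_le (hp x hx) (ha1 _ ht0 x hx) ht0 ht1 (hP x hx) (hM x hx)
        hR).trans (htB _ hPB)⟩
  refine ⟨fun δ => 2 / t δ, fun δ => a (t δ), fun δ hδ => div_pos two_pos (ht δ hδ).1,
    (htend.inv_tendsto_nhdsGT_zero.const_mul_atTop two_pos).congr
      fun δ => (div_eq_mul_inv _ _).symm,
    fun δ hδ => ha_lip _ (ht δ hδ).1, fun δ hδ => ha1 _ (ht δ hδ).1,
    fun δ hδ x hx => abs_le.mp (hrates δ hδ x hx).2.2,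
    tendstoUniformlyOn_nhdsGT_zero_of_dist_le fun δ hδ x hx => (hrates δ hδ x hx).1,
    tendstoUniformlyOn_nhdsGT_zero_of_dist_le fun δ hδ x hx => (hrates δ hδ x hx).2.1⟩

theorem stmt8_general {m : ℕ}
    (G U : Set (EuclideanSpace ℝ (Fin m)))
    (hGbdd : Bornology.IsBounded G) (hUopen : IsOpen U) (hGU : closure G ⊆ U)
    (u : EuclideanSpace ℝ (Fin m) → ℝ) (hu : ContDiffOn ℝ 2 u U)
    (Du : EuclideanSpace ℝ (Fin m) → EuclideanSpace ℝ (Fin m))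
    (hDu : ∀ x ∈ U, HasGradientAt u (Du x) x)
    (S : EuclideanSpace ℝ (Fin m) → Matrix (Fin m) (Fin m) ℝ)
    (hS : ∀ x ∈ U, HasFDerivAt Du
      (LinearMap.toContinuousLinearMap (Matrix.toEuclideanLin (S x))) x)
    (hp : ∀ x ∈ closure G, Du x ≠ 0)
    :
    ∃ dd : ℝ → ℝ, ∃ aa : ℝ → EuclideanSpace ℝ (Fin m) → EuclideanSpace ℝ (Fin m),
      (∀ δ : ℝ, 0 < δ → 0 < dd δ) ∧
      Filter.Tendsto dd (nhdsWithin 0 (Set.Ioi 0)) Filter.atTop ∧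
      (∀ δ : ℝ, 0 < δ → ∃ L : NNReal, LipschitzOnWith L (aa δ) (closure G)) ∧
      (∀ δ : ℝ, 0 < δ → ∀ x ∈ closure G, ‖aa δ x‖ = 1) ∧
      (∀ δ : ℝ, 0 < δ → ∀ x ∈ closure G,
        psi (Du x) (S x) (aa δ x, 0) (-(‖Du x‖⁻¹ • Du x), dd δ) ∈ Set.Icc (-δ) δ) ∧
      TendstoUniformlyOn (fun (δ : ℝ) (x : EuclideanSpace ℝ (Fin m)) => aa δ x)
        (fun x => ‖Du x‖⁻¹ • Du x) (nhdsWithin 0 (Set.Ioi 0)) (closure G) ∧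
      TendstoUniformlyOn
        (fun (δ : ℝ) (x : EuclideanSpace ℝ (Fin m)) => dd δ • (aa δ x - ‖Du x‖⁻¹ • Du x))
        (fun x => (2 : ℝ) • qfun Du S x) (nhdsWithin 0 (Set.Ioi 0)) (closure G) := by
  have hSU := hu.continuousOn_hessian_of_hasGradientAt hUopen hDu hS
  have hDuK : ContinuousOn Du (closure G) := fun x hx =>
    (hS x (hGU hx)).continuousAt.continuousWithinAt
  exact hGbdd.isCompact_closure.exists_lipschitz_psi_approximants hDuK (hSU.mono hGU) hp

/-- Proposition 2.1(ii): for every `δ > 0` there are `d^δ ∈ (0,∞)` with `d^δ → ∞` as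
`δ → 0` and Lipschitz maps `a^δ : Ḡ → S^{m−1}` such that
`ψ(x,(a^δ(x),0),(−p̄(x),d^δ)) ∈ [−δ,δ]` on `Ḡ`, `a^δ → p̄` uniformly on `Ḡ`, and
`d^δ(a^δ − p̄) → 2q` uniformly on `Ḡ`, as `δ → 0`. -/
theorem stmt8 {m : ℕ} (hm : 2 ≤ m)
    (G U : Set (EuclideanSpace ℝ (Fin m))) (hGopen : IsOpen G)
    (hGbdd : Bornology.IsBounded G) (hUopen : IsOpen U) (hGU : closure G ⊆ U)
    (u : EuclideanSpace ℝ (Fin m) → ℝ) (hu : ContDiffOn ℝ 2 u U)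
    (Du : EuclideanSpace ℝ (Fin m) → EuclideanSpace ℝ (Fin m))
    (hDu : ∀ x ∈ U, HasGradientAt u (Du x) x)
    (S : EuclideanSpace ℝ (Fin m) → Matrix (Fin m) (Fin m) ℝ)
    (hSsymm : ∀ x ∈ U, (S x).IsSymm)
    (hS : ∀ x ∈ U, HasFDerivAt Du
      (LinearMap.toContinuousLinearMap (Matrix.toEuclideanLin (S x))) x)
    (hp : ∀ x ∈ closure G, Du x ≠ 0)
    (hh : ∀ x ∈ closure G, hfun (Du x) (S x) ≠ 0)
    :
    ∃ dd : ℝ → ℝ, ∃ aa : ℝ → EuclideanSpace ℝ (Fin m) → EuclideanSpace ℝ (Fin m),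
      (∀ δ : ℝ, 0 < δ → 0 < dd δ) ∧
      Filter.Tendsto dd (nhdsWithin 0 (Set.Ioi 0)) Filter.atTop ∧
      (∀ δ : ℝ, 0 < δ → ∃ L : NNReal, LipschitzOnWith L (aa δ) (closure G)) ∧
      (∀ δ : ℝ, 0 < δ → ∀ x ∈ closure G, ‖aa δ x‖ = 1) ∧
      (∀ δ : ℝ, 0 < δ → ∀ x ∈ closure G,
        psi (Du x) (S x) (aa δ x, 0) (-(‖Du x‖⁻¹ • Du x), dd δ) ∈ Set.Icc (-δ) δ) ∧
      TendstoUniformlyOn (fun (δ : ℝ) (x : EuclideanSpace ℝ (Fin m)) => aa δ x)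
        (fun x => ‖Du x‖⁻¹ • Du x) (nhdsWithin 0 (Set.Ioi 0)) (closure G) ∧
      TendstoUniformlyOn
        (fun (δ : ℝ) (x : EuclideanSpace ℝ (Fin m)) => dd δ • (aa δ x - ‖Du x‖⁻¹ • Du x))
        (fun x => (2 : ℝ) • qfun Du S x) (nhdsWithin 0 (Set.Ioi 0)) (closure G) :=
  stmt8_general G U hGbdd hUopen hGU u hu Du hDu S hS hp

end
end

section
/- Let d_n → ∞ be a sequence in (0,∞), and for each n and each x ∈ K let a_n(x) ∈ S^{m−1} be any minimizer of a ↦ Φ_{d_n}(x,a) over the unit sphere S^{m−1}. Then sup over x ∈ K of |a_n(x) − p̄(x)| → 0 as n → ∞; i.e., the minimizers converge to p̄ uniformly on K. -/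
open scoped RealInnerProductSpace

noncomputable section

/-- `Φ_d(x,a) = −(1/2)(a+p̄(x))ᵀS(x)(a+p̄(x)) + d(1 − a·p̄(x))|p(x)|`, written here with
the data `p = p(x)`, `S = S(x)` as arguments. -/
def PhiFn {m : ℕ} (p : EuclideanSpace ℝ (Fin m)) (S : Matrix (Fin m) (Fin m) ℝ)
    (d : ℝ) (a : EuclideanSpace ℝ (Fin m)) : ℝ :=
  -(1 / 2) * ⟪a + ‖p‖⁻¹ • p, mv S (a + ‖p‖⁻¹ • p)⟫ + d * (1 - ⟪a, ‖p‖⁻¹ • p⟫) * ‖p‖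

open Filter

theorem tendstoUniformlyOn_of_mul_dist_sq_le {ι α β : Type*} [PseudoMetricSpace β]
    {l : Filter ι} {F : ι → α → β} {f : α → β} {s : Set α} {d : ι → ℝ}
    (hd : Tendsto d l atTop) {M : ℝ} (h : ∀ i, ∀ x ∈ s, d i * dist (F i x) (f x) ^ 2 ≤ M) :
    TendstoUniformlyOn F f l s := by
  rw [Metric.tendstoUniformlyOn_iff]
  intro ε hε
  filter_upwards [hd.eventually_gt_atTop 0, hd.eventually_gt_atTop (M / ε ^ 2)]
    with i hi₀ hiM x hx
  have hM : M < d i * ε ^ 2 := (div_lt_iff₀ (by positivity)).1 hiM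
  have hsq : dist (F i x) (f x) ^ 2 < ε ^ 2 := by nlinarith [h i x hx]
  rw [dist_comm]
  exact lt_of_pow_lt_pow_left₀ 2 hε.le hsq

theorem abs_inner_self_map_le {E : Type*} [NormedAddCommGroup E] [InnerProductSpace ℝ E]
    (T : E →L[ℝ] E) (v : E) : |⟪v, T v⟫| ≤ ‖T‖ * ‖v‖ ^ 2 :=
  calc |⟪v, T v⟫| ≤ ‖v‖ * ‖T v‖ := abs_real_inner_le_norm v (T v)
    _ ≤ ‖v‖ * (‖T‖ * ‖v‖) := by gcongr; exact T.le_opNorm v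
    _ = ‖T‖ * ‖v‖ ^ 2 := by ring

/-- Compare with the competitor `p̄`, at which the penalty term vanishes: the penalty
`d (1 - a·p̄) |p| = d |p| |a - p̄|² / 2` of `a` is paid for by the two quadratic terms,
each at most `2 ‖S‖` in absolute value. -/
theorem mul_norm_sub_sq_le_of_PhiFn_le {m : ℕ} {p a : EuclideanSpace ℝ (Fin m)}
    {S : Matrix (Fin m) (Fin m) ℝ} {d : ℝ} (hp : p ≠ 0) (ha : ‖a‖ = 1)
    (h : PhiFn p S d a ≤ PhiFn p S d (‖p‖⁻¹ • p)) :
    d * ‖a - ‖p‖⁻¹ • p‖ ^ 2 ≤ 8 * (‖Matrix.toEuclideanCLM (𝕜 := ℝ) S‖ / ‖p‖) := by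
  set b := ‖p‖⁻¹ • p
  set T := Matrix.toEuclideanCLM (𝕜 := ℝ) S
  have hb : ‖b‖ = 1 := norm_smul_inv_norm hp
  have hp₀ : 0 < ‖p‖ := norm_pos_iff.2 hp
  have hbb : ⟪b, b⟫ = 1 := by rw [real_inner_self_eq_norm_sq, hb, one_pow]
  have hquad : ∀ v, ‖v‖ ≤ 2 → |⟪v, T v⟫| ≤ 4 * ‖T‖ := fun v hv =>
    calc |⟪v, T v⟫| ≤ ‖T‖ * ‖v‖ ^ 2 := abs_inner_self_map_le T v
      _ ≤ ‖T‖ * 2 ^ 2 := by gcongr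
      _ = 4 * ‖T‖ := by ring
  have hqa := abs_le.1 <| hquad (a + b) <| (norm_add_le a b).trans (by rw [ha, hb]; norm_num)
  have hqb := abs_le.1 <| hquad (b + b) <| (norm_add_le b b).trans (by rw [hb]; norm_num)
  have hdist : ‖a - b‖ ^ 2 = 2 * (1 - ⟪a, b⟫) := by rw [norm_sub_sq_real, ha, hb]; ring
  have hpen : d * (1 - ⟪a, b⟫) * ‖p‖ ≤ 4 * ‖T‖ := by
    change -(1 / 2) * ⟪a + b, T (a + b)⟫ + d * (1 - ⟪a, b⟫) * ‖p‖ ≤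
      -(1 / 2) * ⟪b + b, T (b + b)⟫ + d * (1 - ⟪b, b⟫) * ‖p‖ at h
    rw [hbb, sub_self, mul_zero, zero_mul, add_zero] at h
    linarith [hqa.1, hqb.2]
  rw [hdist, mul_div_assoc', le_div_iff₀ hp₀]
  linarith

theorem exists_opNorm_div_norm_le_of_isCompact {m : ℕ} {K : Set (EuclideanSpace ℝ (Fin m))}
    (hK : IsCompact K) {p : EuclideanSpace ℝ (Fin m) → EuclideanSpace ℝ (Fin m)}
    (hpc : ContinuousOn p K) (hp0 : ∀ x ∈ K, p x ≠ 0)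
    {S : EuclideanSpace ℝ (Fin m) → Matrix (Fin m) (Fin m) ℝ} (hSc : ContinuousOn S K) :
    ∃ M, ∀ x ∈ K, ‖Matrix.toEuclideanCLM (𝕜 := ℝ) (S x)‖ / ‖p x‖ ≤ M := by
  have hT : Continuous (Matrix.toEuclideanCLM (𝕜 := ℝ) (n := Fin m)) :=
    LinearMap.continuous_of_finiteDimensional
      (Matrix.toEuclideanCLM (𝕜 := ℝ) (n := Fin m)).toAlgEquiv.toLinearMap
  have hc : ContinuousOn (fun x => ‖Matrix.toEuclideanCLM (𝕜 := ℝ) (S x)‖ / ‖p x‖) K :=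
    (hT.comp_continuousOn hSc).norm.div hpc.norm fun x hx => norm_ne_zero_iff.2 (hp0 x hx)
  obtain ⟨M, hM⟩ := hK.exists_bound_of_continuousOn hc
  exact ⟨M, fun x hx => (Real.le_norm_self _).trans (hM x hx)⟩

theorem stmt9_general {m : ℕ}
    (K : Set (EuclideanSpace ℝ (Fin m))) (hK : IsCompact K)
    (p : EuclideanSpace ℝ (Fin m) → EuclideanSpace ℝ (Fin m)) (hpc : ContinuousOn p K)
    (hp0 : ∀ x ∈ K, p x ≠ 0)
    (S : EuclideanSpace ℝ (Fin m) → Matrix (Fin m) (Fin m) ℝ) (hSc : ContinuousOn S K)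
    (dseq : ℕ → ℝ)
    (hdtop : Filter.Tendsto dseq Filter.atTop Filter.atTop)
    (aseq : ℕ → EuclideanSpace ℝ (Fin m) → EuclideanSpace ℝ (Fin m))
    (haunit : ∀ n, ∀ x ∈ K, ‖aseq n x‖ = 1)
    (hamin : ∀ n, ∀ x ∈ K, ∀ a : EuclideanSpace ℝ (Fin m), ‖a‖ = 1 →
      PhiFn (p x) (S x) (dseq n) (aseq n x) ≤ PhiFn (p x) (S x) (dseq n) a)
    :
    TendstoUniformlyOn (fun (n : ℕ) (x : EuclideanSpace ℝ (Fin m)) => aseq n x)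
      (fun x => ‖p x‖⁻¹ • p x) Filter.atTop K := by
  obtain ⟨M, hM⟩ := exists_opNorm_div_norm_le_of_isCompact hK hpc hp0 hSc
  refine tendstoUniformlyOn_of_mul_dist_sq_le hdtop (M := 8 * M) fun n x hx => ?_
  rw [dist_eq_norm]
  have hmin := hamin n x hx _ (norm_smul_inv_norm (𝕜 := ℝ) (hp0 x hx))
  exact (mul_norm_sub_sq_le_of_PhiFn_le (hp0 x hx) (haunit n x hx) hmin).trans
    (mul_le_mul_of_nonneg_left (hM x hx) (by norm_num))

/-- Minimizers of `Φ_{d_n}(x,·)` over the unit sphere converge to `p̄` uniformly on `K`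
as `d_n → ∞`. -/
theorem stmt9 {m : ℕ} (hm : 2 ≤ m)
    (K : Set (EuclideanSpace ℝ (Fin m))) (hK : IsCompact K) (hKne : K.Nonempty)
    (p : EuclideanSpace ℝ (Fin m) → EuclideanSpace ℝ (Fin m)) (hpc : ContinuousOn p K)
    (hp0 : ∀ x ∈ K, p x ≠ 0)
    (S : EuclideanSpace ℝ (Fin m) → Matrix (Fin m) (Fin m) ℝ) (hSc : ContinuousOn S K)
    (hSsymm : ∀ x ∈ K, (S x).IsSymm)
    (dseq : ℕ → ℝ) (hdpos : ∀ n, 0 < dseq n)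
    (hdtop : Filter.Tendsto dseq Filter.atTop Filter.atTop)
    (aseq : ℕ → EuclideanSpace ℝ (Fin m) → EuclideanSpace ℝ (Fin m))
    (haunit : ∀ n, ∀ x ∈ K, ‖aseq n x‖ = 1)
    (hamin : ∀ n, ∀ x ∈ K, ∀ a : EuclideanSpace ℝ (Fin m), ‖a‖ = 1 →
      PhiFn (p x) (S x) (dseq n) (aseq n x) ≤ PhiFn (p x) (S x) (dseq n) a)
    :
    TendstoUniformlyOn (fun (n : ℕ) (x : EuclideanSpace ℝ (Fin m)) => aseq n x)
      (fun x => ‖p x‖⁻¹ • p x) Filter.atTop K :=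
  stmt9_general K hK p hpc hp0 S hSc dseq hdtop aseq haunit hamin

end
end

section
/- Let d_n → ∞ be a sequence in (0,∞), and for each n and each x ∈ K let a_n(x) ∈ S^{m−1} be any minimizer of a ↦ Φ_{d_n}(x,a) over the unit sphere S^{m−1}. Then sup over x ∈ K of d_n (1 − a_n(x)·p̄(x)) → 0 as n → ∞. -/
open scoped RealInnerProductSpace

noncomputable section

theorem keyIneq {m : ℕ} (S : Matrix (Fin m) (Fin m) ℝ) (p a : EuclideanSpace ℝ (Fin m))
    (hp : p ≠ 0) (d M : ℝ) (hM0 : 0 ≤ M)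
    (hMb : ∀ u, ‖mv S u‖ ≤ M * ‖u‖) (ha1 : ‖a‖ = 1)
    (hmin : PhiFn p S d a ≤ PhiFn p S d (‖p‖⁻¹ • p)) :
    0 ≤ 1 - ⟪a, ‖p‖⁻¹ • p⟫ ∧ 1 - ⟪a, ‖p‖⁻¹ • p⟫ ≤ 2 ∧
      d * (1 - ⟪a, ‖p‖⁻¹ • p⟫) * ‖p‖ ≤
        M * (1 - ⟪a, ‖p‖⁻¹ • p⟫) + 2 * M * Real.sqrt (2 * (1 - ⟪a, ‖p‖⁻¹ • p⟫)) := by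
  set q : EuclideanSpace ℝ (Fin m) := ‖p‖⁻¹ • p with hq
  have hq1 : ‖q‖ = 1 := by
    rw [hq, norm_smul, norm_inv, norm_norm, inv_mul_cancel₀ (norm_ne_zero_iff.mpr hp)]
  have habs : |⟪a, q⟫| ≤ 1 := by
    have := abs_real_inner_le_norm a q
    rwa [ha1, hq1, one_mul] at this
  obtain ⟨hlb, hub⟩ := abs_le.mp habs
  refine ⟨by linarith, by linarith, ?_⟩
  have hqq : ⟪q, q⟫ = 1 := by
    rw [real_inner_self_eq_norm_sq, hq1]; norm_num
  have hadd : ∀ u w : EuclideanSpace ℝ (Fin m), mv S (u + w) = mv S u + mv S w := by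
    intro u w; unfold mv; exact map_add _ _ _
  set v : EuclideanSpace ℝ (Fin m) := a - q with hv
  have hav : a + q = v + (q + q) := by rw [hv]; abel
  have hexp1 : ⟪q + q, mv S (q + q)⟫ = 4 * ⟪q, mv S q⟫ := by
    rw [hadd]
    simp only [inner_add_left, inner_add_right]
    ring
  have hexp2 : ⟪a + q, mv S (a + q)⟫ =
      ⟪v, mv S v⟫ + 2 * ⟪v, mv S q⟫ + 2 * ⟪q, mv S v⟫ + 4 * ⟪q, mv S q⟫ := by
    rw [hav, hadd, hadd]
    simp only [inner_add_left, inner_add_right]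
    ring
  simp only [PhiFn, ← hq] at hmin
  rw [hexp2, hexp1, hqq] at hmin
  have hmain : d * (1 - ⟪a, q⟫) * ‖p‖ ≤
      (1/2) * ⟪v, mv S v⟫ + ⟪v, mv S q⟫ + ⟪q, mv S v⟫ := by linarith
  have hvsq : ‖v‖ ^ 2 = 2 * (1 - ⟪a, q⟫) := by
    rw [hv, @norm_sub_sq_real, ha1, hq1]; ring
  have hvnorm : ‖v‖ = Real.sqrt (2 * (1 - ⟪a, q⟫)) := by
    rw [← hvsq, Real.sqrt_sq (norm_nonneg v)]
  have bd : ∀ u w : EuclideanSpace ℝ (Fin m), ⟪u, mv S w⟫ ≤ ‖u‖ * (M * ‖w‖) := by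
    intro u w
    exact (real_inner_le_norm u (mv S w)).trans
      (mul_le_mul_of_nonneg_left (hMb w) (norm_nonneg u))
  have b1 := bd v v
  have b2 := bd v q
  have b3 := bd q v
  rw [hq1] at b2 b3
  have hvnn : 0 ≤ ‖v‖ := norm_nonneg v
  have hvv : ‖v‖ * ‖v‖ = 2 * (1 - ⟪a, q⟫) := by rw [← hvsq]; ring
  calc d * (1 - ⟪a, q⟫) * ‖p‖ ≤ (1/2) * ⟪v, mv S v⟫ + ⟪v, mv S q⟫ + ⟪q, mv S v⟫ := hmain
    _ ≤ (1/2) * (‖v‖ * (M * ‖v‖)) + ‖v‖ * (M * 1) + 1 * (M * ‖v‖) := by linarith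
    _ = M * (1 - ⟪a, q⟫) + 2 * M * ‖v‖ := by rw [mul_comm] at hvv; nlinarith [hvv]
    _ = M * (1 - ⟪a, q⟫) + 2 * M * Real.sqrt (2 * (1 - ⟪a, q⟫)) := by rw [hvnorm]


theorem arithA (d δ pn M ε : ℝ) (hd : 0 < d) (hδ : 0 < δ) (hpn : δ ≤ pn)
    (hM : 0 ≤ M) (h0 : 0 ≤ ε) (h2 : ε ≤ 2)
    (h3 : d * ε * pn ≤ M * ε + 2 * M * Real.sqrt (2 * ε)) :
    ε ≤ (6 * M / δ) / d := by
  have hsq : Real.sqrt (2 * ε) ≤ 2 := by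
    have h4 : Real.sqrt 4 = 2 := by
      rw [show (4:ℝ) = 2 ^ 2 by norm_num]
      exact Real.sqrt_sq (by norm_num)
    calc Real.sqrt (2 * ε) ≤ Real.sqrt 4 := Real.sqrt_le_sqrt (by linarith)
      _ = 2 := h4
  have hne : d * ε * δ ≤ d * ε * pn :=
    mul_le_mul_of_nonneg_left hpn (mul_nonneg hd.le h0)
  have h6 : d * ε * δ ≤ 6 * M := by nlinarith
  rw [div_div, le_div_iff₀ (by positivity)]
  nlinarith

theorem arithB (d δ pn M C ε : ℝ) (hd : 0 < d) (hδ : 0 < δ) (hpn : δ ≤ pn)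
    (hM : 0 ≤ M) (h0 : 0 ≤ ε) (hε : ε ≤ C / d)
    (h3 : d * ε * pn ≤ M * ε + 2 * M * Real.sqrt (2 * ε)) :
    d * ε ≤ (M * (C / d) + 2 * M * Real.sqrt (2 * (C / d))) / δ := by
  have hsqle : Real.sqrt (2 * ε) ≤ Real.sqrt (2 * (C / d)) :=
    Real.sqrt_le_sqrt (by linarith)
  have hne : d * ε * δ ≤ d * ε * pn :=
    mul_le_mul_of_nonneg_left hpn (mul_nonneg hd.le h0)
  have h4 : M * ε ≤ M * (C / d) := mul_le_mul_of_nonneg_left hε hM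
  have h5 : 2 * M * Real.sqrt (2 * ε) ≤ 2 * M * Real.sqrt (2 * (C / d)) :=
    mul_le_mul_of_nonneg_left hsqle (by linarith)
  rw [le_div_iff₀ hδ]
  linarith

/-- `sup_{x ∈ K} d_n (1 − a_n(x)·p̄(x)) → 0` as `n → ∞`. -/
theorem stmt10 {m : ℕ} (hm : 2 ≤ m)
    (K : Set (EuclideanSpace ℝ (Fin m))) (hK : IsCompact K) (hKne : K.Nonempty)
    (p : EuclideanSpace ℝ (Fin m) → EuclideanSpace ℝ (Fin m)) (hpc : ContinuousOn p K)
    (hp0 : ∀ x ∈ K, p x ≠ 0)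
    (S : EuclideanSpace ℝ (Fin m) → Matrix (Fin m) (Fin m) ℝ) (hSc : ContinuousOn S K)
    (hSsymm : ∀ x ∈ K, (S x).IsSymm)
    (dseq : ℕ → ℝ) (hdpos : ∀ n, 0 < dseq n)
    (hdtop : Filter.Tendsto dseq Filter.atTop Filter.atTop)
    (aseq : ℕ → EuclideanSpace ℝ (Fin m) → EuclideanSpace ℝ (Fin m))
    (haunit : ∀ n, ∀ x ∈ K, ‖aseq n x‖ = 1)
    (hamin : ∀ n, ∀ x ∈ K, ∀ a : EuclideanSpace ℝ (Fin m), ‖a‖ = 1 →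
      PhiFn (p x) (S x) (dseq n) (aseq n x) ≤ PhiFn (p x) (S x) (dseq n) a)
    :
    TendstoUniformlyOn
      (fun (n : ℕ) (x : EuclideanSpace ℝ (Fin m)) => dseq n * (1 - ⟪aseq n x, ‖p x‖⁻¹ • p x⟫))
      (fun _ => 0) Filter.atTop K := by
  -- lower bound on ‖p x‖
  obtain ⟨x₀, hx₀K, hx₀min⟩ := hK.exists_isMinOn hKne hpc.norm
  set δ : ℝ := ‖p x₀‖ with hδdef
  have hδpos : 0 < δ := norm_pos_iff.mpr (hp0 x₀ hx₀K)
  have hδle : ∀ x ∈ K, δ ≤ ‖p x‖ := fun x hx => hx₀min hx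
  -- uniform bound on the operator norm of S
  set L : Matrix (Fin m) (Fin m) ℝ →ₗ[ℝ]
      (EuclideanSpace ℝ (Fin m) →L[ℝ] EuclideanSpace ℝ (Fin m)) :=
    (LinearMap.toContinuousLinearMap.toLinearMap).comp (Matrix.toEuclideanLin.toLinearMap)
    with hLdef
  have hLcont : Continuous L := L.continuous_of_finiteDimensional
  obtain ⟨C0, hC0⟩ := hK.exists_bound_of_continuousOn (hLcont.comp_continuousOn hSc)
  set M : ℝ := max C0 0 with hMdef
  have hM0 : 0 ≤ M := le_max_right _ _
  have hMb : ∀ x ∈ K, ∀ u, ‖mv (S x) u‖ ≤ M * ‖u‖ := by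
    intro x hx u
    have h1 : ‖L (S x) u‖ ≤ ‖L (S x)‖ * ‖u‖ := (L (S x)).le_opNorm u
    have h2 : ‖L (S x)‖ ≤ M := le_trans (hC0 x hx) (le_max_left _ _)
    have he : mv (S x) u = L (S x) u := rfl
    rw [he]
    exact h1.trans (mul_le_mul_of_nonneg_right h2 (norm_nonneg u))
  clear hC0 hLcont hLdef
  clear_value M
  clear L
  clear_value δ
  -- key per-point inequality
  have key : ∀ n, ∀ x ∈ K,
      0 ≤ 1 - ⟪aseq n x, ‖p x‖⁻¹ • p x⟫ ∧ 1 - ⟪aseq n x, ‖p x‖⁻¹ • p x⟫ ≤ 2 ∧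
      dseq n * (1 - ⟪aseq n x, ‖p x‖⁻¹ • p x⟫) * ‖p x‖ ≤
        M * (1 - ⟪aseq n x, ‖p x‖⁻¹ • p x⟫) +
          2 * M * Real.sqrt (2 * (1 - ⟪aseq n x, ‖p x‖⁻¹ • p x⟫)) := by
    intro n x hx
    have hqu : ‖(‖p x‖⁻¹ • p x : EuclideanSpace ℝ (Fin m))‖ = 1 := by
      rw [norm_smul, norm_inv, norm_norm,
        inv_mul_cancel₀ (norm_ne_zero_iff.mpr (hp0 x hx))]
    exact keyIneq (S x) (p x) (aseq n x) (hp0 x hx) (dseq n) M hM0 (hMb x hx)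
      (haunit n x hx) (hamin n x hx _ hqu)
  -- step A: uniform bound
  set C : ℝ := 6 * M / δ with hCdef
  have hCnn : 0 ≤ C := div_nonneg (by linarith) hδpos.le
  clear_value C
  have hεle : ∀ n, ∀ x ∈ K, 1 - ⟪aseq n x, ‖p x‖⁻¹ • p x⟫ ≤ C / dseq n := by
    intro n x hx
    obtain ⟨h0, h2, h3⟩ := key n x hx
    rw [hCdef]
    exact arithA (dseq n) δ ‖p x‖ M _ (hdpos n) hδpos (hδle x hx) hM0 h0 h2 h3
  -- step B: final bound
  have hfinal : ∀ n, ∀ x ∈ K,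
      dseq n * (1 - ⟪aseq n x, ‖p x‖⁻¹ • p x⟫) ≤
        (M * (C / dseq n) + 2 * M * Real.sqrt (2 * (C / dseq n))) / δ := by
    intro n x hx
    obtain ⟨h0, h2, h3⟩ := key n x hx
    exact arithB (dseq n) δ ‖p x‖ M C _ (hdpos n) hδpos (hδle x hx) hM0 h0
      (hεle n x hx) h3
  have hbnn : Filter.Tendsto
      (fun n => (M * (C / dseq n) + 2 * M * Real.sqrt (2 * (C / dseq n))) / δ)
      Filter.atTop (nhds 0) := by
    have h1 : Filter.Tendsto (fun n => C / dseq n) Filter.atTop (nhds 0) :=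
      Filter.Tendsto.div_atTop tendsto_const_nhds hdtop
    have h1' : Filter.Tendsto (fun n => 2 * (C / dseq n)) Filter.atTop (nhds 0) := by
      simpa using h1.const_mul 2
    have h2 : Filter.Tendsto (fun n => Real.sqrt (2 * (C / dseq n)))
        Filter.atTop (nhds 0) := by
      have := (Real.continuous_sqrt.tendsto 0).comp h1'
      simpa only [Function.comp_def, Real.sqrt_zero] using this
    have h3 := ((h1.const_mul M).add (h2.const_mul (2 * M))).div_const δ
    rw [show (0:ℝ) = (M * 0 + 2 * M * 0) / δ by simp]
    exact h3
  rw [Metric.tendstoUniformlyOn_iff]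
  intro ρ hρ
  have hev : ∀ᶠ n in Filter.atTop,
      (M * (C / dseq n) + 2 * M * Real.sqrt (2 * (C / dseq n))) / δ < ρ :=
    hbnn.eventually (gt_mem_nhds hρ)
  filter_upwards [hev] with n hn x hx
  have h0 : 0 ≤ dseq n * (1 - ⟪aseq n x, ‖p x‖⁻¹ • p x⟫) :=
    mul_nonneg (hdpos n).le (key n x hx).1
  have hlt := (hfinal n x hx).trans_lt hn
  simp only [Real.dist_eq]
  rw [abs_sub_comm, sub_zero, abs_of_nonneg h0]
  exact hlt


end
end

section
/- Let d_n → ∞ be a sequence in (0,∞), and for each n and each x ∈ K let a_n(x) ∈ S^{m−1} be any minimizer of a ↦ Φ_{d_n}(x,a) over the unit sphere S^{m−1}. Then sup over x ∈ K of |d_n(a_n(x) − p̄(x)) − 2q(x)| → 0 as n → ∞, where q(x) = |p(x)|^{−1}(S(x)p̄(x) − (p̄(x)ᵀS(x)p̄(x)) p̄(x)). -/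
/-!
Write `u = p̄(x)`, `D = d |p(x)|`, `v = S u - (uᵀ S u) u` (so that `2 q = 2 v / |p|`) and
`β = a - u`. On the sphere `1 - a·u = |β|² / 2`, and completing the square gives
`2 D Φ_d(a) = |D β - 2 v|² + D (2 (uᵀ S u) |β|² - βᵀ S β) + const`.
Comparing a minimizer with `a = u` gives `D |β| ≤ 6 ‖S‖`; comparing it with the unit vector
nearest to `u + 2 v / D`, which lies within `O(D⁻²)` of that point because `v ⊥ u`, gives
`D |D β - 2 v|² = O(‖S‖³ + ‖S‖⁴)`. Hence `|d (a - p̄) - 2 q| = |D β - 2 v| / |p| = O(D^(-1/2))`,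
uniformly on `K`, where `‖S‖` is bounded and `|p|` is bounded away from `0`.
-/

open scoped RealInnerProductSpace

noncomputable section

/-- `q(x) = |p(x)|⁻¹ (S(x)p̄(x) − (p̄(x)ᵀS(x)p̄(x)) p̄(x))`. -/
def qq {m : ℕ} (p : EuclideanSpace ℝ (Fin m)) (S : Matrix (Fin m) (Fin m) ℝ) :
    EuclideanSpace ℝ (Fin m) :=
  ‖p‖⁻¹ • (mv S (‖p‖⁻¹ • p) - ⟪‖p‖⁻¹ • p, mv S (‖p‖⁻¹ • p)⟫ • (‖p‖⁻¹ • p))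

section SphereEnergy

variable {E : Type*} [NormedAddCommGroup E] [InnerProductSpace ℝ E]

def sphereEnergy (T : E →L[ℝ] E) (u : E) (D : ℝ) (a : E) : ℝ :=
  -(1 / 2) * ⟪a + u, T (a + u)⟫ + D * (1 - ⟪a, u⟫)

def tangentialPart (T : E →L[ℝ] E) (u : E) : E := T u - ⟪u, T u⟫ • u

variable {T : E →L[ℝ] E} {u a b w : E} {D : ℝ}

lemma abs_inner_apply_le (T : E →L[ℝ] E) (x y : E) : |⟪x, T y⟫| ≤ ‖T‖ * ‖x‖ * ‖y‖ :=
  calc |⟪x, T y⟫| ≤ ‖x‖ * ‖T y‖ := abs_real_inner_le_norm _ _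
    _ ≤ ‖x‖ * (‖T‖ * ‖y‖) := by gcongr; exact T.le_opNorm y
    _ = ‖T‖ * ‖x‖ * ‖y‖ := by ring

lemma one_sub_inner_eq_half_norm_sub_sq (ha : ‖a‖ = 1) (hu : ‖u‖ = 1) :
    1 - ⟪a, u⟫ = ‖a - u‖ ^ 2 / 2 := by
  rw [norm_sub_sq_real, ha, hu]; ring

lemma inner_tangentialPart_self (hu : ‖u‖ = 1) : ⟪tangentialPart T u, u⟫ = 0 := by
  rw [tangentialPart, inner_sub_left, real_inner_smul_left, real_inner_self_eq_norm_sq, hu,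
    real_inner_comm]
  ring

lemma norm_tangentialPart_le (hu : ‖u‖ = 1) : ‖tangentialPart T u‖ ≤ ‖T‖ := by
  have hpyth : ‖T u‖ ^ 2 = ‖tangentialPart T u‖ ^ 2 + ‖⟪u, T u⟫ • u‖ ^ 2 := by
    conv_lhs => rw [← sub_add_cancel (T u) (⟪u, T u⟫ • u)]
    rw [norm_add_sq_real, ← tangentialPart, real_inner_smul_right,
      inner_tangentialPart_self hu]
    ring
  have hTu : ‖T u‖ ≤ ‖T‖ := by simpa [hu] using T.le_opNorm u
  nlinarith [norm_nonneg (tangentialPart T u), norm_nonneg (T u), sq_nonneg ‖⟪u, T u⟫ • u‖]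

lemma exists_norm_eq_one_near_add_of_inner_eq_zero (hu : ‖u‖ = 1) (hw : ⟪w, u⟫ = 0) :
    ∃ b : E, ‖b‖ = 1 ∧ ‖b - u‖ ≤ ‖w‖ ∧ ‖b - (u + w)‖ ≤ ‖w‖ ^ 2 / 2 := by
  set r := ‖u + w‖ with hr
  have hr2 : r ^ 2 = 1 + ‖w‖ ^ 2 := by
    rw [hr, norm_add_sq_real, real_inner_comm, hw, hu]; ring
  have hr1 : 1 ≤ r := by nlinarith [norm_nonneg (u + w), sq_nonneg ‖w‖]
  have hr0 : 0 < r := by linarith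
  have hne : u + w ≠ 0 := norm_pos_iff.1 hr0
  have hb : ‖r⁻¹ • (u + w)‖ = 1 := norm_smul_inv_norm hne
  refine ⟨r⁻¹ • (u + w), hb, ?_, ?_⟩
  · have hsq : ‖r⁻¹ • (u + w) - u‖ ^ 2 = 2 - 2 / r := by
      rw [norm_sub_sq_real, hb, real_inner_smul_left, inner_add_left,
        real_inner_self_eq_norm_sq, hw, hu]
      field_simp
      ring
    have hle : 2 - 2 / r ≤ ‖w‖ ^ 2 := by
      have hsub : 2 - 2 / r = (2 * r - 2) / r := by field_simp
      rw [hsub, div_le_iff₀ hr0]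
      nlinarith [mul_nonneg (sq_nonneg (r - 1)) (by linarith : (0 : ℝ) ≤ r + 2)]
    exact (sq_le_sq₀ (norm_nonneg _) (norm_nonneg _)).1 (hsq ▸ hle)
  · have hdist : ‖r⁻¹ • (u + w) - (u + w)‖ = r - 1 := by
      rw [← one_smul ℝ (u + w), smul_smul, mul_one, ← sub_smul, norm_smul, ← hr, Real.norm_eq_abs,
        abs_of_nonpos (by rw [sub_nonpos]; exact inv_le_one_of_one_le₀ hr1)]
      field_simp
      ring
    rw [hdist]
    nlinarith [sq_nonneg (r - 1)]

lemma abs_two_mul_inner_mul_norm_sq_sub_inner_le (hu : ‖u‖ = 1) (x : E) :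
    |2 * ⟪u, T u⟫ * ‖x‖ ^ 2 - ⟪x, T x⟫| ≤ 3 * ‖T‖ * ‖x‖ ^ 2 := by
  have hc := abs_inner_apply_le T u u
  have hx := abs_inner_apply_le T x x
  rw [hu] at hc
  obtain ⟨hc₁, hc₂⟩ := abs_le.1 hc
  obtain ⟨hx₁, hx₂⟩ := abs_le.1 hx
  have hx2 := sq_nonneg ‖x‖
  rw [abs_le]
  constructor <;> nlinarith

variable (hT : (T : E →ₗ[ℝ] E).IsSymmetric) (hu : ‖u‖ = 1)
include hT hu

lemma sphereEnergy_eq (ha : ‖a‖ = 1) :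
    sphereEnergy T u D a = -2 * ⟪u, T u⟫ - 2 * ⟪T u, a - u⟫ - 1 / 2 * ⟪a - u, T (a - u)⟫
      + D / 2 * ‖a - u‖ ^ 2 := by
  have hsymm : ⟪a - u, T u⟫ = ⟪T u, a - u⟫ := real_inner_comm _ _
  have hsymm' : ⟪u, T (a - u)⟫ = ⟪T u, a - u⟫ := (hT u (a - u)).symm
  have hsplit : a + u = (a - u) + (2 : ℝ) • u := by module
  rw [sphereEnergy, one_sub_inner_eq_half_norm_sub_sq ha hu, hsplit, map_add, map_smul]
  simp only [inner_add_left, inner_add_right, real_inner_smul_left, real_inner_smul_right,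
    hsymm, hsymm']
  ring

lemma two_mul_mul_sphereEnergy_eq (ha : ‖a‖ = 1) :
    2 * D * sphereEnergy T u D a = ‖D • (a - u) - (2 : ℝ) • tangentialPart T u‖ ^ 2
      - 4 * ‖tangentialPart T u‖ ^ 2 - 4 * D * ⟪u, T u⟫
      + D * (2 * ⟪u, T u⟫ * ‖a - u‖ ^ 2 - ⟪a - u, T (a - u)⟫) := by
  have hTu : ⟪T u, a - u⟫ = ⟪tangentialPart T u, a - u⟫ - ⟪u, T u⟫ * ‖a - u‖ ^ 2 / 2 := by
    have hua : ⟪u, a - u⟫ = -(‖a - u‖ ^ 2 / 2) := by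
      rw [← one_sub_inner_eq_half_norm_sub_sq ha hu, inner_sub_right,
        real_inner_self_eq_norm_sq, hu, real_inner_comm]
      ring
    rw [tangentialPart, inner_sub_left, real_inner_smul_left, hua]
    ring
  rw [sphereEnergy_eq hT hu ha, hTu, norm_sub_sq_real (D • (a - u)), norm_smul, norm_smul,
    real_inner_smul_left, real_inner_smul_right, Real.norm_eq_abs, Real.norm_eq_abs,
    real_inner_comm (a - u), abs_two, mul_pow, mul_pow, sq_abs]
  ring

lemma mul_norm_sub_le_of_isMinOn (ha : ‖a‖ = 1)
    (hmin : IsMinOn (sphereEnergy T u D) (Metric.sphere 0 1) a) :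
    D * ‖a - u‖ ≤ 6 * ‖T‖ := by
  have hle := isMinOn_iff.1 hmin u (mem_sphere_zero_iff_norm.2 hu)
  rw [sphereEnergy_eq hT hu ha, sphereEnergy_eq hT hu hu] at hle
  simp only [sub_self, map_zero, inner_zero_right, norm_zero] at hle
  have hlin := abs_inner_apply_le T (a - u) u
  have hquad := abs_inner_apply_le T (a - u) (a - u)
  rw [hu, real_inner_comm] at hlin
  have hβ : ‖a - u‖ ≤ 2 := by
    linarith [norm_sub_le a u]
  obtain ⟨-, hlin⟩ := abs_le.1 hlin
  obtain ⟨-, hquad⟩ := abs_le.1 hquad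
  have hM := norm_nonneg T
  rcases (norm_nonneg (a - u)).eq_or_lt with h0 | hpos
  · rw [← h0]; linarith
  · have hsq : D * ‖a - u‖ * ‖a - u‖ ≤ 6 * ‖T‖ * ‖a - u‖ := by
      nlinarith [mul_le_mul_of_nonneg_left hβ (mul_nonneg hM hpos.le)]
    exact le_of_mul_le_mul_right hsq hpos

lemma norm_sq_le_of_isMinOn (hD : 0 < D) (ha : ‖a‖ = 1)
    (hmin : IsMinOn (sphereEnergy T u D) (Metric.sphere 0 1) a) (hb : ‖b‖ = 1) :
    ‖D • (a - u) - (2 : ℝ) • tangentialPart T u‖ ^ 2 ≤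
      ‖D • (b - u) - (2 : ℝ) • tangentialPart T u‖ ^ 2
        + 3 * D * ‖T‖ * (‖a - u‖ ^ 2 + ‖b - u‖ ^ 2) := by
  have hle := isMinOn_iff.1 hmin b (mem_sphere_zero_iff_norm.2 hb)
  have hab := mul_le_mul_of_nonneg_left hle (by positivity : 0 ≤ 2 * D)
  rw [two_mul_mul_sphereEnergy_eq hT hu ha, two_mul_mul_sphereEnergy_eq hT hu hb] at hab
  have hRa := abs_le.1 (abs_two_mul_inner_mul_norm_sq_sub_inner_le (T := T) hu (a - u))
  have hRb := abs_le.1 (abs_two_mul_inner_mul_norm_sq_sub_inner_le (T := T) hu (b - u))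
  nlinarith [hRa.1, hRb.2]

lemma mul_norm_sq_le_of_isMinOn (hD : 1 ≤ D) (ha : ‖a‖ = 1)
    (hmin : IsMinOn (sphereEnergy T u D) (Metric.sphere 0 1) a) :
    D * ‖D • (a - u) - (2 : ℝ) • tangentialPart T u‖ ^ 2 ≤ 4 * ‖T‖ ^ 4 + 120 * ‖T‖ ^ 3 := by
  set v := tangentialPart T u
  set M := ‖T‖
  have hD0 : 0 < D := by linarith
  have hv : ‖v‖ ≤ M := norm_tangentialPart_le hu
  have hw : ⟪(2 / D) • v, u⟫ = 0 := by
    rw [real_inner_smul_left, inner_tangentialPart_self hu, mul_zero]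
  have hDw : D * ‖(2 / D) • v‖ = 2 * ‖v‖ := by
    rw [norm_smul, Real.norm_of_nonneg (by positivity)]; field_simp
  obtain ⟨b, hb, hbu, hbw⟩ := exists_norm_eq_one_near_add_of_inner_eq_zero hu hw
  have hcomp := norm_sq_le_of_isMinOn hT hu hD0 ha hmin hb
  have hbv : ‖D • (b - u) - (2 : ℝ) • v‖ ≤ 2 * ‖v‖ ^ 2 / D := by
    have hsplit : D • (b - u) - (2 : ℝ) • v = D • (b - (u + (2 / D) • v)) := by
      rw [smul_sub D b (u + _), smul_add, smul_smul, mul_div_cancel₀ _ hD0.ne', smul_sub]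
      abel
    rw [hsplit, norm_smul, Real.norm_of_nonneg hD0.le]
    calc D * ‖b - (u + (2 / D) • v)‖ ≤ D * (‖(2 / D) • v‖ ^ 2 / 2) := by gcongr
      _ = (D * ‖(2 / D) • v‖) ^ 2 / (2 * D) := by field_simp
      _ = 2 * ‖v‖ ^ 2 / D := by rw [hDw]; field_simp
  have hau : D * ‖a - u‖ ≤ 6 * M := mul_norm_sub_le_of_isMinOn hT hu ha hmin
  have hDbu : D * ‖b - u‖ ≤ 2 * M := by
    calc D * ‖b - u‖ ≤ D * ‖(2 / D) • v‖ := by gcongr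
      _ ≤ 2 * M := by rw [hDw]; linarith
  have hM : 0 ≤ M := norm_nonneg T
  calc D * ‖D • (a - u) - (2 : ℝ) • v‖ ^ 2
      ≤ D * ‖D • (b - u) - (2 : ℝ) • v‖ ^ 2
          + 3 * M * ((D * ‖a - u‖) ^ 2 + (D * ‖b - u‖) ^ 2) := by nlinarith
    _ ≤ D * (2 * ‖v‖ ^ 2 / D) ^ 2 + 3 * M * ((6 * M) ^ 2 + (2 * M) ^ 2) := by
        gcongr
    _ = 4 * ‖v‖ ^ 4 / D + 120 * M ^ 3 := by field_simp; ring
    _ ≤ 4 * ‖v‖ ^ 4 + 120 * M ^ 3 := by gcongr; exact div_le_self (by positivity) hD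
    _ ≤ 4 * M ^ 4 + 120 * M ^ 3 := by gcongr

end SphereEnergy

section Euclidean

variable {m : ℕ}

lemma mv_eq_toEuclideanCLM (S : Matrix (Fin m) (Fin m) ℝ) (v : EuclideanSpace ℝ (Fin m)) :
    mv S v = Matrix.toEuclideanCLM (𝕜 := ℝ) S v :=
  rfl

lemma isSymmetric_toEuclideanCLM {S : Matrix (Fin m) (Fin m) ℝ} (hS : S.IsSymm) :
    ((Matrix.toEuclideanCLM (𝕜 := ℝ) S : EuclideanSpace ℝ (Fin m) →L[ℝ] _) :
      EuclideanSpace ℝ (Fin m) →ₗ[ℝ] _).IsSymmetric := by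
  rw [Matrix.coe_toEuclideanCLM_eq_toEuclideanLin, Matrix.isSymmetric_toEuclideanLin_iff,
    Matrix.IsHermitian, Matrix.conjTranspose_eq_transpose_of_trivial]
  exact hS

lemma PhiFn_eq_sphereEnergy (p : EuclideanSpace ℝ (Fin m)) (S : Matrix (Fin m) (Fin m) ℝ)
    (d : ℝ) (a : EuclideanSpace ℝ (Fin m)) :
    PhiFn p S d a = sphereEnergy (Matrix.toEuclideanCLM (𝕜 := ℝ) S) (‖p‖⁻¹ • p) (d * ‖p‖) a := by
  simp only [PhiFn, sphereEnergy, mv_eq_toEuclideanCLM]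
  ring

lemma qq_eq_smul_tangentialPart (p : EuclideanSpace ℝ (Fin m)) (S : Matrix (Fin m) (Fin m) ℝ) :
    qq p S = ‖p‖⁻¹ • tangentialPart (Matrix.toEuclideanCLM (𝕜 := ℝ) S) (‖p‖⁻¹ • p) :=
  rfl

lemma sq_norm_smul_sub_qq_le {p a : EuclideanSpace ℝ (Fin m)} {S : Matrix (Fin m) (Fin m) ℝ}
    {d ρ M : ℝ} (hS : S.IsSymm) (hρ : 0 < ρ) (hpρ : ρ ≤ ‖p‖)
    (hSM : ‖Matrix.toEuclideanCLM (𝕜 := ℝ) S‖ ≤ M) (hdρ : 1 ≤ d * ρ) (ha : ‖a‖ = 1)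
    (hmin : ∀ b : EuclideanSpace ℝ (Fin m), ‖b‖ = 1 → PhiFn p S d a ≤ PhiFn p S d b) :
    ‖d • (a - ‖p‖⁻¹ • p) - (2 : ℝ) • qq p S‖ ^ 2 ≤ (4 * M ^ 4 + 120 * M ^ 3) / (d * ρ ^ 3) := by
  set T := Matrix.toEuclideanCLM (𝕜 := ℝ) S
  set u := ‖p‖⁻¹ • p
  set X := ‖(d * ‖p‖) • (a - u) - (2 : ℝ) • tangentialPart T u‖
  have hp : 0 < ‖p‖ := hρ.trans_le hpρ
  have hd : 0 < d := pos_of_mul_pos_left (one_pos.trans_le hdρ) hρ.le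
  have hu : ‖u‖ = 1 := norm_smul_inv_norm (norm_pos_iff.1 hp)
  have hD : 1 ≤ d * ‖p‖ := hdρ.trans (by gcongr)
  have hmin' : IsMinOn (sphereEnergy T u (d * ‖p‖)) (Metric.sphere 0 1) a :=
    isMinOn_iff.2 fun b hb ↦ by
      simpa only [PhiFn_eq_sphereEnergy] using hmin b (mem_sphere_zero_iff_norm.1 hb)
  have hX : d * ‖p‖ * X ^ 2 ≤ 4 * M ^ 4 + 120 * M ^ 3 :=
    (mul_norm_sq_le_of_isMinOn (isSymmetric_toEuclideanCLM hS) hu hD ha hmin').trans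
      (by gcongr)
  have hvec : d • (a - u) - (2 : ℝ) • qq p S
      = ‖p‖⁻¹ • ((d * ‖p‖) • (a - u) - (2 : ℝ) • tangentialPart T u) := by
    have hcancel : ‖p‖⁻¹ * (d * ‖p‖) = d := by field_simp
    simp only [qq_eq_smul_tangentialPart, smul_sub, smul_smul, hcancel, mul_comm (2 : ℝ)]
    rfl
  calc ‖d • (a - u) - (2 : ℝ) • qq p S‖ ^ 2 = X ^ 2 / ‖p‖ ^ 2 := by
        rw [hvec, norm_smul, norm_inv, norm_norm, mul_pow, inv_pow, inv_mul_eq_div]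
    _ ≤ (4 * M ^ 4 + 120 * M ^ 3) / (d * ‖p‖) / ‖p‖ ^ 2 := by
        gcongr
        rw [le_div_iff₀ (by positivity), mul_comm]
        exact hX
    _ = (4 * M ^ 4 + 120 * M ^ 3) / (d * ‖p‖ ^ 3) := by field_simp
    _ ≤ (4 * M ^ 4 + 120 * M ^ 3) / (d * ρ ^ 3) := by
        have hM : 0 ≤ M := (norm_nonneg T).trans hSM
        gcongr

end Euclidean

theorem stmt11_general {m : ℕ}
    (K : Set (EuclideanSpace ℝ (Fin m))) (hK : IsCompact K)
    (p : EuclideanSpace ℝ (Fin m) → EuclideanSpace ℝ (Fin m)) (hpc : ContinuousOn p K)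
    (hp0 : ∀ x ∈ K, p x ≠ 0)
    (S : EuclideanSpace ℝ (Fin m) → Matrix (Fin m) (Fin m) ℝ) (hSc : ContinuousOn S K)
    (hSsymm : ∀ x ∈ K, (S x).IsSymm)
    (dseq : ℕ → ℝ)
    (hdtop : Filter.Tendsto dseq Filter.atTop Filter.atTop)
    (aseq : ℕ → EuclideanSpace ℝ (Fin m) → EuclideanSpace ℝ (Fin m))
    (haunit : ∀ n, ∀ x ∈ K, ‖aseq n x‖ = 1)
    (hamin : ∀ n, ∀ x ∈ K, ∀ a : EuclideanSpace ℝ (Fin m), ‖a‖ = 1 →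
      PhiFn (p x) (S x) (dseq n) (aseq n x) ≤ PhiFn (p x) (S x) (dseq n) a)
    :
    TendstoUniformlyOn
      (fun (n : ℕ) (x : EuclideanSpace ℝ (Fin m)) => dseq n • (aseq n x - ‖p x‖⁻¹ • p x))
      (fun x => (2 : ℝ) • qq (p x) (S x)) Filter.atTop K := by
  have hcont : Continuous (Matrix.toEuclideanCLM (n := Fin m) (𝕜 := ℝ)) :=
    LinearMap.continuous_of_finiteDimensional
      (Matrix.toEuclideanCLM (n := Fin m) (𝕜 := ℝ)).toAlgEquiv.toLinearEquiv.toLinearMap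
  obtain ⟨M, hM⟩ := hK.exists_bound_of_continuousOn (hcont.comp_continuousOn hSc)
  obtain ⟨ρ, hρ, hpρ⟩ := hK.exists_forall_le' hpc.norm fun x hx ↦ norm_pos_iff.2 (hp0 x hx)
  have hbound : Filter.Tendsto (fun n ↦ (4 * M ^ 4 + 120 * M ^ 3) / (dseq n * ρ ^ 3))
      Filter.atTop (nhds 0) :=
    tendsto_const_nhds.div_atTop (hdtop.atTop_mul_const (by positivity))
  rw [Metric.tendstoUniformlyOn_iff]
  intro ε hε
  filter_upwards [hbound.eventually (gt_mem_nhds (pow_pos hε 2)),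
    hdtop.eventually_ge_atTop ρ⁻¹] with n hn hdn x hx
  rw [dist_comm, dist_eq_norm, ← pow_lt_pow_iff_left₀ (norm_nonneg _) hε.le two_ne_zero]
  refine (sq_norm_smul_sub_qq_le (hSsymm x hx) hρ (hpρ x hx) (hM x hx) ?_ (haunit n x hx)
    (hamin n x hx)).trans_lt hn
  rwa [← inv_le_iff_one_le_mul₀ hρ]

/-- `sup_{x ∈ K} |d_n(a_n(x) − p̄(x)) − 2q(x)| → 0` as `n → ∞`. -/
theorem stmt11 {m : ℕ} (hm : 2 ≤ m)
    (K : Set (EuclideanSpace ℝ (Fin m))) (hK : IsCompact K) (hKne : K.Nonempty)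
    (p : EuclideanSpace ℝ (Fin m) → EuclideanSpace ℝ (Fin m)) (hpc : ContinuousOn p K)
    (hp0 : ∀ x ∈ K, p x ≠ 0)
    (S : EuclideanSpace ℝ (Fin m) → Matrix (Fin m) (Fin m) ℝ) (hSc : ContinuousOn S K)
    (hSsymm : ∀ x ∈ K, (S x).IsSymm)
    (dseq : ℕ → ℝ) (hdpos : ∀ n, 0 < dseq n)
    (hdtop : Filter.Tendsto dseq Filter.atTop Filter.atTop)
    (aseq : ℕ → EuclideanSpace ℝ (Fin m) → EuclideanSpace ℝ (Fin m))
    (haunit : ∀ n, ∀ x ∈ K, ‖aseq n x‖ = 1)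
    (hamin : ∀ n, ∀ x ∈ K, ∀ a : EuclideanSpace ℝ (Fin m), ‖a‖ = 1 →
      PhiFn (p x) (S x) (dseq n) (aseq n x) ≤ PhiFn (p x) (S x) (dseq n) a)
    :
    TendstoUniformlyOn
      (fun (n : ℕ) (x : EuclideanSpace ℝ (Fin m)) => dseq n • (aseq n x - ‖p x‖⁻¹ • p x))
      (fun x => (2 : ℝ) • qq (p x) (S x)) Filter.atTop K :=
  stmt11_general K hK p hpc hp0 S hSc hSsymm dseq hdtop aseq haunit hamin
end
end

section
/- (Lipschitz-type stability of minimizers.) There exist constants D₀ > 0 and C < ∞ (depending only on m, K, p, S) such that for every d ≥ D₀, every x₁, x₂ ∈ K, and any minimizers a₁ of a ↦ Φ_d(x₁,a) and a₂ of a ↦ Φ_d(x₂,a) over the unit sphere S^{m−1}, one has |a₁ − a₂| ≤ C · max{|p(x₁) − p(x₂)|, |p̄(x₁) − p̄(x₂)|, |S(x₁) − S(x₂)|}, where |S(x₁) − S(x₂)| denotes the operator norm of the matrix difference. -/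
open scoped RealInnerProductSpace

noncomputable section

set_option maxHeartbeats 1000000
namespace Stmt13
variable {m : ℕ}

def Nrm (S : Matrix (Fin m) (Fin m) ℝ) : ℝ :=
  ‖LinearMap.toContinuousLinearMap (Matrix.toEuclideanLin S)‖

lemma Nrm_nonneg (S : Matrix (Fin m) (Fin m) ℝ) : 0 ≤ Nrm S := norm_nonneg _

lemma mv_le (S : Matrix (Fin m) (Fin m) ℝ) (u : EuclideanSpace ℝ (Fin m)) :
    ‖mv S u‖ ≤ Nrm S * ‖u‖ := by
  have h := (LinearMap.toContinuousLinearMap (Matrix.toEuclideanLin S)).le_opNorm u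
  have e : (LinearMap.toContinuousLinearMap (Matrix.toEuclideanLin S)) u = mv S u := rfl
  rw [e] at h; exact h

lemma inner_mv_le (S : Matrix (Fin m) (Fin m) ℝ) (u w : EuclideanSpace ℝ (Fin m)) :
    |⟪u, mv S w⟫| ≤ Nrm S * ‖u‖ * ‖w‖ := by
  calc |⟪u, mv S w⟫| ≤ ‖u‖ * ‖mv S w‖ := abs_real_inner_le_norm _ _
    _ ≤ ‖u‖ * (Nrm S * ‖w‖) := by
        exact mul_le_mul_of_nonneg_left (mv_le S w) (norm_nonneg u)
    _ = Nrm S * ‖u‖ * ‖w‖ := by ring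

lemma mv_symm {S : Matrix (Fin m) (Fin m) ℝ} (hS : S.IsSymm)
    (u w : EuclideanSpace ℝ (Fin m)) : ⟪u, mv S w⟫ = ⟪w, mv S u⟫ := by
  have hH : S.IsHermitian := by
    rwa [Matrix.IsHermitian, Matrix.conjTranspose_eq_transpose_of_trivial]
  have h := (Matrix.isHermitian_iff_isSymmetric.mp hH) u w
  rw [mv, mv, ← h, real_inner_comm]

lemma mv_add (S : Matrix (Fin m) (Fin m) ℝ) (u w : EuclideanSpace ℝ (Fin m)) :
    mv S (u + w) = mv S u + mv S w := map_add _ _ _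

lemma mv_smul (S : Matrix (Fin m) (Fin m) ℝ) (r : ℝ) (u : EuclideanSpace ℝ (Fin m)) :
    mv S (r • u) = r • mv S u := map_smul _ _ _

lemma mv_sub_mat (S₁ S₂ : Matrix (Fin m) (Fin m) ℝ) (u : EuclideanSpace ℝ (Fin m)) :
    mv (S₁ - S₂) u = mv S₁ u - mv S₂ u := by
  simp [mv, map_sub, LinearMap.sub_apply]

lemma mv_sub (S : Matrix (Fin m) (Fin m) ℝ) (u w : EuclideanSpace ℝ (Fin m)) :
    mv S (u - w) = mv S u - mv S w := map_sub _ _ _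

lemma phi_diff (p : EuclideanSpace ℝ (Fin m)) (hp : p ≠ 0) (Sm : Matrix (Fin m) (Fin m) ℝ)
    (hS : Sm.IsSymm) (d : ℝ) (a b : EuclideanSpace ℝ (Fin m)) :
    PhiFn p Sm d b - PhiFn p Sm d a
      = ⟪b - a, -(mv Sm (a + ‖p‖⁻¹ • p)) - d • p⟫ - (1/2) * ⟪b - a, mv Sm (b - a)⟫ := by
  have hinv : ‖p‖⁻¹ * ‖p‖ = 1 := inv_mul_cancel₀ (norm_ne_zero_iff.mpr hp)
  have h1 : ⟪a, mv Sm b⟫ = ⟪b, mv Sm a⟫ := mv_symm hS a b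
  have h2 : ⟪a, mv Sm p⟫ = ⟪p, mv Sm a⟫ := mv_symm hS a p
  have h3 : ⟪b, mv Sm p⟫ = ⟪p, mv Sm b⟫ := mv_symm hS b p
  simp only [PhiFn, mv_add, mv_smul, inner_add_left, inner_add_right, inner_sub_left,
    inner_sub_right, real_inner_smul_left, real_inner_smul_right, inner_neg_left,
    inner_neg_right, mv_sub]
  simp only [h1, h2, h3]
  linear_combination (d * ⟪a, p⟫ - d * ⟪b, p⟫) * hinv

lemma key (g a : EuclideanSpace ℝ (Fin m)) (ha : ‖a‖ = 1) (N : ℝ) (hN : 0 ≤ N)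
    (hmin : ∀ b : EuclideanSpace ℝ (Fin m), ‖b‖ = 1 → -(N/2) * ‖b - a‖^2 ≤ ⟪b - a, g⟫) :
    g = ⟪g, a⟫ • a := by
  set l : ℝ := ⟪g, a⟫ with hl
  set w : EuclideanSpace ℝ (Fin m) := g - l • a with hwdef
  have haa : ⟪a, a⟫ = 1 := by rw [real_inner_self_eq_norm_sq, ha]; norm_num
  have hwa : ⟪w, a⟫ = 0 := by
    rw [hwdef, inner_sub_left, real_inner_smul_left, haa, ← hl]; ring
  by_contra hne
  have hw0 : w ≠ 0 := sub_ne_zero_of_ne hne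
  have hnw : 0 < ‖w‖ := norm_pos_iff.mpr hw0
  set M : ℝ := N + |l| + 1 with hM
  have hM0 : 0 < M := by positivity
  set t : ℝ := min 1 (‖w‖ / (2 * M)) with ht
  have ht0 : 0 < t := lt_min one_pos (by positivity)
  have ht1 : t ≤ 1 := min_le_left _ _
  have htM : t * M ≤ ‖w‖ / 2 := by
    have : t ≤ ‖w‖ / (2 * M) := min_le_right _ _
    calc t * M ≤ (‖w‖ / (2 * M)) * M := by nlinarith
      _ = ‖w‖ / 2 := by field_simp
  set wh : EuclideanSpace ℝ (Fin m) := ‖w‖⁻¹ • w with hwh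
  have hwh1 : ‖wh‖ = 1 := by
    rw [hwh, norm_smul]; simp [abs_of_nonneg (inv_nonneg.mpr (norm_nonneg w))]
    field_simp
  have hwha : ⟪wh, a⟫ = 0 := by rw [hwh, real_inner_smul_left, hwa]; ring
  have hwhg : ⟪wh, g⟫ = ‖w‖ := by
    have hwg : ⟪w, g⟫ = ‖w‖ ^ 2 := by
      have : g = w + l • a := by rw [hwdef]; abel
      rw [this, inner_add_right, real_inner_smul_right, hwa, real_inner_self_eq_norm_sq]
      ring
    rw [hwh, real_inner_smul_left, hwg]
    field_simp [pow_two]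
  set r : ℝ := Real.sqrt (1 + t ^ 2) with hr
  have hr2 : r ^ 2 = 1 + t ^ 2 := Real.sq_sqrt (by positivity)
  have hr1 : 1 ≤ r := by nlinarith [Real.sqrt_nonneg (1 + t ^ 2)]
  have hrle : r ≤ 1 + t ^ 2 / 2 := by nlinarith [Real.sqrt_nonneg (1 + t ^ 2)]
  set s : ℝ := r⁻¹ with hs
  have hrs : r * s = 1 := mul_inv_cancel₀ (by positivity)
  have hs1 : s ≤ 1 := by nlinarith [hrs, hr1]
  have hshalf : 1 / 2 ≤ s := by nlinarith [hrs, hr1, hrle, ht1, ht0.le]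
  have hs2 : 1 - s ≤ t ^ 2 / 2 := by nlinarith [hrs, hr1, hrle, ht1, ht0.le]
  set u : EuclideanSpace ℝ (Fin m) := a - t • wh with hu
  have hu2 : ‖u‖ ^ 2 = 1 + t ^ 2 := by
    rw [hu, norm_sub_sq_real, real_inner_smul_right, real_inner_comm, hwha, norm_smul, ha, hwh1]
    simp [abs_of_nonneg ht0.le]
  have hun : ‖u‖ = r := by
    rw [hr, ← hu2, Real.sqrt_sq (norm_nonneg u)]
  set b : EuclideanSpace ℝ (Fin m) := s • u with hb
  have hb1 : ‖b‖ = 1 := by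
    rw [hb, norm_smul, hun, Real.norm_eq_abs, abs_of_nonneg (by positivity : (0:ℝ) ≤ s)]
    rw [mul_comm]; exact hrs
  have hag : ⟪a, g⟫ = l := real_inner_comm a g ▸ hl.symm ▸ rfl
  have hbg : ⟪b - a, g⟫ = (s - 1) * l - s * t * ‖w‖ := by
    rw [inner_sub_left, hb, real_inner_smul_left, hu, inner_sub_left,
      real_inner_smul_left, hwhg, hag]
    ring
  have hba : ‖b - a‖ ^ 2 = 2 - 2 * s := by
    rw [norm_sub_sq_real, hb1, ha, hb, real_inner_smul_left, hu, inner_sub_left,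
      real_inner_smul_left, hwha, haa]
    ring
  have hmb := hmin b hb1
  rw [hbg, hba] at hmb
  -- s*t*‖w‖ ≤ (1-s)*(N+|l|) ≤ (t²/2)*M
  have h1 : s * t * ‖w‖ ≤ (1 - s) * M := by
    have habs : -|l| ≤ l := neg_abs_le l
    nlinarith
  have h2 : (t / 2) * ‖w‖ ≤ s * t * ‖w‖ := by
    nlinarith [mul_nonneg (mul_nonneg (sub_nonneg.mpr hshalf) ht0.le) hnw.le]
  have h3 : (1 - s) * M ≤ (t ^ 2 / 2) * M := by nlinarith
  have : ‖w‖ ≤ t * M := by nlinarith [h1, h2, h3, ht0, mul_pos ht0 hM0]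
  nlinarith


lemma growth (p : EuclideanSpace ℝ (Fin m)) (hp : p ≠ 0) (Sm : Matrix (Fin m) (Fin m) ℝ)
    (hS : Sm.IsSymm) (d : ℝ) (hd : 14 * Nrm Sm + 2 ≤ d * ‖p‖)
    (a : EuclideanSpace ℝ (Fin m)) (ha : ‖a‖ = 1)
    (hmin : ∀ b : EuclideanSpace ℝ (Fin m), ‖b‖ = 1 → PhiFn p Sm d a ≤ PhiFn p Sm d b) :
    ∀ b : EuclideanSpace ℝ (Fin m), ‖b‖ = 1 →
      ((d * ‖p‖ - 7 * Nrm Sm) / 2) * ‖b - a‖ ^ 2 ≤ PhiFn p Sm d b - PhiFn p Sm d a := by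
  set N : ℝ := Nrm Sm with hNdef
  have hN : 0 ≤ N := Nrm_nonneg Sm
  have hpn : 0 < ‖p‖ := norm_pos_iff.mpr hp
  set q : EuclideanSpace ℝ (Fin m) := ‖p‖⁻¹ • p with hq
  have hq1 : ‖q‖ = 1 := by
    rw [hq, norm_smul, Real.norm_eq_abs, abs_of_nonneg (inv_nonneg.mpr hpn.le)]
    field_simp
  set v : EuclideanSpace ℝ (Fin m) := mv Sm q + d • p with hv
  set g : EuclideanSpace ℝ (Fin m) := -(mv Sm (a + ‖p‖⁻¹ • p)) - d • p with hg
  have hgv : g = -(mv Sm a) - v := by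
    rw [hg, hv, ← hq, mv_add]; abel
  have hdiff : ∀ b : EuclideanSpace ℝ (Fin m), ‖b‖ = 1 →
      PhiFn p Sm d b - PhiFn p Sm d a
        = ⟪b - a, g⟫ - (1/2) * ⟪b - a, mv Sm (b - a)⟫ := by
    intro b hb
    exact phi_diff p hp Sm hS d a b
  have hminb : ∀ b : EuclideanSpace ℝ (Fin m), ‖b‖ = 1 →
      -(N/2) * ‖b - a‖ ^ 2 ≤ ⟪b - a, g⟫ := by
    intro b hb
    have h0 : 0 ≤ PhiFn p Sm d b - PhiFn p Sm d a := by linarith [hmin b hb]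
    rw [hdiff b hb] at h0
    have habs := inner_mv_le Sm (b - a) (b - a)
    rw [← hNdef] at habs
    have := neg_abs_le (⟪b - a, mv Sm (b - a)⟫)
    nlinarith [this, habs, sq_nonneg ‖b - a‖]
  have hkey : g = ⟪g, a⟫ • a := key g a ha N hN hminb
  set l : ℝ := ⟪g, a⟫ with hl
  -- norm of v
  have hvn : d * ‖p‖ - N ≤ ‖v‖ := by
    have h1 : ‖d • p‖ = d * ‖p‖ := by
      rw [norm_smul, Real.norm_eq_abs, abs_of_nonneg]
      nlinarith
    have h2 : ‖d • p‖ ≤ ‖v‖ + ‖mv Sm q‖ := by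
      have : d • p = v - mv Sm q := by rw [hv]; abel
      rw [this]; exact norm_sub_le _ _
    have h3 : ‖mv Sm q‖ ≤ N := by
      have := mv_le Sm q; rw [hq1] at this; linarith
    linarith
  have hv0 : v ≠ 0 := by
    intro h0
    rw [h0, norm_zero] at hvn
    nlinarith
  have hvpos : 0 < ‖v‖ := norm_pos_iff.mpr hv0
  -- lower bound on ⟪a, v⟫
  have hav : ‖v‖ - 4 * N ≤ ⟪a, v⟫ := by
    set vh : EuclideanSpace ℝ (Fin m) := ‖v‖⁻¹ • v with hvh
    have hvh1 : ‖vh‖ = 1 := by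
      rw [hvh, norm_smul, Real.norm_eq_abs, abs_of_nonneg (inv_nonneg.mpr hvpos.le)]
      field_simp
    have h0 : 0 ≤ PhiFn p Sm d vh - PhiFn p Sm d a := by linarith [hmin vh hvh1]
    rw [hdiff vh hvh1] at h0
    have hvhv : ⟪vh, v⟫ = ‖v‖ := by
      rw [hvh, real_inner_smul_left, real_inner_self_eq_norm_sq]
      field_simp [pow_two]
    have hga : ⟪vh - a, g⟫ = -⟪vh - a, mv Sm a⟫ - (‖v‖ - ⟪a, v⟫) := by
      rw [hgv]
      simp only [inner_sub_right, inner_neg_right, inner_sub_left, hvhv]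
      try ring
    have hnvha : ‖vh - a‖ ≤ 2 := by
      calc ‖vh - a‖ ≤ ‖vh‖ + ‖a‖ := norm_sub_le _ _
        _ = 2 := by rw [hvh1, ha]; norm_num
    have hb1 := inner_mv_le Sm (vh - a) a
    have hb2 := inner_mv_le Sm (vh - a) (vh - a)
    rw [← hNdef] at hb1 hb2
    rw [ha] at hb1
    have hb1' : |⟪vh - a, mv Sm a⟫| ≤ 2 * N := by
      calc |⟪vh - a, mv Sm a⟫| ≤ N * ‖vh - a‖ * 1 := hb1
        _ ≤ 2 * N := by nlinarith [mul_nonneg hN (sub_nonneg.mpr hnvha)]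
    have hb2' : |⟪vh - a, mv Sm (vh - a)⟫| ≤ 4 * N := by
      calc |⟪vh - a, mv Sm (vh - a)⟫| ≤ N * ‖vh - a‖ * ‖vh - a‖ := hb2
        _ ≤ 4 * N := by
            nlinarith [mul_nonneg (mul_nonneg hN (sub_nonneg.mpr hnvha))
              (by linarith [norm_nonneg (vh - a)] : (0:ℝ) ≤ 2 + ‖vh - a‖)]
    rw [hga] at h0
    have := abs_le.mp hb1'
    have := abs_le.mp hb2'
    linarith [this.1, this.2]
  have hlb : l ≤ 6 * N - d * ‖p‖ := by
    have h1 : l = -⟪a, mv Sm a⟫ - ⟪a, v⟫ := by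
      rw [hl, hgv, inner_sub_left, inner_neg_left, real_inner_comm (mv Sm a) a,
        real_inner_comm v a]
    have h2 := inner_mv_le Sm a a
    rw [← hNdef] at h2
    rw [ha] at h2
    have h3 := abs_le.mp h2
    rw [h1]
    have : d * ‖p‖ - 5 * N ≤ ⟪a, v⟫ := by linarith
    nlinarith [h3.1, h3.2]
  -- conclusion
  intro b hb
  rw [hdiff b hb]
  have hba2 : ⟪b - a, a⟫ = -(‖b - a‖ ^ 2) / 2 := by
    have h4 : ‖b - a‖ ^ 2 = 2 - 2 * ⟪b, a⟫ := by
      rw [norm_sub_sq_real, hb, ha]; ring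
    rw [inner_sub_left, real_inner_self_eq_norm_sq, ha]
    rw [h4]; ring
  have hbg : ⟪b - a, g⟫ = l * (-(‖b - a‖ ^ 2) / 2) := by
    rw [hkey, real_inner_smul_right, hba2]
  rw [hbg]
  have habs0 := inner_mv_le Sm (b - a) (b - a)
  rw [← hNdef] at habs0
  have habs' : |⟪b - a, mv Sm (b - a)⟫| ≤ N * ‖b - a‖ ^ 2 := by
    calc |⟪b - a, mv Sm (b - a)⟫| ≤ N * ‖b - a‖ * ‖b - a‖ := habs0
      _ = N * ‖b - a‖ ^ 2 := by ring
  obtain ⟨hA, hB⟩ := abs_le.mp habs'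
  have hsq : 0 ≤ ‖b - a‖ ^ 2 := sq_nonneg _
  nlinarith [hB, mul_nonneg (sub_nonneg.mpr hlb) hsq]

lemma upper_id (p₁ p₂ : EuclideanSpace ℝ (Fin m)) (hp₁ : p₁ ≠ 0) (hp₂ : p₂ ≠ 0)
    (S₁ S₂ : Matrix (Fin m) (Fin m) ℝ) (d : ℝ) (a₁ a₂ : EuclideanSpace ℝ (Fin m)) :
    (PhiFn p₁ S₁ d a₂ - PhiFn p₂ S₂ d a₂) - (PhiFn p₁ S₁ d a₁ - PhiFn p₂ S₂ d a₁)
      = d * ⟪a₁ - a₂, p₁ - p₂⟫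
        - (1/2) * ⟪a₂ - a₁, mv (S₁ - S₂) (a₂ + ‖p₁‖⁻¹ • p₁)⟫
        - (1/2) * ⟪a₂ - a₁, mv S₂ (‖p₁‖⁻¹ • p₁ - ‖p₂‖⁻¹ • p₂)⟫
        - (1/2) * ⟪a₁ + ‖p₁‖⁻¹ • p₁, mv (S₁ - S₂) (a₂ - a₁)⟫
        - (1/2) * ⟪‖p₁‖⁻¹ • p₁ - ‖p₂‖⁻¹ • p₂, mv S₂ (a₂ - a₁)⟫ := by
  have h₁ : ‖p₁‖⁻¹ * ‖p₁‖ = 1 := inv_mul_cancel₀ (norm_ne_zero_iff.mpr hp₁)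
  have h₂ : ‖p₂‖⁻¹ * ‖p₂‖ = 1 := inv_mul_cancel₀ (norm_ne_zero_iff.mpr hp₂)
  simp only [PhiFn, mv_add, mv_sub, mv_smul, mv_sub_mat, inner_add_left, inner_add_right,
    inner_sub_left, inner_sub_right, real_inner_smul_left, real_inner_smul_right]
  linear_combination (d * ⟪a₁, p₁⟫ - d * ⟪a₂, p₁⟫) * h₁ + (d * ⟪a₂, p₂⟫ - d * ⟪a₁, p₂⟫) * h₂

end Stmt13

open Stmt13

set_option maxHeartbeats 2000000

/-- Lipschitz-type stability of minimizers: for all large `d`, any minimizers of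
`Φ_d(x₁,·)` and `Φ_d(x₂,·)` over the unit sphere are at distance at most a constant
times `max{|p(x₁)−p(x₂)|, |p̄(x₁)−p̄(x₂)|, |S(x₁)−S(x₂)|}`, where the last norm is the
operator norm of the matrix difference on Euclidean space. -/
theorem stmt13 {m : ℕ} (hm : 2 ≤ m)
    (K : Set (EuclideanSpace ℝ (Fin m))) (hK : IsCompact K) (hKne : K.Nonempty)
    (p : EuclideanSpace ℝ (Fin m) → EuclideanSpace ℝ (Fin m)) (hpc : ContinuousOn p K)
    (hp0 : ∀ x ∈ K, p x ≠ 0)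
    (S : EuclideanSpace ℝ (Fin m) → Matrix (Fin m) (Fin m) ℝ) (hSc : ContinuousOn S K)
    (hSsymm : ∀ x ∈ K, (S x).IsSymm) :
    ∃ D₀ : ℝ, 0 < D₀ ∧ ∃ C : ℝ,
      ∀ d : ℝ, D₀ ≤ d → ∀ x₁ ∈ K, ∀ x₂ ∈ K,
        ∀ a₁ a₂ : EuclideanSpace ℝ (Fin m), ‖a₁‖ = 1 → ‖a₂‖ = 1 →
        (∀ a : EuclideanSpace ℝ (Fin m), ‖a‖ = 1 →
          PhiFn (p x₁) (S x₁) d a₁ ≤ PhiFn (p x₁) (S x₁) d a) →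
        (∀ a : EuclideanSpace ℝ (Fin m), ‖a‖ = 1 →
          PhiFn (p x₂) (S x₂) d a₂ ≤ PhiFn (p x₂) (S x₂) d a) →
        ‖a₁ - a₂‖ ≤ C *
          max (max ‖p x₁ - p x₂‖ ‖‖p x₁‖⁻¹ • p x₁ - ‖p x₂‖⁻¹ • p x₂‖)
            ‖LinearMap.toContinuousLinearMap (Matrix.toEuclideanLin (S x₁ - S x₂))‖ := by
  classical
  -- minimum of ‖p x‖ on K
  obtain ⟨x₀, hx₀K, hx₀min⟩ := hK.exists_isMinOn hKne hpc.norm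
  set pmin : ℝ := ‖p x₀‖ with hpmin
  have hpmin0 : 0 < pmin := norm_pos_iff.mpr (hp0 x₀ hx₀K)
  have hpminle : ∀ x ∈ K, pmin ≤ ‖p x‖ := fun x hx => hx₀min hx
  -- maximum of the operator norm of S x on K
  have hNcont : ContinuousOn (fun x => Nrm (S x)) K := by
    have hL : Continuous fun A : Matrix (Fin m) (Fin m) ℝ =>
        (LinearMap.toContinuousLinearMap (Matrix.toEuclideanLin A) :
          EuclideanSpace ℝ (Fin m) →L[ℝ] EuclideanSpace ℝ (Fin m)) := by
      exact LinearMap.continuous_of_finiteDimensional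
        ((LinearMap.toContinuousLinearMap.toLinearMap).comp
          (Matrix.toEuclideanLin (𝕜 := ℝ) (m := Fin m) (n := Fin m)).toLinearMap)
    exact (continuous_norm.comp hL).comp_continuousOn hSc
  obtain ⟨xM, hxMK, hxMmax⟩ := hK.exists_isMaxOn hKne hNcont
  set Smax : ℝ := Nrm (S xM) with hSmax
  have hSmax0 : 0 ≤ Smax := Nrm_nonneg _
  have hSmaxle : ∀ x ∈ K, Nrm (S x) ≤ Smax := fun x hx => hxMmax hx
  -- constants
  set D₀ : ℝ := (14 * Smax + 2) / pmin with hD₀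
  have hD₀0 : 0 < D₀ := by positivity
  have hD₀pm : D₀ * pmin = 14 * Smax + 2 := div_mul_cancel₀ _ (ne_of_gt hpmin0)
  set C : ℝ := (2 / pmin) * (1 + (2 + Smax) / D₀) with hC
  have hC0 : 0 ≤ C := by positivity
  refine ⟨D₀, hD₀0, C, ?_⟩
  intro d hd x₁ hx₁ x₂ hx₂ a₁ a₂ ha₁ ha₂ hm₁ hm₂
  have hd0 : 0 < d := lt_of_lt_of_le hD₀0 hd
  have hdpm : 14 * Smax + 2 ≤ d * pmin := by
    rw [← hD₀pm]; exact mul_le_mul_of_nonneg_right hd hpmin0.le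
  set ε : ℝ := max (max ‖p x₁ - p x₂‖ ‖‖p x₁‖⁻¹ • p x₁ - ‖p x₂‖⁻¹ • p x₂‖)
      ‖LinearMap.toContinuousLinearMap (Matrix.toEuclideanLin (S x₁ - S x₂))‖ with hε
  have hεS : Nrm (S x₁ - S x₂) ≤ ε := le_max_right _ _
  have hεp : ‖p x₁ - p x₂‖ ≤ ε := le_trans (le_max_left _ _) (le_max_left _ _)
  have hεq : ‖‖p x₁‖⁻¹ • p x₁ - ‖p x₂‖⁻¹ • p x₂‖ ≤ ε :=
    le_trans (le_max_right _ _) (le_max_left _ _)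
  have hε0 : 0 ≤ ε := le_trans (norm_nonneg _) hεp
  set r : ℝ := ‖a₁ - a₂‖ with hr
  have hr0 : 0 ≤ r := norm_nonneg _
  have hrrev : ‖a₂ - a₁‖ = r := norm_sub_rev _ _
  -- growth at x₁ and x₂
  have hdle : ∀ x ∈ K, 14 * Nrm (S x) + 2 ≤ d * ‖p x‖ := by
    intro x hx
    have h1 : d * pmin ≤ d * ‖p x‖ := mul_le_mul_of_nonneg_left (hpminle x hx) hd0.le
    have h2 := hSmaxle x hx
    linarith
  have g1 := growth (p x₁) (hp0 x₁ hx₁) (S x₁) (hSsymm x₁ hx₁) d (hdle x₁ hx₁) a₁ ha₁ hm₁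
    a₂ ha₂
  have g2 := growth (p x₂) (hp0 x₂ hx₂) (S x₂) (hSsymm x₂ hx₂) d (hdle x₂ hx₂) a₂ ha₂ hm₂
    a₁ ha₁
  rw [hrrev] at g1
  have hc1 : d * pmin / 4 ≤ (d * ‖p x₁‖ - 7 * Nrm (S x₁)) / 2 := by
    have h1 : d * pmin ≤ d * ‖p x₁‖ := mul_le_mul_of_nonneg_left (hpminle x₁ hx₁) hd0.le
    have h2 := hSmaxle x₁ hx₁
    linarith
  have hc2 : d * pmin / 4 ≤ (d * ‖p x₂‖ - 7 * Nrm (S x₂)) / 2 := by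
    have h1 : d * pmin ≤ d * ‖p x₂‖ := mul_le_mul_of_nonneg_left (hpminle x₂ hx₂) hd0.le
    have h2 := hSmaxle x₂ hx₂
    linarith
  have hg1 : (d * pmin / 4) * r ^ 2 ≤ PhiFn (p x₁) (S x₁) d a₂ - PhiFn (p x₁) (S x₁) d a₁ :=
    le_trans (mul_le_mul_of_nonneg_right hc1 (sq_nonneg r)) g1
  have hg2 : (d * pmin / 4) * r ^ 2 ≤ PhiFn (p x₂) (S x₂) d a₁ - PhiFn (p x₂) (S x₂) d a₂ :=
    le_trans (mul_le_mul_of_nonneg_right hc2 (sq_nonneg r)) g2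
  -- upper bound for the sum
  have hid := upper_id (p x₁) (p x₂) (hp0 x₁ hx₁) (hp0 x₂ hx₂) (S x₁) (S x₂) d a₁ a₂
  set q₁ : EuclideanSpace ℝ (Fin m) := ‖p x₁‖⁻¹ • p x₁ with hq₁
  set q₂ : EuclideanSpace ℝ (Fin m) := ‖p x₂‖⁻¹ • p x₂ with hq₂
  have hq₁1 : ‖q₁‖ = 1 := by
    rw [hq₁, norm_smul, Real.norm_eq_abs, abs_of_nonneg (inv_nonneg.mpr (norm_nonneg _))]
    field_simp [norm_ne_zero_iff.mpr (hp0 x₁ hx₁)]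
  have hB : (PhiFn (p x₁) (S x₁) d a₂ - PhiFn (p x₂) (S x₂) d a₂)
      - (PhiFn (p x₁) (S x₁) d a₁ - PhiFn (p x₂) (S x₂) d a₁)
      ≤ r * (d * ‖p x₁ - p x₂‖ + 2 * Nrm (S x₁ - S x₂) + Smax * ‖q₁ - q₂‖) := by
    rw [hid]
    have t1 : |d * ⟪a₁ - a₂, p x₁ - p x₂⟫| ≤ d * (r * ‖p x₁ - p x₂‖) := by
      rw [abs_mul, abs_of_nonneg hd0.le]
      exact mul_le_mul_of_nonneg_left (abs_real_inner_le_norm _ _) hd0.le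
    have t2 : |⟪a₂ - a₁, mv (S x₁ - S x₂) (a₂ + q₁)⟫|
        ≤ Nrm (S x₁ - S x₂) * r * 2 := by
      have h0 := inner_mv_le (S x₁ - S x₂) (a₂ - a₁) (a₂ + q₁)
      have h1 : ‖a₂ + q₁‖ ≤ 2 := by
        calc ‖a₂ + q₁‖ ≤ ‖a₂‖ + ‖q₁‖ := norm_add_le _ _
          _ = 2 := by rw [ha₂, hq₁1]; norm_num
      rw [hrrev] at h0
      calc |⟪a₂ - a₁, mv (S x₁ - S x₂) (a₂ + q₁)⟫| ≤ Nrm (S x₁ - S x₂) * r * ‖a₂ + q₁‖ := h0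
        _ ≤ Nrm (S x₁ - S x₂) * r * 2 :=
            mul_le_mul_of_nonneg_left h1 (mul_nonneg (Nrm_nonneg _) hr0)
    have t3 : |⟪a₂ - a₁, mv (S x₂) (q₁ - q₂)⟫| ≤ Smax * r * ‖q₁ - q₂‖ := by
      have h0 := inner_mv_le (S x₂) (a₂ - a₁) (q₁ - q₂)
      rw [hrrev] at h0
      calc |⟪a₂ - a₁, mv (S x₂) (q₁ - q₂)⟫| ≤ Nrm (S x₂) * r * ‖q₁ - q₂‖ := h0
        _ ≤ Smax * r * ‖q₁ - q₂‖ :=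
            mul_le_mul_of_nonneg_right
              (mul_le_mul_of_nonneg_right (hSmaxle x₂ hx₂) hr0) (norm_nonneg _)
    have t4 : |⟪a₁ + q₁, mv (S x₁ - S x₂) (a₂ - a₁)⟫| ≤ Nrm (S x₁ - S x₂) * 2 * r := by
      have h0 := inner_mv_le (S x₁ - S x₂) (a₁ + q₁) (a₂ - a₁)
      have h1 : ‖a₁ + q₁‖ ≤ 2 := by
        calc ‖a₁ + q₁‖ ≤ ‖a₁‖ + ‖q₁‖ := norm_add_le _ _
          _ = 2 := by rw [ha₁, hq₁1]; norm_num
      rw [hrrev] at h0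
      calc |⟪a₁ + q₁, mv (S x₁ - S x₂) (a₂ - a₁)⟫|
          ≤ Nrm (S x₁ - S x₂) * ‖a₁ + q₁‖ * r := h0
        _ ≤ Nrm (S x₁ - S x₂) * 2 * r :=
            mul_le_mul_of_nonneg_right (mul_le_mul_of_nonneg_left h1 (Nrm_nonneg _)) hr0
    have t5 : |⟪q₁ - q₂, mv (S x₂) (a₂ - a₁)⟫| ≤ Smax * ‖q₁ - q₂‖ * r := by
      have h0 := inner_mv_le (S x₂) (q₁ - q₂) (a₂ - a₁)
      rw [hrrev] at h0
      calc |⟪q₁ - q₂, mv (S x₂) (a₂ - a₁)⟫| ≤ Nrm (S x₂) * ‖q₁ - q₂‖ * r := h0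
        _ ≤ Smax * ‖q₁ - q₂‖ * r :=
            mul_le_mul_of_nonneg_right
              (mul_le_mul_of_nonneg_right (hSmaxle x₂ hx₂) (norm_nonneg _)) hr0
    have u1 := abs_le.mp t1
    have u2 := abs_le.mp t2
    have u3 := abs_le.mp t3
    have u4 := abs_le.mp t4
    have u5 := abs_le.mp t5
    linarith [u1.1, u1.2, u2.1, u2.2, u3.1, u3.2, u4.1, u4.2, u5.1, u5.2]
  -- combine
  have hsum : (d * pmin / 2) * r ^ 2
      ≤ r * (d * ‖p x₁ - p x₂‖ + 2 * Nrm (S x₁ - S x₂) + Smax * ‖q₁ - q₂‖) := by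
    have : (d * pmin / 2) * r ^ 2 ≤ (PhiFn (p x₁) (S x₁) d a₂ - PhiFn (p x₂) (S x₂) d a₂)
        - (PhiFn (p x₁) (S x₁) d a₁ - PhiFn (p x₂) (S x₂) d a₁) := by linarith
    linarith
  have hεNrm : Nrm (S x₁ - S x₂) ≤ ε := hεS
  have hbound : r * (d * ‖p x₁ - p x₂‖ + 2 * Nrm (S x₁ - S x₂) + Smax * ‖q₁ - q₂‖)
      ≤ r * ((d + 2 + Smax) * ε) := by
    apply mul_le_mul_of_nonneg_left _ hr0
    have b1 : d * ‖p x₁ - p x₂‖ ≤ d * ε := mul_le_mul_of_nonneg_left hεp hd0.le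
    have b2 : 2 * Nrm (S x₁ - S x₂) ≤ 2 * ε := by linarith
    have b3 : Smax * ‖q₁ - q₂‖ ≤ Smax * ε := mul_le_mul_of_nonneg_left hεq hSmax0
    linarith [b1, b2, b3]
  -- final division
  show r ≤ C * ε
  rcases eq_or_lt_of_le hr0 with h0 | hrpos
  · rw [← h0]; positivity
  have step1 : (d * pmin / 2) * r ≤ (d + 2 + Smax) * ε := by
    have h1 : ((d * pmin / 2) * r) * r ≤ ((d + 2 + Smax) * ε) * r := by
      have := le_trans hsum hbound
      nlinarith [this]
    exact le_of_mul_le_mul_right h1 hrpos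
  have hcoef : (d + 2 + Smax) * ε ≤ ((d * pmin / 2) * C) * ε := by
    apply mul_le_mul_of_nonneg_right _ hε0
    have h1 : (2 + Smax) / D₀ * D₀ ≤ (2 + Smax) / D₀ * d :=
      mul_le_mul_of_nonneg_left hd (by positivity)
    rw [div_mul_cancel₀ _ (ne_of_gt hD₀0)] at h1
    have h2 : (d * pmin / 2) * C = d + d * ((2 + Smax) / D₀) := by
      rw [hC]; field_simp
    rw [h2]
    have h3 : (2 + Smax) / D₀ * d = d * ((2 + Smax) / D₀) := by ring
    rw [h3] at h1
    linarith
  have step2 : (d * pmin / 2) * r ≤ (d * pmin / 2) * (C * ε) := by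
    calc (d * pmin / 2) * r ≤ (d + 2 + Smax) * ε := step1
      _ ≤ ((d * pmin / 2) * C) * ε := hcoef
      _ = (d * pmin / 2) * (C * ε) := by ring
  exact le_of_mul_le_mul_left step2 (by positivity)


end
end

section
/- (Proposition 2.3, extension lemma.) Let m, d ≥ 1 be integers, G ⊂ ℝ^m a bounded open set with closure Ḡ, and let E_k ⊂ G (k ≥ 1) be open sets with the closure of E_{k−1} contained in E_k for each k and with union over k of E_k equal to G. Let f_n, f : Ḡ → ℝ^d be continuous maps, uniformly bounded in n, with f_n → f uniformly on Ḡ, and let F : ℝ^m → ℝ^d be a bounded uniformly continuous map with F = f on Ḡ. Then there exist a sequence of indices k_n → ∞ and continuous maps F_n : ℝ^m → ℝ^d, uniformly bounded in n, such that F_n = f_n on E_{k_n} for every n and F_n → F uniformly on ℝ^m. -/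
/-- Proposition 2.3 (extension lemma): given an exhaustion `E_k` of a bounded open set
`G` by open sets with `closure (E k) ⊆ E (k+1)`, uniformly bounded continuous maps
`f_n → f` uniformly on `Ḡ`, and a bounded uniformly continuous extension `F` of `f` to
all of `ℝ^m`, there are indices `k_n → ∞` and uniformly bounded continuous maps
`F_n : ℝ^m → ℝ^d` with `F_n = f_n` on `E_{k_n}` and `F_n → F` uniformly on `ℝ^m`. -/
theorem stmt14 {m d : ℕ} (hm : 1 ≤ m) (hd : 1 ≤ d)
    (G : Set (EuclideanSpace ℝ (Fin m))) (hGo : IsOpen G) (hGb : Bornology.IsBounded G)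
    (E : ℕ → Set (EuclideanSpace ℝ (Fin m))) (hEo : ∀ k, IsOpen (E k))
    (hEG : ∀ k, E k ⊆ G) (hEsub : ∀ k, closure (E k) ⊆ E (k + 1))
    (hEunion : (⋃ k, E k) = G)
    (f : ℕ → EuclideanSpace ℝ (Fin m) → EuclideanSpace ℝ (Fin d))
    (flim : EuclideanSpace ℝ (Fin m) → EuclideanSpace ℝ (Fin d))
    (hfc : ∀ n, ContinuousOn (f n) (closure G)) (hflimc : ContinuousOn flim (closure G))
    (hfb : ∃ M : ℝ, ∀ n, ∀ x ∈ closure G, ‖f n x‖ ≤ M)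
    (hfconv : TendstoUniformlyOn f flim Filter.atTop (closure G))
    (F : EuclideanSpace ℝ (Fin m) → EuclideanSpace ℝ (Fin d))
    (hFuc : UniformContinuous F) (hFb : ∃ M : ℝ, ∀ x, ‖F x‖ ≤ M)
    (hFf : Set.EqOn F flim (closure G)) :
    ∃ kseq : ℕ → ℕ, Filter.Tendsto kseq Filter.atTop Filter.atTop ∧
      ∃ Fn : ℕ → EuclideanSpace ℝ (Fin m) → EuclideanSpace ℝ (Fin d),
        (∀ n, Continuous (Fn n)) ∧ (∃ M : ℝ, ∀ n, ∀ x, ‖Fn n x‖ ≤ M) ∧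
        (∀ n, Set.EqOn (Fn n) (f n) (E (kseq n))) ∧
        TendstoUniformly Fn F Filter.atTop := by
  obtain ⟨MF, hMF⟩ := hFb
  obtain ⟨M, hM⟩ := hfb
  have hFc : Continuous F := hFuc.continuous
  -- Urysohn functions
  have hφ : ∀ n : ℕ, ∃ φ : C(EuclideanSpace ℝ (Fin m), ℝ),
      Set.EqOn φ 0 (E (n+1))ᶜ ∧ Set.EqOn φ 1 (closure (E n)) ∧
      ∀ x, φ x ∈ Set.Icc (0:ℝ) 1 := by
    intro n
    exact exists_continuous_zero_one_of_isClosed (hEo (n+1)).isClosed_compl isClosed_closure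
      (by rw [Set.disjoint_compl_left_iff_subset]; exact hEsub n)
  choose φ hφ0 hφ1 hφ01 using hφ
  set Fn : ℕ → EuclideanSpace ℝ (Fin m) → EuclideanSpace ℝ (Fin d) :=
    fun n x => F x + φ n x • (f n x - F x) with hFn
  -- key: φ n x ≠ 0 → x ∈ E (n+1)
  have hmem : ∀ n x, φ n x ≠ 0 → x ∈ E (n+1) := by
    intro n x h
    by_contra hx
    exact h (hφ0 n hx)
  refine ⟨id, Filter.tendsto_id, Fn, ?_, ?_, ?_, ?_⟩
  · -- continuity
    intro n
    rw [continuous_iff_continuousAt]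
    intro x
    by_cases hx : x ∈ closure (E (n+1))
    · have hxG : x ∈ G := hEG (n+2) (hEsub (n+1) hx)
      have hfct : ContinuousAt (f n) x :=
        ((hfc n).mono subset_closure).continuousAt (hGo.mem_nhds hxG)
      exact hFc.continuousAt.add
        (((φ n).continuous.continuousAt).smul (hfct.sub hFc.continuousAt))
    · have hev : (fun y => F y + φ n y • (f n y - F y)) =ᶠ[nhds x] F := by
        filter_upwards [isClosed_closure.isOpen_compl.mem_nhds hx] with y hy
        have : φ n y = 0 := hφ0 n (fun hyE => hy (subset_closure hyE))
        simp [this]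
      exact ContinuousAt.congr hFc.continuousAt hev.symm
  · -- uniform bound
    refine ⟨MF + max (M + MF) 0, fun n x => ?_⟩
    by_cases h : φ n x = 0
    · have : ‖Fn n x‖ = ‖F x‖ := by simp [hFn, h]
      rw [this]
      have := hMF x
      nlinarith [le_max_right (M + MF) 0]
    · have hxG : x ∈ closure G := subset_closure (hEG (n+1) (hmem n x h))
      have h1 : ‖φ n x • (f n x - F x)‖ ≤ M + MF := by
        rw [norm_smul]
        have h2 : ‖φ n x‖ ≤ 1 := by
          rw [Real.norm_eq_abs, abs_le]
          exact ⟨by linarith [(hφ01 n x).1], (hφ01 n x).2⟩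
        have h3 : ‖f n x - F x‖ ≤ M + MF := le_trans (norm_sub_le _ _)
          (add_le_add (hM n x hxG) (hMF x))
        calc ‖φ n x‖ * ‖f n x - F x‖ ≤ 1 * ‖f n x - F x‖ := by
              apply mul_le_mul_of_nonneg_right h2 (norm_nonneg _)
          _ = ‖f n x - F x‖ := one_mul _
          _ ≤ M + MF := h3
      calc ‖Fn n x‖ ≤ ‖F x‖ + ‖φ n x • (f n x - F x)‖ := norm_add_le _ _
        _ ≤ MF + max (M + MF) 0 := add_le_add (hMF x) (le_trans h1 (le_max_left _ _))
  · -- equality on E n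
    intro n x hx
    have : φ n x = 1 := hφ1 n (subset_closure hx)
    simp [hFn, this]
  · -- uniform convergence
    rw [Metric.tendstoUniformly_iff]
    intro ε hε
    rw [Metric.tendstoUniformlyOn_iff] at hfconv
    filter_upwards [hfconv ε hε] with n hn x
    rw [dist_eq_norm]
    have : F x - Fn n x = -(φ n x • (f n x - F x)) := by simp [hFn]
    rw [this, norm_neg]
    by_cases h : φ n x = 0
    · simpa [h] using hε
    · have hxG : x ∈ closure G := subset_closure (hEG (n+1) (hmem n x h))
      have h2 : ‖φ n x‖ ≤ 1 := by
        rw [Real.norm_eq_abs, abs_le]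
        exact ⟨by linarith [(hφ01 n x).1], (hφ01 n x).2⟩
      have h3 : ‖f n x - F x‖ < ε := by
        have := hn x hxG
        rw [dist_eq_norm] at this
        rw [hFf hxG, ← norm_neg]
        simpa using this
      calc ‖φ n x • (f n x - F x)‖ = ‖φ n x‖ * ‖f n x - F x‖ := norm_smul _ _
        _ ≤ 1 * ‖f n x - F x‖ := mul_le_mul_of_nonneg_right h2 (norm_nonneg _)
        _ = ‖f n x - F x‖ := one_mul _
        _ < ε := h3
end

section
/- (Lower semicontinuity of exit times.) Let m ≥ 1, let U ⊆ ℝ^m be open, let x and x_n (n ≥ 1) be continuous paths from [0,∞) to ℝ^m, and suppose x_n → x locally uniformly. Then liminf over n of τ_U(x_n) ≥ τ_U(x), the inequality being in the extended reals [0,∞]. -/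
open Filter in
/-- Exit time of a path `y` (regarded as defined on `[0,∞)`) from a set `A`:
`τ_A(y) = inf {t ≥ 0 : y(t) ∉ A} ∈ [0,∞]`, with `inf ∅ = ∞`. -/
noncomputable def exitTime {m : ℕ} (A : Set (EuclideanSpace ℝ (Fin m)))
    (y : ℝ → EuclideanSpace ℝ (Fin m)) : ENNReal :=
  sInf (ENNReal.ofReal '' {t : ℝ | 0 ≤ t ∧ y t ∉ A})

/-- Lower semicontinuity of exit times: if continuous paths `x_n → x` locally
uniformly on `[0,∞)` and `U` is open, then `τ_U(x) ≤ liminf_n τ_U(x_n)`. -/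
theorem stmt15 {m : ℕ} (hm : 1 ≤ m)
    (U : Set (EuclideanSpace ℝ (Fin m))) (hU : IsOpen U)
    (x : ℝ → EuclideanSpace ℝ (Fin m)) (xseq : ℕ → ℝ → EuclideanSpace ℝ (Fin m))
    (hx : ContinuousOn x (Set.Ici 0)) (hxn : ∀ n, ContinuousOn (xseq n) (Set.Ici 0))
    (hconv : ∀ t : ℝ, 0 < t →
      TendstoUniformlyOn (fun n s => xseq n s) x Filter.atTop (Set.Icc 0 t)) :
    exitTime U x ≤ Filter.liminf (fun n => exitTime U (xseq n)) Filter.atTop := by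

  rw [Filter.le_liminf_iff]
  intro b hb
  obtain ⟨b', hbb', hb'⟩ := exists_between hb
  have hb'top : b' ≠ ⊤ := fun h => by
    have := hb'.trans_le (le_top : exitTime U x ≤ ⊤); simp [h] at this
  set T : ℝ := b'.toReal with hT
  have hT0 : 0 ≤ T := ENNReal.toReal_nonneg
  -- On [0,T], x stays in U
  have hxU : ∀ t ∈ Set.Icc (0:ℝ) T, x t ∈ U := by
    intro t ht
    by_contra hnot
    have hmem : ENNReal.ofReal t ∈ ENNReal.ofReal '' {t : ℝ | 0 ≤ t ∧ x t ∉ U} :=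
      ⟨t, ⟨ht.1, hnot⟩, rfl⟩
    have h1 : exitTime U x ≤ ENNReal.ofReal t := sInf_le hmem
    have h2 : ENNReal.ofReal t ≤ b' := by
      rw [← ENNReal.ofReal_toReal hb'top]
      exact ENNReal.ofReal_le_ofReal ht.2
    exact absurd (h1.trans h2) (not_le.mpr hb')
  -- image of [0,T] is compact and contained in U
  have hKc : IsCompact (x '' Set.Icc (0:ℝ) T) :=
    (isCompact_Icc).image_of_continuousOn (hx.mono (fun t ht => ht.1))
  have hKU : x '' Set.Icc (0:ℝ) T ⊆ U := by
    rintro _ ⟨t, ht, rfl⟩; exact hxU t ht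
  obtain ⟨ε, hε, hthick⟩ := hKc.exists_thickening_subset_open hU hKU
  -- uniform convergence on [0, T+1]
  have huc := (Metric.tendstoUniformlyOn_iff.mp (hconv (T+1) (by linarith))) ε hε
  filter_upwards [huc] with n hn
  -- on [0,T], xseq n stays in U
  have hxnU : ∀ t ∈ Set.Icc (0:ℝ) T, xseq n t ∈ U := by
    intro t ht
    have hd : dist (xseq n t) (x t) < ε := by
      have := hn t ⟨ht.1, by linarith [ht.2]⟩
      rwa [dist_comm] at this
    exact hthick (Metric.mem_thickening_iff.mpr ⟨x t, ⟨t, ht, rfl⟩, hd⟩)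
  -- hence exitTime U (xseq n) ≥ b' > b
  have hge : b' ≤ exitTime U (xseq n) := by
    apply le_sInf
    rintro _ ⟨t, ⟨ht0, htU⟩, rfl⟩
    have hTt : T ≤ t := by
      by_contra h
      exact htU (hxnU t ⟨ht0, (not_le.mp h).le⟩)
    calc b' = ENNReal.ofReal T := (ENNReal.ofReal_toReal hb'top).symm
    _ ≤ ENNReal.ofReal t := ENNReal.ofReal_le_ofReal hTt
  exact hbb'.trans_le hge
end
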